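/- arXiv:1001.2121 — 10 statements merged into one kernel-verified Lean document; each statement's English description precedes it below -/
import Mathlib

section
/- Let p and q be real polynomials with no common real zeros such that the real zeros of p are exactly t_1 < ... < t_N (N ≥ 2), each simple (p'(t_j) ≠ 0), and such that q has at most one zero in each interval (t_j, t_{j+1}). Fix j ∈ {1,...,N−1}. Then the following are equivalent: (a) every differentiable function x : (t_j, t_{j+1}) → ℝ satisfying x'(t) = q(t)/p(t) for all t ∈ (t_j, t_{j+1}) either tends to +∞ both as t → t_j⁺ and as t → t_{j+1}⁻, or tends to −∞ both as t → t_j⁺ and as t → t_{j+1}⁻; (b) there exists θ ∈ (t_j, t_{j+1}) such that q(θ) = 0 and q takes opposite (strict) signs on (t_j, θ) and on (θ, t_{j+1}). -/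
open Set Filter Topology


private lemma aux_left_atBot {a b c : ℝ} {f x : ℝ → ℝ} (hab : a < b) (hc : 0 < c)
    (hx : ∀ s ∈ Ioo a b, HasDerivAt x (f s) s)
    (hf : ∀ᶠ s in 𝓝[>] a, c ≤ f s * (s - a)) :
    Tendsto x (𝓝[>] a) atBot := by
  obtain ⟨δ, hδa, hδ⟩ := mem_nhdsGT_iff_exists_Ioo_subset.mp
    (hf.and (Ioo_mem_nhdsGT_of_mem ⟨le_refl a, hab⟩))
  set g : ℝ → ℝ := fun s => x s - c * Real.log (s - a) with hg
  have hder : ∀ s ∈ Ioo a δ, HasDerivAt g (f s - c * (s - a)⁻¹) s := by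
    intro s hs
    have hsa : (0:ℝ) < s - a := sub_pos.mpr hs.1
    have h1 : HasDerivAt (fun u : ℝ => Real.log (u - a)) ((s - a)⁻¹) s := by
      simpa [Function.comp_def] using (Real.hasDerivAt_log hsa.ne').comp s ((hasDerivAt_id s).sub_const a)
    exact (hx s (hδ hs).2).sub (h1.const_mul c)
  have hmono : MonotoneOn g (Ioo a δ) := by
    apply monotoneOn_of_deriv_nonneg (convex_Ioo a δ)
    · intro s hs; exact (hder s hs).continuousAt.continuousWithinAt
    · rw [interior_Ioo]; intro s hs
      exact (hder s hs).differentiableAt.differentiableWithinAt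
    · rw [interior_Ioo]; intro s hs
      rw [(hder s hs).deriv]
      have hsa : (0:ℝ) < s - a := sub_pos.mpr hs.1
      have h2 : c ≤ f s * (s - a) := (hδ hs).1
      rw [sub_nonneg, mul_inv_le_iff₀ hsa] -- c * (s-a)⁻¹ ≤ f s ↔ ?
      linarith
  have haδ : a < δ := hδa
  set s₀ : ℝ := (a + δ) / 2 with hs₀def
  have hs₀ : s₀ ∈ Ioo a δ := ⟨by rw [hs₀def]; linarith, by rw [hs₀def]; linarith⟩
  have hbound : ∀ᶠ s in 𝓝[>] a, x s ≤ g s₀ + c * Real.log (s - a) := by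
    filter_upwards [Ioo_mem_nhdsGT_of_mem ⟨le_refl a, hs₀.1⟩] with s hs
    have hsδ : s ∈ Ioo a δ := ⟨hs.1, hs.2.trans hs₀.2⟩
    have := hmono hsδ hs₀ hs.2.le
    simp only [hg] at this
    show x s ≤ (x s₀ - c * Real.log (s₀ - a)) + c * Real.log (s - a)
    linarith
  have hsub : Tendsto (fun s : ℝ => s - a) (𝓝[>] a) (𝓝[>] (0:ℝ)) := by
    apply tendsto_nhdsWithin_of_tendsto_nhds_of_eventually_within
    · have h0 : Tendsto (fun s : ℝ => s - a) (𝓝 a) (𝓝 (a - a)) :=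
        ((continuous_id.sub continuous_const).tendsto a)
      rw [sub_self] at h0
      exact h0.mono_left nhdsWithin_le_nhds
    · filter_upwards [self_mem_nhdsWithin] with s hs
      exact sub_pos.mpr (mem_Ioi.mp hs)
  have hlog : Tendsto (fun s : ℝ => Real.log (s - a)) (𝓝[>] a) atBot :=
    Real.tendsto_log_nhdsGT_zero.comp hsub
  have hfin : Tendsto (fun s => g s₀ + c * Real.log (s - a)) (𝓝[>] a) atBot :=
    tendsto_atBot_add_const_left _ _ ((tendsto_const_mul_atBot_of_pos hc).mpr hlog)
  exact tendsto_atBot_mono' _ hbound hfin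

private lemma aux_right_atBot {a b c : ℝ} {f x : ℝ → ℝ} (hab : a < b) (hc : 0 < c)
    (hx : ∀ s ∈ Ioo a b, HasDerivAt x (f s) s)
    (hf : ∀ᶠ s in 𝓝[<] b, c ≤ f s * (s - b)) :
    Tendsto x (𝓝[<] b) atBot := by
  obtain ⟨δ, hδb, hδ⟩ := mem_nhdsLT_iff_exists_Ioo_subset.mp
    (hf.and (Ioo_mem_nhdsLT_of_mem ⟨hab, le_refl b⟩))
  set g : ℝ → ℝ := fun s => x s - c * Real.log (b - s) with hg
  have hder : ∀ s ∈ Ioo δ b, HasDerivAt g (f s + c * (b - s)⁻¹) s := by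
    intro s hs
    have hsb : (0:ℝ) < b - s := sub_pos.mpr hs.2
    have h1 : HasDerivAt (fun u : ℝ => Real.log (b - u)) (-(b - s)⁻¹) s := by
      have h := (Real.hasDerivAt_log hsb.ne').comp s ((hasDerivAt_id s).const_sub b)
      simpa [Function.comp_def, mul_neg_one] using h
    have h2 := (hx s (hδ hs).2).sub (h1.const_mul c)
    exact (by simpa [mul_neg, sub_neg_eq_add] using h2 :
      HasDerivAt (x - fun y => c * Real.log (b - y)) (f s + c * (b - s)⁻¹) s)
  have hanti : AntitoneOn g (Ioo δ b) := by
    apply antitoneOn_of_deriv_nonpos (convex_Ioo δ b)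
    · intro s hs; exact (hder s hs).continuousAt.continuousWithinAt
    · rw [interior_Ioo]; intro s hs
      exact (hder s hs).differentiableAt.differentiableWithinAt
    · rw [interior_Ioo]; intro s hs
      rw [(hder s hs).deriv]
      have hsb : (0:ℝ) < b - s := sub_pos.mpr hs.2
      have h2 : c ≤ f s * (s - b) := (hδ hs).1
      have h4 : f s ≤ c / (s - b) := (le_div_iff_of_neg (by linarith : s - b < 0)).mpr h2
      have h5 : c / (s - b) = -(c * (b - s)⁻¹) := by
        rw [div_eq_mul_inv, show s - b = -(b - s) by ring, inv_neg, mul_neg]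
      linarith
  have hδb' : δ < b := hδb
  set s₀ : ℝ := (δ + b) / 2 with hs₀def
  have hs₀ : s₀ ∈ Ioo δ b := ⟨by rw [hs₀def]; linarith, by rw [hs₀def]; linarith⟩
  have hbound : ∀ᶠ s in 𝓝[<] b, x s ≤ g s₀ + c * Real.log (b - s) := by
    filter_upwards [Ioo_mem_nhdsLT_of_mem ⟨hs₀.2, le_refl b⟩] with s hs
    have hsδ : s ∈ Ioo δ b := ⟨hs₀.1.trans hs.1, hs.2⟩
    have := hanti hs₀ hsδ hs.1.le
    simp only [hg] at this
    show x s ≤ (x s₀ - c * Real.log (b - s₀)) + c * Real.log (b - s)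
    linarith
  have hsub : Tendsto (fun s : ℝ => b - s) (𝓝[<] b) (𝓝[>] (0:ℝ)) := by
    apply tendsto_nhdsWithin_of_tendsto_nhds_of_eventually_within
    · have h0 : Tendsto (fun s : ℝ => b - s) (𝓝 b) (𝓝 (b - b)) :=
        ((continuous_const.sub continuous_id).tendsto b)
      rw [sub_self] at h0
      exact h0.mono_left nhdsWithin_le_nhds
    · filter_upwards [self_mem_nhdsWithin] with s hs
      exact sub_pos.mpr (mem_Iio.mp hs)
  have hlog : Tendsto (fun s : ℝ => Real.log (b - s)) (𝓝[<] b) atBot :=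
    Real.tendsto_log_nhdsGT_zero.comp hsub
  have hfin : Tendsto (fun s => g s₀ + c * Real.log (b - s)) (𝓝[<] b) atBot :=
    tendsto_atBot_add_const_left _ _ ((tendsto_const_mul_atBot_of_pos hc).mpr hlog)
  exact tendsto_atBot_mono' _ hbound hfin

private lemma not_both_top_bot {l : Filter ℝ} [l.NeBot] {x : ℝ → ℝ}
    (h1 : Tendsto x l atTop) (h2 : Tendsto x l atBot) : False := by
  obtain ⟨s, hs1, hs2⟩ := ((h1.eventually (eventually_gt_atTop (0:ℝ))).and
    (h2.eventually (eventually_lt_atBot (0:ℝ)))).exists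
  linarith

private lemma endpoint_left {a b L : ℝ} {f x : ℝ → ℝ} (hab : a < b)
    (hx : ∀ s ∈ Ioo a b, HasDerivAt x (f s) s)
    (hlim : Tendsto (fun s => f s * (s - a)) (𝓝[>] a) (𝓝 L)) :
    (0 < L → Tendsto x (𝓝[>] a) atBot) ∧ (L < 0 → Tendsto x (𝓝[>] a) atTop) := by
  constructor
  · intro hL
    exact aux_left_atBot hab (half_pos hL) hx
      (hlim.eventually (eventually_ge_nhds (by linarith)))
  · intro hL
    have hneg : ∀ s ∈ Ioo a b, HasDerivAt (fun u => -x u) (-f s) s := fun s hs => (hx s hs).neg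
    have hlim' : Tendsto (fun s => (-f s) * (s - a)) (𝓝[>] a) (𝓝 (-L)) := by
      simpa [neg_mul] using hlim.neg
    have h := aux_left_atBot hab (by linarith : (0:ℝ) < -L/2) hneg
      (hlim'.eventually (eventually_ge_nhds (by linarith)))
    exact tendsto_neg_atBot_iff.mp h

private lemma endpoint_right {a b L : ℝ} {f x : ℝ → ℝ} (hab : a < b)
    (hx : ∀ s ∈ Ioo a b, HasDerivAt x (f s) s)
    (hlim : Tendsto (fun s => f s * (s - b)) (𝓝[<] b) (𝓝 L)) :
    (0 < L → Tendsto x (𝓝[<] b) atBot) ∧ (L < 0 → Tendsto x (𝓝[<] b) atTop) := by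
  constructor
  · intro hL
    exact aux_right_atBot hab (half_pos hL) hx
      (hlim.eventually (eventually_ge_nhds (by linarith)))
  · intro hL
    have hneg : ∀ s ∈ Ioo a b, HasDerivAt (fun u => -x u) (-f s) s := fun s hs => (hx s hs).neg
    have hlim' : Tendsto (fun s => (-f s) * (s - b)) (𝓝[<] b) (𝓝 (-L)) := by
      simpa [neg_mul] using hlim.neg
    have h := aux_right_atBot hab (by linarith : (0:ℝ) < -L/2) hneg
      (hlim'.eventually (eventually_ge_nhds (by linarith)))
    exact tendsto_neg_atBot_iff.mp h

private lemma pos_on_of_pos_left (q : Polynomial ℝ) {a θ : ℝ}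
    (hA : 0 < q.eval a) (hnz : ∀ s ∈ Ioo a θ, q.eval s ≠ 0) :
    ∀ s ∈ Ioo a θ, 0 < q.eval s := by
  intro s hs
  rcases (hnz s hs).lt_or_gt with h | h
  · exfalso
    obtain ⟨θ', hθ', h0⟩ := intermediate_value_Ioo' hs.1.le
      (Polynomial.continuous q).continuousOn (show (0:ℝ) ∈ Ioo (q.eval s) (q.eval a) from ⟨h, hA⟩)
    exact hnz θ' ⟨hθ'.1, hθ'.2.trans hs.2⟩ h0
  · exact h

private lemma pos_on_of_pos_right (q : Polynomial ℝ) {θ b : ℝ}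
    (hB : 0 < q.eval b) (hnz : ∀ s ∈ Ioo θ b, q.eval s ≠ 0) :
    ∀ s ∈ Ioo θ b, 0 < q.eval s := by
  intro s hs
  rcases (hnz s hs).lt_or_gt with h | h
  · exfalso
    obtain ⟨θ', hθ', h0⟩ := intermediate_value_Ioo hs.2.le
      (Polynomial.continuous q).continuousOn (show (0:ℝ) ∈ Ioo (q.eval s) (q.eval b) from ⟨h, hB⟩)
    exact hnz θ' ⟨hs.1.trans hθ'.1, hθ'.2⟩ h0
  · exact h

private lemma neg_on_of_neg_left (q : Polynomial ℝ) {a θ : ℝ}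
    (hA : q.eval a < 0) (hnz : ∀ s ∈ Ioo a θ, q.eval s ≠ 0) :
    ∀ s ∈ Ioo a θ, q.eval s < 0 := by
  intro s hs
  have h := pos_on_of_pos_left (-q) (by simpa using hA)
    (fun u hu => by simpa using hnz u hu) s hs
  simpa using h

private lemma neg_on_of_neg_right (q : Polynomial ℝ) {θ b : ℝ}
    (hB : q.eval b < 0) (hnz : ∀ s ∈ Ioo θ b, q.eval s ≠ 0) :
    ∀ s ∈ Ioo θ b, q.eval s < 0 := by
  intro s hs
  have h := pos_on_of_pos_right (-q) (by simpa using hB)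
    (fun u hu => by simpa using hnz u hu) s hs
  simpa using h

private lemma slope_tendsto_left (p : Polynomial ℝ) (a : ℝ) (hpa : p.eval a = 0) :
    Tendsto (fun s => p.eval s / (s - a)) (𝓝[>] a) (𝓝 ((Polynomial.derivative p).eval a)) := by
  have h := hasDerivAt_iff_tendsto_slope.mp (p.hasDerivAt a)
  have h2 : Tendsto (slope (fun x => p.eval x) a) (𝓝[>] a)
      (𝓝 ((Polynomial.derivative p).eval a)) :=
    h.mono_left (nhdsWithin_mono _ fun s hs => ne_of_gt hs)
  apply h2.congr
  intro s
  rw [slope_def_field, hpa, sub_zero]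

private lemma slope_tendsto_right (p : Polynomial ℝ) (b : ℝ) (hpb : p.eval b = 0) :
    Tendsto (fun s => p.eval s / (s - b)) (𝓝[<] b) (𝓝 ((Polynomial.derivative p).eval b)) := by
  have h := hasDerivAt_iff_tendsto_slope.mp (p.hasDerivAt b)
  have h2 : Tendsto (slope (fun x => p.eval x) b) (𝓝[<] b)
      (𝓝 ((Polynomial.derivative p).eval b)) :=
    h.mono_left (nhdsWithin_mono _ fun s hs => ne_of_lt hs)
  apply h2.congr
  intro s
  rw [slope_def_field, hpb, sub_zero]

private lemma ratio_tendsto_left (p q : Polynomial ℝ) {a : ℝ} (hpa : p.eval a = 0)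
    (hPa : (Polynomial.derivative p).eval a ≠ 0) :
    Tendsto (fun s => q.eval s / p.eval s * (s - a)) (𝓝[>] a)
      (𝓝 (q.eval a / (Polynomial.derivative p).eval a)) := by
  have hq : Tendsto (fun s => q.eval s) (𝓝[>] a) (𝓝 (q.eval a)) :=
    ((Polynomial.continuous q).tendsto a).mono_left nhdsWithin_le_nhds
  have h := hq.div (slope_tendsto_left p a hpa) hPa
  apply h.congr
  intro s
  simp only [Pi.div_apply]
  rw [div_div_eq_mul_div, div_mul_eq_mul_div]

private lemma ratio_tendsto_right (p q : Polynomial ℝ) {b : ℝ} (hpb : p.eval b = 0)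
    (hPb : (Polynomial.derivative p).eval b ≠ 0) :
    Tendsto (fun s => q.eval s / p.eval s * (s - b)) (𝓝[<] b)
      (𝓝 (q.eval b / (Polynomial.derivative p).eval b)) := by
  have hq : Tendsto (fun s => q.eval s) (𝓝[<] b) (𝓝 (q.eval b)) :=
    ((Polynomial.continuous q).tendsto b).mono_left nhdsWithin_le_nhds
  have h := hq.div (slope_tendsto_right p b hpb) hPb
  apply h.congr
  intro s
  simp only [Pi.div_apply]
  rw [div_div_eq_mul_div, div_mul_eq_mul_div]


/-- For the vector field `L = p(t)∂_t + q(t)∂_x` as above and a fixed `j`, the strip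
`(t j, t (j+1)) × ℝ` is a separatrix (every characteristic `x' = q/p` tends to `+∞` at both
endpoints, or to `-∞` at both endpoints) iff there is `θ ∈ (t j, t (j+1))` with `q θ = 0`
and `q` of opposite strict signs on `(t j, θ)` and `(θ, t (j+1))`. -/
theorem stmt_1 (p q : Polynomial ℝ) (N : ℕ) (hN : 2 ≤ N) (t : ℕ → ℝ)
    (hmono : ∀ i j : ℕ, 1 ≤ i → i < j → j ≤ N → t i < t j)
    (hzeros : ∀ s : ℝ, p.eval s = 0 ↔ ∃ j : ℕ, 1 ≤ j ∧ j ≤ N ∧ s = t j)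
    (hsimple : ∀ j : ℕ, 1 ≤ j → j ≤ N → (Polynomial.derivative p).eval (t j) ≠ 0)
    (hnocommon : ∀ s : ℝ, ¬ (p.eval s = 0 ∧ q.eval s = 0))
    (hatmost : ∀ j : ℕ, 1 ≤ j → j < N → ∀ s₁ ∈ Ioo (t j) (t (j + 1)),
      ∀ s₂ ∈ Ioo (t j) (t (j + 1)), q.eval s₁ = 0 → q.eval s₂ = 0 → s₁ = s₂)
    (j : ℕ) (hj1 : 1 ≤ j) (hjN : j < N) :
    (∀ x : ℝ → ℝ,
      (∀ s ∈ Ioo (t j) (t (j + 1)), HasDerivAt x (q.eval s / p.eval s) s) →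
      ((Tendsto x (nhdsWithin (t j) (Ioi (t j))) atTop ∧
        Tendsto x (nhdsWithin (t (j + 1)) (Iio (t (j + 1)))) atTop) ∨
       (Tendsto x (nhdsWithin (t j) (Ioi (t j))) atBot ∧
        Tendsto x (nhdsWithin (t (j + 1)) (Iio (t (j + 1)))) atBot)))
    ↔ ∃ θ ∈ Ioo (t j) (t (j + 1)), q.eval θ = 0 ∧
        (((∀ s ∈ Ioo (t j) θ, 0 < q.eval s) ∧ (∀ s ∈ Ioo θ (t (j + 1)), q.eval s < 0)) ∨
         ((∀ s ∈ Ioo (t j) θ, q.eval s < 0) ∧ (∀ s ∈ Ioo θ (t (j + 1)), 0 < q.eval s))) := by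
  have hj1N : j ≤ N := hjN.le
  have hjp1 : 1 ≤ j + 1 := by omega
  have hjp1N : j + 1 ≤ N := by omega
  have hab : t j < t (j + 1) := hmono j (j + 1) hj1 (by omega) hjp1N
  have hpa : p.eval (t j) = 0 := (hzeros (t j)).mpr ⟨j, hj1, hj1N, rfl⟩
  have hpb : p.eval (t (j + 1)) = 0 := (hzeros (t (j + 1))).mpr ⟨j + 1, hjp1, hjp1N, rfl⟩
  have hqa : q.eval (t j) ≠ 0 := fun h => hnocommon (t j) ⟨hpa, h⟩
  have hqb : q.eval (t (j + 1)) ≠ 0 := fun h => hnocommon (t (j + 1)) ⟨hpb, h⟩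
  have hPa : (Polynomial.derivative p).eval (t j) ≠ 0 := hsimple j hj1 hj1N
  have hPb : (Polynomial.derivative p).eval (t (j + 1)) ≠ 0 := hsimple (j + 1) hjp1 hjp1N
  have hpne : ∀ s ∈ Ioo (t j) (t (j + 1)), p.eval s ≠ 0 := by
    intro s hs h
    obtain ⟨i, hi1, hiN, rfl⟩ := (hzeros s).mp h
    rcases le_or_gt i j with hij | hij
    · rcases eq_or_lt_of_le hij with h1 | hlt
      · rw [h1] at hs; exact lt_irrefl _ hs.1
      · exact absurd hs.1 (not_lt.mpr (hmono i j hi1 hlt hj1N).le)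
    · rcases eq_or_lt_of_le (show j + 1 ≤ i by omega) with h1 | hlt
      · rw [← h1] at hs; exact lt_irrefl _ hs.2
      · exact absurd hs.2 (not_lt.mpr (hmono (j + 1) i hjp1 hlt hiN).le)
  have hlimA := ratio_tendsto_left p q hpa hPa
  have hlimB := ratio_tendsto_right p q hpb hPb
  set A := q.eval (t j) with hA_def
  set B := q.eval (t (j + 1)) with hB_def
  set Pa := (Polynomial.derivative p).eval (t j) with hPa_def
  set Pb := (Polynomial.derivative p).eval (t (j + 1)) with hPb_def
  have hca : A / Pa ≠ 0 := div_ne_zero hqa hPa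
  have hcb : B / Pb ≠ 0 := div_ne_zero hqb hPb
  have hleft : ∀ x : ℝ → ℝ,
      (∀ s ∈ Ioo (t j) (t (j + 1)), HasDerivAt x (q.eval s / p.eval s) s) →
      (0 < A / Pa → Tendsto x (𝓝[>] (t j)) atBot) ∧
      (A / Pa < 0 → Tendsto x (𝓝[>] (t j)) atTop) :=
    fun x hx => endpoint_left hab hx hlimA
  have hright : ∀ x : ℝ → ℝ,
      (∀ s ∈ Ioo (t j) (t (j + 1)), HasDerivAt x (q.eval s / p.eval s) s) →
      (0 < B / Pb → Tendsto x (𝓝[<] (t (j + 1))) atBot) ∧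
      (B / Pb < 0 → Tendsto x (𝓝[<] (t (j + 1))) atTop) :=
    fun x hx => endpoint_right hab hx hlimB
  -- constant sign of p on the open interval
  have hsign : (∀ s ∈ Ioo (t j) (t (j + 1)), 0 < p.eval s) ∨
      (∀ s ∈ Ioo (t j) (t (j + 1)), p.eval s < 0) := by
    set m := (t j + t (j + 1)) / 2 with hm
    have hmem : m ∈ Ioo (t j) (t (j + 1)) := ⟨by rw [hm]; linarith, by rw [hm]; linarith⟩
    rcases (hpne m hmem).lt_or_gt with hneg | hpos
    · right; intro s hs
      by_contra hcon; push_neg at hcon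
      have hps : 0 < p.eval s := lt_of_le_of_ne hcon (Ne.symm (hpne s hs))
      rcases lt_trichotomy s m with h | h | h
      · obtain ⟨θ', hθ', h0⟩ := intermediate_value_Ioo' h.le
          (Polynomial.continuous p).continuousOn
          (show (0:ℝ) ∈ Ioo (p.eval m) (p.eval s) from ⟨hneg, hps⟩)
        exact hpne θ' ⟨hs.1.trans hθ'.1, hθ'.2.trans hmem.2⟩ h0
      · rw [h] at hps; linarith
      · obtain ⟨θ', hθ', h0⟩ := intermediate_value_Ioo h.le
          (Polynomial.continuous p).continuousOn
          (show (0:ℝ) ∈ Ioo (p.eval m) (p.eval s) from ⟨hneg, hps⟩)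
        exact hpne θ' ⟨hmem.1.trans hθ'.1, hθ'.2.trans hs.2⟩ h0
    · left; intro s hs
      by_contra hcon; push_neg at hcon
      have hps : p.eval s < 0 := lt_of_le_of_ne hcon (hpne s hs)
      rcases lt_trichotomy s m with h | h | h
      · obtain ⟨θ', hθ', h0⟩ := intermediate_value_Ioo h.le
          (Polynomial.continuous p).continuousOn
          (show (0:ℝ) ∈ Ioo (p.eval s) (p.eval m) from ⟨hps, hpos⟩)
        exact hpne θ' ⟨hs.1.trans hθ'.1, hθ'.2.trans hmem.2⟩ h0
      · rw [h] at hps; linarith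
      · obtain ⟨θ', hθ', h0⟩ := intermediate_value_Ioo' h.le
          (Polynomial.continuous p).continuousOn
          (show (0:ℝ) ∈ Ioo (p.eval s) (p.eval m) from ⟨hps, hpos⟩)
        exact hpne θ' ⟨hmem.1.trans hθ'.1, hθ'.2.trans hs.2⟩ h0
  have hPaPb : Pa * Pb < 0 := by
    rcases hsign with hpos | hneg
    · have h1 : 0 < Pa := by
        have hge : 0 ≤ Pa := by
          apply ge_of_tendsto (slope_tendsto_left p (t j) hpa)
          filter_upwards [Ioo_mem_nhdsGT_of_mem ⟨le_refl _, hab⟩] with s hs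
          exact (div_pos (hpos s hs) (sub_pos.mpr hs.1)).le
        exact lt_of_le_of_ne hge (Ne.symm hPa)
      have h2 : Pb < 0 := by
        have hle : Pb ≤ 0 := by
          apply le_of_tendsto (slope_tendsto_right p (t (j + 1)) hpb)
          filter_upwards [Ioo_mem_nhdsLT_of_mem ⟨hab, le_refl _⟩] with s hs
          exact (div_neg_of_pos_of_neg (hpos s hs) (sub_neg.mpr hs.2)).le
        exact lt_of_le_of_ne hle hPb
      exact mul_neg_of_pos_of_neg h1 h2
    · have h1 : Pa < 0 := by
        have hle : Pa ≤ 0 := by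
          apply le_of_tendsto (slope_tendsto_left p (t j) hpa)
          filter_upwards [Ioo_mem_nhdsGT_of_mem ⟨le_refl _, hab⟩] with s hs
          exact (div_neg_of_neg_of_pos (hneg s hs) (sub_pos.mpr hs.1)).le
        exact lt_of_le_of_ne hle hPa
      have h2 : 0 < Pb := by
        have hge : 0 ≤ Pb := by
          apply ge_of_tendsto (slope_tendsto_right p (t (j + 1)) hpb)
          filter_upwards [Ioo_mem_nhdsLT_of_mem ⟨hab, le_refl _⟩] with s hs
          exact (div_pos_of_neg_of_neg (hneg s hs) (sub_neg.mpr hs.2)).le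
        exact lt_of_le_of_ne hge (Ne.symm hPb)
      exact mul_neg_of_neg_of_pos h1 h2
  have key1 : A * B < 0 → 0 < (A / Pa) * (B / Pb) := by
    intro h
    rw [div_mul_div_comm]
    exact div_pos_of_neg_of_neg h hPaPb
  have key2 : 0 < (A / Pa) * (B / Pb) → A * B < 0 := by
    intro h
    rw [div_mul_div_comm] at h
    have h2 : A * B = (A * B) / (Pa * Pb) * (Pa * Pb) :=
      (div_mul_cancel₀ _ hPaPb.ne).symm
    rw [h2]
    exact mul_neg_of_pos_of_neg h hPaPb
  have hAB_to_RHS : A * B < 0 → ∃ θ ∈ Ioo (t j) (t (j + 1)), q.eval θ = 0 ∧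
      (((∀ s ∈ Ioo (t j) θ, 0 < q.eval s) ∧ (∀ s ∈ Ioo θ (t (j + 1)), q.eval s < 0)) ∨
       ((∀ s ∈ Ioo (t j) θ, q.eval s < 0) ∧ (∀ s ∈ Ioo θ (t (j + 1)), 0 < q.eval s))) := by
    intro hAB
    rcases mul_neg_iff.mp hAB with ⟨hA, hB⟩ | ⟨hA, hB⟩
    · obtain ⟨θ, hθ, hθ0⟩ := intermediate_value_Ioo' hab.le
        (Polynomial.continuous q).continuousOn
        (show (0:ℝ) ∈ Ioo B A from ⟨hB, hA⟩)
      have hnzl : ∀ s ∈ Ioo (t j) θ, q.eval s ≠ 0 := by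
        intro s hs hq0
        exact absurd (hatmost j hj1 hjN s ⟨hs.1, hs.2.trans hθ.2⟩ θ hθ hq0 hθ0)
          (ne_of_lt hs.2)
      have hnzr : ∀ s ∈ Ioo θ (t (j + 1)), q.eval s ≠ 0 := by
        intro s hs hq0
        exact absurd (hatmost j hj1 hjN s ⟨hθ.1.trans hs.1, hs.2⟩ θ hθ hq0 hθ0)
          (ne_of_gt hs.1)
      exact ⟨θ, hθ, hθ0, Or.inl ⟨pos_on_of_pos_left q hA hnzl, neg_on_of_neg_right q hB hnzr⟩⟩
    · obtain ⟨θ, hθ, hθ0⟩ := intermediate_value_Ioo hab.le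
        (Polynomial.continuous q).continuousOn
        (show (0:ℝ) ∈ Ioo A B from ⟨hA, hB⟩)
      have hnzl : ∀ s ∈ Ioo (t j) θ, q.eval s ≠ 0 := by
        intro s hs hq0
        exact absurd (hatmost j hj1 hjN s ⟨hs.1, hs.2.trans hθ.2⟩ θ hθ hq0 hθ0)
          (ne_of_lt hs.2)
      have hnzr : ∀ s ∈ Ioo θ (t (j + 1)), q.eval s ≠ 0 := by
        intro s hs hq0
        exact absurd (hatmost j hj1 hjN s ⟨hθ.1.trans hs.1, hs.2⟩ θ hθ hq0 hθ0)
          (ne_of_gt hs.1)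
      exact ⟨θ, hθ, hθ0, Or.inr ⟨neg_on_of_neg_left q hA hnzl, pos_on_of_pos_right q hB hnzr⟩⟩
  have hqtl : Tendsto (fun s => q.eval s) (𝓝[>] (t j)) (𝓝 A) :=
    ((Polynomial.continuous q).tendsto (t j)).mono_left nhdsWithin_le_nhds
  have hqtr : Tendsto (fun s => q.eval s) (𝓝[<] (t (j + 1))) (𝓝 B) :=
    ((Polynomial.continuous q).tendsto (t (j + 1))).mono_left nhdsWithin_le_nhds
  have hRHS_to_AB : (∃ θ ∈ Ioo (t j) (t (j + 1)), q.eval θ = 0 ∧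
      (((∀ s ∈ Ioo (t j) θ, 0 < q.eval s) ∧ (∀ s ∈ Ioo θ (t (j + 1)), q.eval s < 0)) ∨
       ((∀ s ∈ Ioo (t j) θ, q.eval s < 0) ∧ (∀ s ∈ Ioo θ (t (j + 1)), 0 < q.eval s)))) →
      A * B < 0 := by
    rintro ⟨θ, hθ, hθ0, hcase | hcase⟩
    · have hA : 0 < A := by
        have h0 : 0 ≤ A := by
          apply ge_of_tendsto hqtl
          filter_upwards [Ioo_mem_nhdsGT_of_mem ⟨le_refl _, hθ.1⟩] with s hs
          exact (hcase.1 s hs).le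
        exact lt_of_le_of_ne h0 (Ne.symm hqa)
      have hB : B < 0 := by
        have h0 : B ≤ 0 := by
          apply le_of_tendsto hqtr
          filter_upwards [Ioo_mem_nhdsLT_of_mem ⟨hθ.2, le_refl _⟩] with s hs
          exact (hcase.2 s hs).le
        exact lt_of_le_of_ne h0 hqb
      exact mul_neg_of_pos_of_neg hA hB
    · have hA : A < 0 := by
        have h0 : A ≤ 0 := by
          apply le_of_tendsto hqtl
          filter_upwards [Ioo_mem_nhdsGT_of_mem ⟨le_refl _, hθ.1⟩] with s hs
          exact (hcase.1 s hs).le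
        exact lt_of_le_of_ne h0 hqa
      have hB : 0 < B := by
        have h0 : 0 ≤ B := by
          apply ge_of_tendsto hqtr
          filter_upwards [Ioo_mem_nhdsLT_of_mem ⟨hθ.2, le_refl _⟩] with s hs
          exact (hcase.2 s hs).le
        exact lt_of_le_of_ne h0 (Ne.symm hqb)
      exact mul_neg_of_neg_of_pos hA hB
  constructor
  · intro hLHS
    apply hAB_to_RHS
    apply key2
    -- construct a solution via FTC
    have hcont : ∀ s ∈ Ioo (t j) (t (j + 1)),
        ContinuousAt (fun u => q.eval u / p.eval u) s := by
      intro s hs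
      exact (q.continuousAt).div (p.continuousAt) (hpne s hs)
    set m := (t j + t (j + 1)) / 2 with hm
    have hmem : m ∈ Ioo (t j) (t (j + 1)) := ⟨by rw [hm]; linarith, by rw [hm]; linarith⟩
    have hx₀ : ∀ s ∈ Ioo (t j) (t (j + 1)),
        HasDerivAt (fun u => ∫ v in m..u, q.eval v / p.eval v) (q.eval s / p.eval s) s := by
      intro s hs
      apply intervalIntegral.integral_hasDerivAt_right
      · apply ContinuousOn.intervalIntegrable
        intro u hu
        exact (hcont u (Set.ordConnected_Ioo.uIcc_subset hmem hs hu)).continuousWithinAt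
      · exact ContinuousAt.stronglyMeasurableAtFilter isOpen_Ioo hcont s hs
      · exact hcont s hs
    rcases hLHS _ hx₀ with ⟨h1, h2⟩ | ⟨h1, h2⟩
    · have hca_neg : A / Pa < 0 :=
        hca.lt_or_gt.resolve_right (fun h => absurd ((hleft _ hx₀).1 h)
          (fun hb => not_both_top_bot h1 hb))
      have hcb_neg : B / Pb < 0 :=
        hcb.lt_or_gt.resolve_right (fun h => absurd ((hright _ hx₀).1 h)
          (fun hb => not_both_top_bot h2 hb))
      exact mul_pos_of_neg_of_neg hca_neg hcb_neg
    · have hca_pos : 0 < A / Pa :=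
        hca.lt_or_gt.resolve_left (fun h => absurd ((hleft _ hx₀).2 h)
          (fun ht => not_both_top_bot ht h1))
      have hcb_pos : 0 < B / Pb :=
        hcb.lt_or_gt.resolve_left (fun h => absurd ((hright _ hx₀).2 h)
          (fun ht => not_both_top_bot ht h2))
      exact mul_pos hca_pos hcb_pos
  · intro hRHS x hx
    have hAB := hRHS_to_AB hRHS
    have hpos := key1 hAB
    rcases hca.lt_or_gt with h | h
    · have hcbneg : B / Pb < 0 := by
        by_contra hc; push_neg at hc
        nlinarith
      exact Or.inl ⟨(hleft x hx).2 h, (hright x hx).2 hcbneg⟩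
    · have hcbpos : 0 < B / Pb := by
        by_contra hc; push_neg at hc
        nlinarith
      exact Or.inr ⟨(hleft x hx).1 h, (hright x hx).1 hcbpos⟩
end

section
/- Let c be a nonzero real number. Then there is no infinitely differentiable function u : ℝ² → ℝ satisfying (1−t²)·∂_t u(t,x) − 2t·∂_x u(t,x) = c for all (t,x) ∈ ℝ². In other words, nonzero constant functions do not belong to the image of C^∞(ℝ²) under the operator L_0 = (1−t²)∂_t − 2t∂_x. -/
/-- No smooth function `u : ℝ² → ℝ` solves `(1 - t²) ∂_t u - 2t ∂_x u = c` for a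
nonzero constant `c`: nonzero constants are not in the range of `L₀ = (1-t²)∂_t - 2t∂_x`
acting on `C^∞(ℝ²)`. -/
theorem stmt_3 (c : ℝ) (hc : c ≠ 0) :
    ¬ ∃ u : ℝ × ℝ → ℝ, ContDiff ℝ (⊤ : ℕ∞) u ∧
      ∀ z : ℝ × ℝ,
        (1 - z.1 ^ 2) * fderiv ℝ u z (1, 0) - 2 * z.1 * fderiv ℝ u z (0, 1) = c := by
  rintro ⟨u, hu, heq⟩
  have hdiff : Differentiable ℝ u := hu.differentiable (by simp)
  -- Key identity along characteristics through (±t, 0)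
  have key : ∀ t : ℝ, t ∈ Set.Ioo (0:ℝ) 1 →
      u (t, 0) - u (-t, 0) = c * (Real.log (1+t) - Real.log (1-t)) := by
    intro t ht
    set f : ℝ → ℝ := fun s =>
      u (s, Real.log (1 - s^2) - Real.log (1 - t^2))
        - c/2 * (Real.log (1+s) - Real.log (1-s)) with hf
    have hder : ∀ s ∈ Set.Ioo (-1:ℝ) 1, HasDerivAt f 0 s := by
      intro s hs
      have h1 : (0:ℝ) < 1 + s := by linarith [hs.1]
      have h2 : (0:ℝ) < 1 - s := by linarith [hs.2]
      have h3 : (0:ℝ) < 1 - s^2 := by nlinarith [hs.1, hs.2]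
      have hsq : HasDerivAt (fun x : ℝ => 1 - x^2) (-(2*s)) s := by
        simpa using (hasDerivAt_pow 2 s).const_sub 1
      have hlog1 : HasDerivAt (fun x : ℝ => Real.log (1 - x^2) - Real.log (1 - t^2))
          (-(2*s)/(1-s^2)) s := (hsq.log h3.ne').sub_const _
      have hγ : HasDerivAt
          (fun x : ℝ => ((x, Real.log (1 - x^2) - Real.log (1 - t^2)) : ℝ × ℝ))
          ((1 : ℝ), -(2*s)/(1-s^2)) s := (hasDerivAt_id s).prodMk hlog1
      have hcomp := ((hdiff _).hasFDerivAt).comp_hasDerivAt s hγ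
      set D := fderiv ℝ u ((s, Real.log (1 - s^2) - Real.log (1 - t^2)) : ℝ × ℝ) with hD
      have hlin : D ((1:ℝ), -(2*s)/(1-s^2))
          = D (1, 0) + (-(2*s)/(1-s^2)) * D (0, 1) := by
        have : ((1:ℝ), -(2*s)/(1-s^2)) = ((1:ℝ),(0:ℝ)) + (-(2*s)/(1-s^2)) • ((0:ℝ),(1:ℝ)) := by
          simp [Prod.ext_iff]
        rw [this, map_add, map_smul]
        simp
      have hart : HasDerivAt (fun x : ℝ => c/2 * (Real.log (1+x) - Real.log (1-x)))
          (c/(1-s^2)) s := by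
        have h4 : HasDerivAt (fun x : ℝ => Real.log (1+x)) (1/(1+s)) s := by
          simpa using (((hasDerivAt_id s).const_add 1).log h1.ne')
        have h5 : HasDerivAt (fun x : ℝ => Real.log (1-x)) (-1/(1-s)) s := by
          simpa using (((hasDerivAt_id s).const_sub 1).log h2.ne')
        have := (h4.sub h5).const_mul (c/2)
        convert this using 1
        · rfl
        · rfl
        · rfl
        field_simp [h1.ne', h2.ne', h3.ne']
        ring
      have heqs := heq ((s, Real.log (1 - s^2) - Real.log (1 - t^2)) : ℝ × ℝ)
      simp only at heqs
      have hval : D ((1:ℝ), -(2*s)/(1-s^2)) - c/(1-s^2) = 0 := by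
        rw [hlin]
        have hA : (1 - s^2) * D (1, 0) - 2 * s * D (0, 1) = c := heqs
        field_simp
        linarith [hA]
      have := hcomp.sub hart
      rw [hval] at this
      exact this
    have hsub : Set.Icc (-t) t ⊆ Set.Ioo (-1:ℝ) 1 := by
      intro x hx
      constructor
      · linarith [hx.1, ht.2]
      · linarith [hx.2, ht.2]
    have hconst := constant_of_has_deriv_right_zero (f := f) (a := -t) (b := t)
      (fun x hx => (hder x (hsub hx)).continuousAt.continuousWithinAt)
      (fun x hx => (hder x (hsub ⟨hx.1, le_of_lt hx.2⟩)).hasDerivWithinAt)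
    have hft : f t = f (-t) := hconst t ⟨by linarith [ht.1], le_refl t⟩
    have e1 : f t = u (t, 0) - c/2 * (Real.log (1+t) - Real.log (1-t)) := by
      simp [hf]
    have e2 : f (-t) = u (-t, 0) + c/2 * (Real.log (1+t) - Real.log (1-t)) := by
      simp only [hf, neg_sq, sub_self, sub_neg_eq_add]
      have : (1:ℝ) + -t = 1 - t := by ring
      rw [this]
      ring_nf
    rw [e1, e2] at hft
    linarith
  -- Boundedness of u on the segment [-1,1] × {0}
  have hcont2 : ContinuousOn (fun s : ℝ => u (s, 0)) (Set.Icc (-1:ℝ) 1) :=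
    (hu.continuous.comp (continuous_id.prodMk continuous_const)).continuousOn
  obtain ⟨M, hM⟩ := isCompact_Icc.exists_bound_of_continuousOn hcont2
  have hM0 : 0 ≤ M := le_trans (norm_nonneg _) (hM 0 ⟨by norm_num, by norm_num⟩)
  have hc' : 0 < |c| := abs_pos.mpr hc
  set t0 : ℝ := 1 - Real.exp (-(2*M/|c| + 1)) with ht0def
  have hEpos : 0 < Real.exp (-(2*M/|c| + 1)) := Real.exp_pos _
  have hElt : Real.exp (-(2*M/|c| + 1)) < 1 := by
    rw [Real.exp_lt_one_iff]
    have : 0 ≤ 2*M/|c| := by positivity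
    linarith
  have ht0 : t0 ∈ Set.Ioo (0:ℝ) 1 := ⟨by rw [ht0def]; linarith, by rw [ht0def]; linarith⟩
  have hkey := key t0 ht0
  have hlog1 : Real.log (1 - t0) = -(2*M/|c| + 1) := by
    rw [ht0def]
    simp [Real.log_exp]
  have hlog2 : 0 ≤ Real.log (1 + t0) := Real.log_nonneg (by linarith [ht0.1])
  have hL : 2*M/|c| + 1 ≤ Real.log (1+t0) - Real.log (1-t0) := by
    rw [hlog1]; linarith
  set L := Real.log (1+t0) - Real.log (1-t0) with hLdef
  have hLpos : 0 < L := by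
    have : 0 < 2*M/|c| + 1 := by positivity
    linarith
  have hb1 : ‖u (t0, 0)‖ ≤ M := hM t0 ⟨by linarith [ht0.1], le_of_lt ht0.2⟩
  have hb2 : ‖u (-t0, 0)‖ ≤ M := hM (-t0) ⟨by linarith [ht0.2], by linarith [ht0.1]⟩
  have habs : |c| * L ≤ 2 * M := by
    calc |c| * L = |c * L| := by
          rw [abs_mul, abs_of_pos hLpos]
      _ = |u (t0, 0) - u (-t0, 0)| := by rw [hkey]
      _ ≤ ‖u (t0, 0)‖ + ‖u (-t0, 0)‖ := abs_sub _ _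
      _ ≤ 2 * M := by linarith
  have : |c| * (2*M/|c| + 1) ≤ |c| * L :=
    mul_le_mul_of_nonneg_left hL (le_of_lt hc')
  rw [mul_add, mul_one, mul_div_cancel₀] at this
  · linarith
  · exact hc'.ne'
end

section
/- Let c be a real number and define u : ℝ² → ℝ (defined for t ≠ ±1, arbitrary on the null set t = ±1) by u(t,x) = (c/2)·ln(|1+t|/|1−t|). Then u is locally integrable on ℝ² and is a weak (distributional) solution of L_0 u = c: for every infinitely differentiable compactly supported function φ : ℝ² → ℝ, the identity ∫∫_{ℝ²} u(t,x)·( −∂_t((1−t²)φ(t,x)) + 2t·∂_x φ(t,x) ) dt dx = c·∫∫_{ℝ²} φ(t,x) dt dx holds. -/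
open MeasureTheory Set intervalIntegral

lemma abs_log_le' (x : ℝ) (hx : 0 < x) :
    |Real.log x| ≤ 2 * x ^ (-(1/2) : ℝ) + 2 * x ^ ((1/2) : ℝ) := by
  have hr1 : (0:ℝ) < x ^ (-(1/2) : ℝ) := Real.rpow_pos_of_pos hx _
  have hr2 : (0:ℝ) < x ^ ((1/2) : ℝ) := Real.rpow_pos_of_pos hx _
  rcases le_total x 1 with h | h
  · have hl : Real.log x ≤ 0 := Real.log_nonpos hx.le h
    have h1 : Real.log (x ^ (-(1/2) : ℝ)) = -(1/2) * Real.log x := Real.log_rpow hx _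
    have h2 : Real.log (x ^ (-(1/2) : ℝ)) ≤ x ^ (-(1/2) : ℝ) - 1 :=
      Real.log_le_sub_one_of_pos hr1
    rw [abs_of_nonpos hl]
    nlinarith
  · have hl : 0 ≤ Real.log x := Real.log_nonneg h
    have h1 : Real.log (x ^ ((1/2) : ℝ)) = (1/2) * Real.log x := Real.log_rpow hx _
    have h2 : Real.log (x ^ ((1/2) : ℝ)) ≤ x ^ ((1/2) : ℝ) - 1 :=
      Real.log_le_sub_one_of_pos hr2
    rw [abs_of_nonneg hl]
    nlinarith

lemma intInt_log (a b : ℝ) : IntervalIntegrable Real.log volume a b := by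
  suffices h : ∀ d : ℝ, IntervalIntegrable Real.log volume 0 d by
    exact (h a).symm.trans (h b)
  have hpos : ∀ d : ℝ, 0 ≤ d → IntervalIntegrable Real.log volume 0 d := by
    intro d hd
    rw [intervalIntegrable_iff, uIoc_of_le hd]
    have hg : IntegrableOn (fun x : ℝ => 2 * x ^ (-(1/2) : ℝ) + 2 * x ^ ((1/2) : ℝ))
        (Ioc 0 d) volume := by
      have h1 : IntervalIntegrable (fun x : ℝ => x ^ (-(1/2) : ℝ)) volume 0 d :=
        intervalIntegral.intervalIntegrable_rpow' (by norm_num)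
      have h2 : IntervalIntegrable (fun x : ℝ => x ^ ((1/2) : ℝ)) volume 0 d :=
        intervalIntegral.intervalIntegrable_rpow' (by norm_num)
      have := (h1.const_mul 2).add (h2.const_mul 2)
      rw [intervalIntegrable_iff, uIoc_of_le hd] at this
      exact this
    apply Integrable.mono hg (Real.measurable_log.aestronglyMeasurable)
    filter_upwards [ae_restrict_mem measurableSet_Ioc] with x hx
    have hx0 : 0 < x := hx.1
    rw [Real.norm_eq_abs, Real.norm_eq_abs]
    refine (abs_log_le' x hx0).trans (le_abs_self _)
  intro d
  rcases le_total 0 d with h | h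
  · exact hpos d h
  · have := hpos (-d) (by linarith)
    rw [IntervalIntegrable.iff_comp_neg] at this
    simpa [Real.log_neg_eq_log] using this

lemma locInt_of_intInt {f : ℝ → ℝ} (h : ∀ a b : ℝ, IntervalIntegrable f volume a b) :
    LocallyIntegrable f volume := by
  rw [locallyIntegrable_iff]
  intro k hk
  obtain ⟨r, hr0, hr⟩ := hk.isBounded.subset_closedBall_lt 0 0
  have hsub : k ⊆ Icc (-r) r := by
    intro x hx
    have := hr hx
    simp only [Metric.mem_closedBall, Real.dist_eq, sub_zero] at this
    exact abs_le.mp this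
  refine IntegrableOn.mono_set ?_ hsub
  exact (intervalIntegrable_iff_integrableOn_Icc_of_le (by linarith)).mp (h (-r) r)

lemma lift_locInt {f : ℝ → ℝ} (h : LocallyIntegrable f volume) :
    LocallyIntegrable (fun z : ℝ × ℝ => f z.1) volume := by
  rw [locallyIntegrable_iff]
  intro k hk
  obtain ⟨r, hr0, hr⟩ := hk.isBounded.subset_closedBall_lt 0 0
  have hsub : k ⊆ Icc (-r) r ×ˢ Icc (-r) r := by
    intro z hz
    have := hr hz
    simp only [Metric.mem_closedBall, dist_zero_right] at this
    constructor
    · have h1 : ‖z.1‖ ≤ ‖z‖ := norm_fst_le z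
      rw [Real.norm_eq_abs] at h1
      exact abs_le.mp (h1.trans this)
    · have h2 : ‖z.2‖ ≤ ‖z‖ := norm_snd_le z
      rw [Real.norm_eq_abs] at h2
      exact abs_le.mp (h2.trans this)
  refine IntegrableOn.mono_set ?_ hsub
  rw [IntegrableOn, Measure.volume_eq_prod, ← Measure.prod_restrict]
  have h1 : Integrable f (volume.restrict (Icc (-r) r)) :=
    h.integrableOn_isCompact isCompact_Icc
  have h2 : Integrable (fun _ : ℝ => (1:ℝ)) (volume.restrict (Icc (-r) r)) := by
    rw [integrable_const_iff]
    right
    infer_instance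
  simpa using h1.mul_prod h2

lemma locInt_congr {f g : ℝ × ℝ → ℝ} (hf : LocallyIntegrable f volume)
    (h : f =ᵐ[volume] g) : LocallyIntegrable g volume := by
  intro x
  obtain ⟨s, hs, hint⟩ := hf x
  exact ⟨s, hs, hint.congr (ae_restrict_of_ae h)⟩

noncomputable def gt0 (c : ℝ) : ℝ → ℝ := fun t => c / 2 * (Real.log (1 + t) - Real.log (1 - t))
noncomputable def vt0 (c : ℝ) : ℝ → ℝ := fun t =>
  c / 2 * ((1 - t) * ((1 + t) * Real.log (1 + t)) - (1 + t) * ((1 - t) * Real.log (1 - t)))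

lemma gt0_eq {c t : ℝ} (h1 : t ≠ -1) (h2 : t ≠ 1) :
    c / 2 * Real.log (|1 + t| / |1 - t|) = gt0 c t := by
  have ha : (1 + t) ≠ 0 := fun h => h1 (by linarith)
  have hb : (1 - t) ≠ 0 := fun h => h2 (by linarith)
  rw [gt0, Real.log_div (abs_ne_zero.mpr ha) (abs_ne_zero.mpr hb), Real.log_abs, Real.log_abs]

lemma vt0_eq (c t : ℝ) :
    vt0 c t = (c / 2 * Real.log (|1 + t| / |1 - t|)) * (1 - t ^ 2) := by
  by_cases h2 : t = 1
  · simp [vt0, h2]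
  by_cases h1 : t = -1
  · simp [vt0, h1]
  rw [gt0_eq h1 h2, vt0, gt0]; ring

lemma vt0_cont (c : ℝ) : Continuous (vt0 c) := by
  have h : Continuous fun s : ℝ => s * Real.log s := Real.continuous_mul_log
  have h1 : Continuous fun t : ℝ => (1 + t) * Real.log (1 + t) :=
    h.comp (continuous_const.add continuous_id)
  have h2 : Continuous fun t : ℝ => (1 - t) * Real.log (1 - t) :=
    h.comp (continuous_const.sub continuous_id)
  exact continuous_const.mul
    (((continuous_const.sub continuous_id).mul h1).sub
      ((continuous_const.add continuous_id).mul h2))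

lemma vt0_deriv {c t : ℝ} (h1 : t ≠ -1) (h2 : t ≠ 1) :
    HasDerivAt (vt0 c) (c - 2 * t * gt0 c t) t := by
  have ha : (1 + t) ≠ 0 := fun h => h1 (by linarith)
  have hb : (1 - t) ≠ 0 := fun h => h2 (by linarith)
  have hA : HasDerivAt (fun t : ℝ => (1 + t) * Real.log (1 + t)) (Real.log (1 + t) + 1) t := by
    have := (Real.hasDerivAt_mul_log ha).comp t
      ((hasDerivAt_const t (1:ℝ)).add (hasDerivAt_id t))
    simpa [Function.comp_def] using this
  have hB : HasDerivAt (fun t : ℝ => (1 - t) * Real.log (1 - t)) (-(Real.log (1 - t) + 1)) t := by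
    have := (Real.hasDerivAt_mul_log hb).comp t
      ((hasDerivAt_const t (1:ℝ)).sub (hasDerivAt_id t))
    simpa [Function.comp_def] using this
  have hC : HasDerivAt (fun t : ℝ => (1 - t)) (-1) t := by
    simpa [Pi.sub_def] using (hasDerivAt_const t (1:ℝ)).sub (hasDerivAt_id t)
  have hD : HasDerivAt (fun t : ℝ => (1 + t)) 1 t := by
    simpa [Pi.add_def] using (hasDerivAt_const t (1:ℝ)).add (hasDerivAt_id t)
  have := ((hC.mul hA).sub (hD.mul hB)).const_mul (c / 2)
  refine this.congr_deriv ?_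
  rw [gt0]; ring

lemma gt0_intInt (c a b : ℝ) : IntervalIntegrable (gt0 c) volume a b := by
  have h1 : IntervalIntegrable (fun t : ℝ => Real.log (1 + t)) volume a b := by
    have := (intInt_log (1 + a) (1 + b)).comp_add_left 1
    simpa using this
  have h2 : IntervalIntegrable (fun t : ℝ => Real.log (1 - t)) volume a b := by
    have := (intInt_log (1 - a) (1 - b)).comp_sub_left 1
    simpa using this
  exact (h1.sub h2).const_mul (c / 2)

lemma twog_locInt (c : ℝ) : LocallyIntegrable (fun t : ℝ => 2 * t * gt0 c t) volume := by
  apply locInt_of_intInt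
  intro a b
  exact (gt0_intInt c a b).continuousOn_mul (by fun_prop)

lemma integral_deriv_zero (ψ ψ' : ℝ → ℝ) (hd : ∀ t, HasDerivAt ψ (ψ' t) t)
    (hc' : Continuous ψ') (b : ℝ) (hb : 0 < b)
    (h0 : ∀ t, t ∉ Ioo (-b) b → ψ t = 0 ∧ ψ' t = 0) :
    ∫ t, ψ' t = 0 := by
  have hψc : Continuous ψ := by
    rw [continuous_iff_continuousAt]; exact fun t => (hd t).continuousAt
  have hle : -b ≤ b := by linarith
  have hftc : ∫ t in (-b)..b, ψ' t = ψ b - ψ (-b) :=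
    intervalIntegral.integral_eq_sub_of_hasDerivAt_of_le hle hψc.continuousOn
      (fun t _ => hd t) (hc'.intervalIntegrable _ _)
  have hb0 : ψ b = 0 := (h0 b (by simp)).1
  have hbm : ψ (-b) = 0 := (h0 (-b) (by simp)).1
  have h1 : ∫ t, ψ' t = ∫ t in Ioo (-b) b, ψ' t :=
    (setIntegral_eq_integral_of_forall_compl_eq_zero fun t ht => (h0 t ht).2).symm
  rw [h1, ← MeasureTheory.integral_Ioc_eq_integral_Ioo,
    ← intervalIntegral.integral_of_le hle, hftc, hb0, hbm, sub_zero]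

lemma key1d (c : ℝ) (ψ ψ' : ℝ → ℝ) (hd : ∀ t, HasDerivAt ψ (ψ' t) t)
    (hc' : Continuous ψ') (b : ℝ) (hb : 0 < b)
    (h0 : ∀ t, t ∉ Ioo (-b) b → ψ t = 0 ∧ ψ' t = 0) :
    ∫ t, ((c - 2 * t * gt0 c t) * ψ t + vt0 c t * ψ' t) = 0 := by
  have hψc : Continuous ψ := by
    rw [continuous_iff_continuousAt]; exact fun t => (hd t).continuousAt
  have hle : -b ≤ b := by linarith
  set w' : ℝ → ℝ := fun t => (c - 2 * t * gt0 c t) * ψ t + vt0 c t * ψ' t with hw'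
  have hint : IntervalIntegrable w' volume (-b) b := by
    apply IntervalIntegrable.add
    · apply IntervalIntegrable.mul_continuousOn
      · exact (_root_.intervalIntegrable_const).sub
          ((gt0_intInt c (-b) b).continuousOn_mul (by fun_prop))
      · exact hψc.continuousOn
    · exact ((vt0_cont c).mul hc').intervalIntegrable _ _
  have hftc : ∫ t in (-b)..b, w' t = vt0 c b * ψ b - vt0 c (-b) * ψ (-b) := by
    have := MeasureTheory.integral_eq_of_hasDerivAt_off_countable_of_le
      (fun t => vt0 c t * ψ t) w' hle
      (s := {-1, 1}) (by simp [Set.countable_insert, Set.countable_singleton])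
      (((vt0_cont c).mul hψc).continuousOn)
      (fun t ht => by
        have h1 : t ≠ -1 := fun h => ht.2 (by simp [h])
        have h2 : t ≠ 1 := fun h => ht.2 (by simp [h])
        exact (vt0_deriv h1 h2).mul (hd t))
      hint
    simpa using this
  have hb0 : ψ b = 0 := (h0 b (by simp)).1
  have hbm : ψ (-b) = 0 := (h0 (-b) (by simp)).1
  have h1 : ∫ t, w' t = ∫ t in Ioo (-b) b, w' t := by
    refine (setIntegral_eq_integral_of_forall_compl_eq_zero fun t ht => ?_).symm
    simp [hw', (h0 t ht).1, (h0 t ht).2]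
  rw [h1, ← MeasureTheory.integral_Ioc_eq_integral_Ioo,
    ← intervalIntegral.integral_of_le hle, hftc, hb0, hbm]
  ring

lemma key1d' (c : ℝ) (ψ ψ' : ℝ → ℝ) (hd : ∀ t, HasDerivAt ψ (ψ' t) t)
    (hc' : Continuous ψ') (b : ℝ) (hb : 0 < b)
    (h0 : ∀ t, t ∉ Ioo (-b) b → ψ t = 0 ∧ ψ' t = 0) :
    ∫ t, (2 * t * gt0 c t * ψ t - vt0 c t * ψ' t) = c * ∫ t, ψ t := by
  have hψc : Continuous ψ := by
    rw [continuous_iff_continuousAt]; exact fun t => (hd t).continuousAt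
  have hψs : HasCompactSupport ψ :=
    HasCompactSupport.intro isCompact_Icc
      (fun t ht => (h0 t (fun h' => ht (Ioo_subset_Icc_self h'))).1)
  have hψ's : HasCompactSupport ψ' :=
    HasCompactSupport.intro isCompact_Icc
      (fun t ht => (h0 t (fun h' => ht (Ioo_subset_Icc_self h'))).2)
  have iψ : Integrable ψ volume := hψc.integrable_of_hasCompactSupport hψs
  have i1 : Integrable (fun t => 2 * t * gt0 c t * ψ t) volume := by
    simpa [smul_eq_mul] using
      (twog_locInt c).integrable_smul_right_of_hasCompactSupport hψc hψs
  have i2 : Integrable (fun t => vt0 c t * ψ' t) volume :=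
    ((vt0_cont c).mul hc').integrable_of_hasCompactSupport (hψ's.mul_left)
  have i3 : Integrable (fun t => (c - 2 * t * gt0 c t) * ψ t) volume := by
    have heq : (fun t => (c - 2 * t * gt0 c t) * ψ t)
        = fun t => c * ψ t - 2 * t * gt0 c t * ψ t := by funext t; ring
    rw [heq]
    exact (iψ.const_mul c).sub i1
  have hkey := key1d c ψ ψ' hd hc' b hb h0
  rw [MeasureTheory.integral_add i3 i2] at hkey
  rw [MeasureTheory.integral_sub i1 i2]
  have h3 : ∫ t, (c - 2 * t * gt0 c t) * ψ t
      = (c * ∫ t, ψ t) - ∫ t, 2 * t * gt0 c t * ψ t := by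
    have heq : (fun t => (c - 2 * t * gt0 c t) * ψ t)
        = fun t => c * ψ t - 2 * t * gt0 c t * ψ t := by funext t; ring
    rw [heq, MeasureTheory.integral_sub (iψ.const_mul c) i1, MeasureTheory.integral_const_mul c ψ]
  rw [h3] at hkey
  linarith

set_option maxHeartbeats 1000000 in
/-- The function `u(t,x) = (c/2)·ln(|1+t|/|1-t|)` is locally integrable on `ℝ²` and is a
weak (distributional) solution of `L₀ u = c`, where `L₀ = (1-t²)∂_t - 2t∂_x`: for every
test function `φ ∈ C_c^∞(ℝ²)`,
`∫∫ u · (-∂_t((1-t²)φ) + 2t ∂_x φ) = c ∫∫ φ`. -/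
theorem stmt_4 (c : ℝ) (u : ℝ × ℝ → ℝ)
    (hu : u = fun z : ℝ × ℝ => c / 2 * Real.log (|1 + z.1| / |1 - z.1|)) :
    MeasureTheory.LocallyIntegrable u volume ∧
    ∀ φ : ℝ × ℝ → ℝ, ContDiff ℝ (⊤ : ℕ∞) φ → HasCompactSupport φ →
      (∫ z : ℝ × ℝ, u z *
        (-(fderiv ℝ (fun w : ℝ × ℝ => (1 - w.1 ^ 2) * φ w) z (1, 0))
          + 2 * z.1 * fderiv ℝ φ z (0, 1)))
      = c * ∫ z : ℝ × ℝ, φ z := by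
  -- null set where `t = ±1`
  have hN : (volume : Measure (ℝ × ℝ)) {z : ℝ × ℝ | z.1 = -1 ∨ z.1 = 1} = 0 := by
    have hset : {z : ℝ × ℝ | z.1 = -1 ∨ z.1 = 1}
        = ({-1, 1} : Set ℝ) ×ˢ (univ : Set ℝ) := by
      ext z; simp [Set.mem_prod]
    rw [hset, Measure.volume_eq_prod, Measure.prod_prod]
    have : (volume : Measure ℝ) ({-1, 1} : Set ℝ) = 0 :=
      Set.Countable.measure_zero (by simp) _
    rw [this, zero_mul]
  have hae0 : ∀ᵐ z : ℝ × ℝ ∂volume, z.1 ≠ -1 ∧ z.1 ≠ 1 := by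
    rw [ae_iff]
    refine measure_mono_null (fun z hz => ?_) hN
    simp only [mem_setOf_eq] at hz ⊢
    tauto
  have hae : (fun z : ℝ × ℝ => gt0 c z.1) =ᵐ[volume] u := by
    filter_upwards [hae0] with z hz
    rw [hu]
    exact (gt0_eq hz.1 hz.2).symm
  constructor
  · exact locInt_congr (lift_locInt (locInt_of_intInt (gt0_intInt c))) hae
  intro φ hφ hφs
  have hφc : Continuous φ := hφ.continuous
  have hφd : Differentiable ℝ φ := hφ.differentiable (by simp)
  set Dt : ℝ × ℝ → ℝ := fun z => fderiv ℝ φ z (1, 0) with hDt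
  set Dx : ℝ × ℝ → ℝ := fun z => fderiv ℝ φ z (0, 1) with hDx
  have hfcont : Continuous (fderiv ℝ φ) := hφ.continuous_fderiv (by simp)
  have hDtc : Continuous Dt := by rw [hDt]; exact hfcont.clm_apply continuous_const
  have hDxc : Continuous Dx := by rw [hDx]; exact hfcont.clm_apply continuous_const
  obtain ⟨r, hr0, hr⟩ := hφs.isBounded.subset_closedBall_lt 0 0
  set b : ℝ := r + 1 with hbdef
  have hb : 0 < b := by linarith
  have hout : ∀ z : ℝ × ℝ, (|z.1| > r ∨ |z.2| > r) → φ z = 0 ∧ fderiv ℝ φ z = 0 := by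
    intro z hz
    have hzn : z ∉ tsupport φ := by
      intro hmem
      have hnorm := hr hmem
      simp only [Metric.mem_closedBall, dist_zero_right] at hnorm
      have h1 : |z.1| ≤ ‖z‖ := by simpa [Real.norm_eq_abs] using norm_fst_le z
      have h2 : |z.2| ≤ ‖z‖ := by simpa [Real.norm_eq_abs] using norm_snd_le z
      rcases hz with h | h
      · exact absurd (h1.trans hnorm) (not_le.mpr h)
      · exact absurd (h2.trans hnorm) (not_le.mpr h)
    refine ⟨image_eq_zero_of_notMem_tsupport hzn, ?_⟩
    have hsup : z ∉ Function.support (fderiv ℝ φ) :=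
      fun hmem => hzn (support_fderiv_subset ℝ hmem)
    simpa [Function.mem_support, not_not] using hsup
  have hout1 : ∀ x : ℝ, ∀ t : ℝ, t ∉ Ioo (-b) b →
      φ (t, x) = 0 ∧ Dt (t, x) = 0 := by
    intro x t ht
    have habs : |t| > r := by
      simp only [mem_Ioo, not_and_or, not_lt] at ht
      rcases ht with h | h
      · rw [abs_of_nonpos (by linarith)]; linarith
      · rw [abs_of_nonneg (by linarith)]; linarith
    obtain ⟨h1, h2⟩ := hout (t, x) (Or.inl habs)
    exact ⟨h1, by rw [hDt]; simp only; rw [h2]; simp⟩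
  have hout2 : ∀ t : ℝ, ∀ x : ℝ, x ∉ Ioo (-b) b →
      φ (t, x) = 0 ∧ Dx (t, x) = 0 := by
    intro t x hx
    have habs : |x| > r := by
      simp only [mem_Ioo, not_and_or, not_lt] at hx
      rcases hx with h | h
      · rw [abs_of_nonpos (by linarith)]; linarith
      · rw [abs_of_nonneg (by linarith)]; linarith
    obtain ⟨h1, h2⟩ := hout (t, x) (Or.inr habs)
    exact ⟨h1, by rw [hDx]; simp only; rw [h2]; simp⟩
  have hslice_t : ∀ x t : ℝ, HasDerivAt (fun s => φ (s, x)) (Dt (t, x)) t := by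
    intro x t
    have h1 : HasDerivAt (fun s : ℝ => (s, x)) ((1:ℝ), (0:ℝ)) t :=
      (hasDerivAt_id t).prodMk (hasDerivAt_const t x)
    exact (hφd (t, x)).hasFDerivAt.comp_hasDerivAt t h1
  have hslice_x : ∀ t x : ℝ, HasDerivAt (fun y => φ (t, y)) (Dx (t, x)) x := by
    intro t x
    have h1 : HasDerivAt (fun y : ℝ => (t, y)) ((0:ℝ), (1:ℝ)) x :=
      (hasDerivAt_const x t).prodMk (hasDerivAt_id x)
    exact (hφd (t, x)).hasFDerivAt.comp_hasDerivAt x h1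
  -- compute the fderiv of `(1 - t²) φ`
  have hfd : ∀ z : ℝ × ℝ, fderiv ℝ (fun w : ℝ × ℝ => (1 - w.1 ^ 2) * φ w) z (1, 0)
      = -(2 * z.1) * φ z + (1 - z.1 ^ 2) * Dt z := by
    intro z
    have hfst : HasFDerivAt (fun w : ℝ × ℝ => w.1)
      (ContinuousLinearMap.fst ℝ ℝ ℝ) z := hasFDerivAt_fst
    have hsq := hfst.mul hfst
    have h3 := (hasFDerivAt_const (1:ℝ) z).sub hsq
    have h4 := h3.mul (hφd z).hasFDerivAt
    have heq : (fun w : ℝ × ℝ => (1 - w.1 ^ 2) * φ w)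
        = fun w : ℝ × ℝ => (1 - w.1 * w.1) * φ w := by
      funext w; ring
    rw [heq, HasFDerivAt.fderiv (f := fun w : ℝ × ℝ => (1 - w.1 * w.1) * φ w) h4]
    have h5 : (ContinuousLinearMap.fst ℝ ℝ ℝ) ((1:ℝ), (0:ℝ)) = 1 := rfl
    simp only [ContinuousLinearMap.add_apply, ContinuousLinearMap.smul_apply,
      ContinuousLinearMap.sub_apply, ContinuousLinearMap.zero_apply, h5, Pi.sub_apply, Pi.mul_apply,
      smul_eq_mul, hDt]
    ring
  -- rewrite the integrand a.e.
  have hmain : (fun z : ℝ × ℝ => u z *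
        (-(fderiv ℝ (fun w : ℝ × ℝ => (1 - w.1 ^ 2) * φ w) z (1, 0))
          + 2 * z.1 * fderiv ℝ φ z (0, 1)))
      =ᵐ[volume] (fun z : ℝ × ℝ =>
        (2 * z.1 * gt0 c z.1 * φ z - vt0 c z.1 * Dt z) + 2 * z.1 * gt0 c z.1 * Dx z) := by
    filter_upwards [hae0] with z hz
    rw [hfd z, hu]
    simp only [hDt, hDx]
    rw [← gt0_eq (c := c) hz.1 hz.2, vt0_eq]
    ring
  rw [integral_congr_ae hmain]
  -- integrability
  have hltg : LocallyIntegrable (fun z : ℝ × ℝ => 2 * z.1 * gt0 c z.1) volume :=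
    lift_locInt (twog_locInt c)
  have hDts : HasCompactSupport Dt := by
    rw [hDt]; exact HasCompactSupport.fderiv_apply (𝕜 := ℝ) hφs _
  have hDxs : HasCompactSupport Dx := by
    rw [hDx]; exact HasCompactSupport.fderiv_apply (𝕜 := ℝ) hφs _
  have i1 : Integrable (fun z : ℝ × ℝ => 2 * z.1 * gt0 c z.1 * φ z) volume := by
    simpa [smul_eq_mul] using
      hltg.integrable_smul_right_of_hasCompactSupport hφc hφs
  have i2 : Integrable (fun z : ℝ × ℝ => vt0 c z.1 * Dt z) volume :=
    (((vt0_cont c).comp continuous_fst).mul hDtc).integrable_of_hasCompactSupport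
      hDts.mul_left
  have i3 : Integrable (fun z : ℝ × ℝ => 2 * z.1 * gt0 c z.1 * Dx z) volume := by
    simpa [smul_eq_mul] using
      hltg.integrable_smul_right_of_hasCompactSupport hDxc hDxs
  have iφ : Integrable φ volume := hφc.integrable_of_hasCompactSupport hφs
  have hsplit : (∫ z : ℝ × ℝ,
        ((2 * z.1 * gt0 c z.1 * φ z - vt0 c z.1 * Dt z) + 2 * z.1 * gt0 c z.1 * Dx z))
      = (∫ z : ℝ × ℝ, (2 * z.1 * gt0 c z.1 * φ z - vt0 c z.1 * Dt z))
        + ∫ z : ℝ × ℝ, 2 * z.1 * gt0 c z.1 * Dx z :=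
    MeasureTheory.integral_add (i1.sub i2) i3
  rw [hsplit]
  -- the ∂x term vanishes
  have hH : ∫ z : ℝ × ℝ, 2 * z.1 * gt0 c z.1 * Dx z = 0 := by
    have hfub := MeasureTheory.integral_prod (μ := (volume : Measure ℝ))
      (ν := (volume : Measure ℝ))
      (fun z : ℝ × ℝ => 2 * z.1 * gt0 c z.1 * Dx z)
      (by rw [← Measure.volume_eq_prod]; exact i3)
    rw [Measure.volume_eq_prod, hfub]
    have hinner : ∀ t : ℝ, ∫ x : ℝ, 2 * t * gt0 c t * Dx (t, x) = 0 := by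
      intro t
      have h1 : ∫ x : ℝ, Dx (t, x) = 0 :=
        integral_deriv_zero (fun y => φ (t, y)) (fun y => Dx (t, y))
          (hslice_x t) (hDxc.comp (by fun_prop)) b hb (hout2 t)
      rw [MeasureTheory.integral_const_mul, h1, mul_zero]
    simp only [hinner, MeasureTheory.integral_zero]
  -- the main term
  have hG : ∫ z : ℝ × ℝ, (2 * z.1 * gt0 c z.1 * φ z - vt0 c z.1 * Dt z)
      = c * ∫ z : ℝ × ℝ, φ z := by
    have hfub := MeasureTheory.integral_prod_symm (μ := (volume : Measure ℝ))
      (ν := (volume : Measure ℝ))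
      (fun z : ℝ × ℝ => 2 * z.1 * gt0 c z.1 * φ z - vt0 c z.1 * Dt z)
      (by rw [← Measure.volume_eq_prod]; exact i1.sub i2)
    rw [Measure.volume_eq_prod, hfub]
    have hinner : ∀ x : ℝ,
        (∫ t : ℝ, (2 * t * gt0 c t * φ (t, x) - vt0 c t * Dt (t, x)))
        = c * ∫ t : ℝ, φ (t, x) := by
      intro x
      exact key1d' c (fun t => φ (t, x)) (fun t => Dt (t, x))
        (hslice_t x) (hDtc.comp (by fun_prop)) b hb (hout1 x)
    calc ∫ x : ℝ, ∫ t : ℝ, (2 * t * gt0 c t * φ (t, x) - vt0 c t * Dt (t, x))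
        = ∫ x : ℝ, c * ∫ t : ℝ, φ (t, x) := by
          congr 1; funext x; exact hinner x
      _ = c * ∫ x : ℝ, ∫ t : ℝ, φ (t, x) := MeasureTheory.integral_const_mul _ _
      _ = c * ∫ z : ℝ × ℝ, φ z := by
          rw [← MeasureTheory.integral_prod_symm (μ := (volume : Measure ℝ))
            (ν := (volume : Measure ℝ)) φ
            (by rw [← Measure.volume_eq_prod]; exact iφ)]
          rw [← Measure.volume_eq_prod]
  rw [hG, hH, add_zero]
end

section
/- Let p and q be real polynomials with no common real zeros such that the real zeros of p are exactly t_1 < ... < t_N (N ≥ 2), each simple (p'(t_j) ≠ 0), and such that q has at most one zero in each interval (t_j, t_{j+1}). Fix j ∈ {1,...,N−1} and set κ_j = 1/p'(t_j), κ_{j+1} = 1/p'(t_{j+1}). Then: κ_j·κ_{j+1}·q(t_j)·q(t_{j+1}) > 0 if and only if q has a root of odd multiplicity in the open interval (t_j, t_{j+1}); and κ_j·κ_{j+1}·q(t_j)·q(t_{j+1}) < 0 if and only if q has no root of odd multiplicity in (t_j, t_{j+1}). -/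
open Set Polynomial Filter Topology

private lemma sign_const' (f : Polynomial ℝ) {a b : ℝ} (hab : a ≤ b)
    (h : ∀ x ∈ Icc a b, f.eval x ≠ 0) : 0 < f.eval a * f.eval b := by
  have ha := h a ⟨le_refl a, hab⟩
  have hb := h b ⟨hab, le_refl b⟩
  rcases lt_trichotomy (f.eval a * f.eval b) 0 with h1 | h1 | h1
  · exfalso
    have hcont : ContinuousOn (fun x => f.eval x) (uIcc a b) := f.continuous.continuousOn
    have h0 : (0 : ℝ) ∈ uIcc (f.eval a) (f.eval b) := by
      rcases mul_neg_iff.mp h1 with ⟨h2, h3⟩ | ⟨h2, h3⟩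
      · exact mem_uIcc.mpr (Or.inr ⟨h3.le, h2.le⟩)
      · exact mem_uIcc.mpr (Or.inl ⟨h2.le, h3.le⟩)
    obtain ⟨x, hx, hx0⟩ := intermediate_value_uIcc hcont h0
    rw [uIcc_of_le hab] at hx
    exact h x hx hx0
  · exact absurd (mul_eq_zero.mp h1) (by push_neg; exact ⟨ha, hb⟩)
  · exact h1

private lemma const_sign_Ioo {p : Polynomial ℝ} {a b : ℝ} (hab : a < b)
    (hne : ∀ x ∈ Ioo a b, p.eval x ≠ 0) :
    (∀ x ∈ Ioo a b, 0 < p.eval x) ∨ (∀ x ∈ Ioo a b, p.eval x < 0) := by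
  have hm : (a + b) / 2 ∈ Ioo a b := ⟨by linarith, by linarith⟩
  set m := (a + b) / 2 with hmdef
  have key : ∀ x ∈ Ioo a b, 0 < p.eval x * p.eval m := by
    intro x hx
    rcases le_total x m with h | h
    · exact sign_const' p h (fun y hy =>
        hne y ⟨lt_of_lt_of_le hx.1 hy.1, lt_of_le_of_lt hy.2 hm.2⟩)
    · have := sign_const' p h (fun y hy =>
        hne y ⟨lt_of_lt_of_le hm.1 hy.1, lt_of_le_of_lt hy.2 hx.2⟩)
      nlinarith
  rcases (hne m hm).lt_or_gt with h | h
  · right; intro x hx; nlinarith [key x hx]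
  · left; intro x hx; nlinarith [key x hx]

private lemma deriv_nonneg_left {p : Polynomial ℝ} {a b : ℝ} (hab : a < b)
    (ha : p.eval a = 0) (hpos : ∀ x ∈ Ioo a b, 0 < p.eval x) :
    0 ≤ (Polynomial.derivative p).eval a := by
  have hslope := hasDerivAt_iff_tendsto_slope.mp (p.hasDerivAt a)
  have hslope' : Tendsto (slope (fun x => p.eval x) a) (𝓝[>] a)
      (𝓝 ((Polynomial.derivative p).eval a)) :=
    hslope.mono_left (nhdsWithin_mono a (fun x hx => ne_of_gt hx))
  refine ge_of_tendsto hslope' ?_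
  filter_upwards [Ioo_mem_nhdsGT hab] with x hx
  rw [slope_def_field, ha, sub_zero]
  exact div_nonneg (hpos x hx).le (by linarith [hx.1])

private lemma deriv_nonpos_right {p : Polynomial ℝ} {a b : ℝ} (hab : a < b)
    (hb : p.eval b = 0) (hpos : ∀ x ∈ Ioo a b, 0 < p.eval x) :
    (Polynomial.derivative p).eval b ≤ 0 := by
  have hslope := hasDerivAt_iff_tendsto_slope.mp (p.hasDerivAt b)
  have hslope' : Tendsto (slope (fun x => p.eval x) b) (𝓝[<] b)
      (𝓝 ((Polynomial.derivative p).eval b)) :=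
    hslope.mono_left (nhdsWithin_mono b (fun x hx => ne_of_lt hx))
  refine le_of_tendsto hslope' ?_
  filter_upwards [Ioo_mem_nhdsLT hab] with x hx
  rw [slope_def_field, hb, sub_zero]
  exact div_nonpos_of_nonneg_of_nonpos (hpos x hx).le (by linarith [hx.2])

private lemma deriv_prod_neg_of_pos {p : Polynomial ℝ} {a b : ℝ} (hab : a < b)
    (ha : p.eval a = 0) (hb : p.eval b = 0)
    (hpos : ∀ x ∈ Ioo a b, 0 < p.eval x)
    (hda : (Polynomial.derivative p).eval a ≠ 0)
    (hdb : (Polynomial.derivative p).eval b ≠ 0) :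
    (Polynomial.derivative p).eval a * (Polynomial.derivative p).eval b < 0 := by
  have h1 : 0 < (Polynomial.derivative p).eval a :=
    lt_of_le_of_ne (deriv_nonneg_left hab ha hpos) (Ne.symm hda)
  have h2 : (Polynomial.derivative p).eval b < 0 :=
    lt_of_le_of_ne (deriv_nonpos_right hab hb hpos) hdb
  exact mul_neg_of_pos_of_neg h1 h2

private lemma deriv_prod_neg {p : Polynomial ℝ} {a b : ℝ} (hab : a < b)
    (ha : p.eval a = 0) (hb : p.eval b = 0)
    (hne : ∀ x ∈ Ioo a b, p.eval x ≠ 0)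
    (hda : (Polynomial.derivative p).eval a ≠ 0)
    (hdb : (Polynomial.derivative p).eval b ≠ 0) :
    (Polynomial.derivative p).eval a * (Polynomial.derivative p).eval b < 0 := by
  rcases const_sign_Ioo hab hne with h | h
  · exact deriv_prod_neg_of_pos hab ha hb h hda hdb
  · have := deriv_prod_neg_of_pos (p := -p) hab (by simp [ha]) (by simp [hb])
      (fun x hx => by simpa using h x hx) (by simpa using hda) (by simpa using hdb)
    simp only [map_neg, Polynomial.eval_neg] at this
    nlinarith

private lemma sign_transfer {x y z w : ℝ} (h1 : 0 < x * z) (h2 : 0 < w * y) :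
    (x * y < 0 ↔ z * w < 0) := by
  constructor
  · intro h
    by_contra hc
    push_neg at hc
    nlinarith [mul_pos h1 h2, mul_nonneg hc (neg_nonneg.mpr h.le)]
  · intro h
    by_contra hc
    push_neg at hc
    nlinarith [mul_pos h1 h2, mul_nonneg hc (neg_nonneg.mpr h.le)]

private lemma odd_iff_local (q : Polynomial ℝ) (θ : ℝ) (hq0 : q ≠ 0) :
    ∃ δ > 0, ∀ s₁ ∈ Ioo (θ - δ) θ, ∀ s₂ ∈ Ioo θ (θ + δ),
      q.eval s₁ ≠ 0 ∧ q.eval s₂ ≠ 0 ∧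
      (q.eval s₁ * q.eval s₂ < 0 ↔ Odd (Polynomial.rootMultiplicity θ q)) := by
  set m := Polynomial.rootMultiplicity θ q with hm
  set r := q /ₘ (Polynomial.X - Polynomial.C θ) ^ m with hr
  have hfac : (Polynomial.X - Polynomial.C θ) ^ m * r = q :=
    q.pow_mul_divByMonic_rootMultiplicity_eq θ
  have hrθ : r.eval θ ≠ 0 := Polynomial.eval_divByMonic_pow_rootMultiplicity_ne_zero θ hq0
  have hev : ∀ᶠ x in 𝓝 θ, 0 < r.eval θ * r.eval x :=
    ((continuous_const.mul r.continuous).tendsto θ).eventually_const_lt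
      (mul_self_pos.mpr hrθ)
  obtain ⟨δ, hδ, hball⟩ := Metric.eventually_nhds_iff.mp hev
  refine ⟨δ, hδ, fun s₁ hs₁ s₂ hs₂ => ?_⟩
  have hqe : ∀ s : ℝ, q.eval s = (s - θ) ^ m * r.eval s := by
    intro s
    conv_lhs => rw [← hfac]
    simp
  have hr₁ : 0 < r.eval θ * r.eval s₁ := hball (by
    rw [Real.dist_eq, abs_lt]; constructor <;> [linarith [hs₁.1]; linarith [hs₁.2]])
  have hr₂ : 0 < r.eval θ * r.eval s₂ := hball (by
    rw [Real.dist_eq, abs_lt]; constructor <;> [linarith [hs₂.1]; linarith [hs₂.2]])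
  have hA : s₁ - θ < 0 := by linarith [hs₁.2]
  have hB : 0 < s₂ - θ := by linarith [hs₂.1]
  have hR : 0 < r.eval s₁ * r.eval s₂ := by nlinarith [mul_self_pos.mpr hrθ]
  have hq₁ : q.eval s₁ ≠ 0 := by
    rw [hqe]
    exact mul_ne_zero (pow_ne_zero _ (ne_of_lt hA)) (fun h => by simp [h] at hr₁)
  have hq₂ : q.eval s₂ ≠ 0 := by
    rw [hqe]
    exact mul_ne_zero (pow_ne_zero _ (ne_of_gt hB)) (fun h => by simp [h] at hr₂)
  refine ⟨hq₁, hq₂, ?_⟩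
  have hBm : 0 < (s₂ - θ) ^ m := pow_pos hB m
  have hprod : q.eval s₁ * q.eval s₂ = (s₁ - θ) ^ m * ((s₂ - θ) ^ m * (r.eval s₁ * r.eval s₂)) := by
    rw [hqe s₁, hqe s₂]; ring
  constructor
  · intro h
    by_contra hodd
    rw [Nat.not_odd_iff_even] at hodd
    have : 0 < (s₁ - θ) ^ m := hodd.pow_pos (ne_of_lt hA)
    rw [hprod] at h
    nlinarith [mul_pos this (mul_pos hBm hR)]
  · intro hodd
    have : (s₁ - θ) ^ m < 0 := hodd.pow_neg hA
    rw [hprod]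
    exact mul_neg_of_neg_of_pos this (mul_pos hBm hR)

private lemma key_iff (q : Polynomial ℝ) {a b : ℝ} (hab : a < b)
    (ha : q.eval a ≠ 0) (hb : q.eval b ≠ 0)
    (hatm : ∀ s₁ ∈ Ioo a b, ∀ s₂ ∈ Ioo a b, q.eval s₁ = 0 → q.eval s₂ = 0 → s₁ = s₂) :
    (q.eval a * q.eval b < 0 ↔
      ∃ θ ∈ Ioo a b, q.eval θ = 0 ∧ Odd (Polynomial.rootMultiplicity θ q)) := by
  by_cases hroot : ∃ θ ∈ Ioo a b, q.eval θ = 0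
  · obtain ⟨θ, hθ, hqθ⟩ := hroot
    have hq0 : q ≠ 0 := fun h => ha (by simp [h])
    obtain ⟨δ, hδ, hloc⟩ := odd_iff_local q θ hq0
    obtain ⟨s₁, hs₁⟩ := exists_between (show max a (θ - δ) < θ from max_lt hθ.1 (by linarith))
    obtain ⟨s₂, hs₂⟩ := exists_between (show θ < min b (θ + δ) from lt_min hθ.2 (by linarith))
    have hs₁Ioo : s₁ ∈ Ioo (θ - δ) θ := ⟨lt_of_le_of_lt (le_max_right _ _) hs₁.1, hs₁.2⟩
    have hs₂Ioo : s₂ ∈ Ioo θ (θ + δ) := ⟨hs₂.1, lt_of_lt_of_le hs₂.2 (min_le_right _ _)⟩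
    have has₁ : a < s₁ := lt_of_le_of_lt (le_max_left _ _) hs₁.1
    have hs₂b : s₂ < b := lt_of_lt_of_le hs₂.2 (min_le_left _ _)
    obtain ⟨h1ne, h2ne, hiff⟩ := hloc s₁ hs₁Ioo s₂ hs₂Ioo
    have hA : 0 < q.eval a * q.eval s₁ := by
      refine sign_const' q has₁.le (fun y hy => ?_)
      rcases eq_or_lt_of_le hy.1 with h | h
      · exact h ▸ ha
      · intro hy0
        have hyIoo : y ∈ Ioo a b := ⟨h, lt_of_le_of_lt hy.2 (hs₁.2.trans hθ.2)⟩
        have := hatm y hyIoo θ hθ hy0 hqθ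
        subst this
        exact absurd hy.2 (not_le.mpr hs₁.2)
    have hB : 0 < q.eval s₂ * q.eval b := by
      refine sign_const' q hs₂b.le (fun y hy => ?_)
      rcases eq_or_lt_of_le hy.2 with h | h
      · exact h ▸ hb
      · intro hy0
        have hyIoo : y ∈ Ioo a b := ⟨lt_of_lt_of_le (hθ.1.trans hs₂.1) hy.1, h⟩
        have := hatm y hyIoo θ hθ hy0 hqθ
        subst this
        exact absurd hy.1 (not_le.mpr hs₂.1)
    have htrans : (q.eval a * q.eval b < 0 ↔ q.eval s₁ * q.eval s₂ < 0) :=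
      sign_transfer hA hB
    constructor
    · intro h
      exact ⟨θ, hθ, hqθ, hiff.mp (htrans.mp h)⟩
    · rintro ⟨θ', hθ', hqθ', hodd⟩
      have heq : θ' = θ := hatm θ' hθ' θ hθ hqθ' hqθ
      subst heq
      exact htrans.mpr (hiff.mpr hodd)
  · have hpos : 0 < q.eval a * q.eval b := by
      refine sign_const' q hab.le (fun y hy => ?_)
      rcases eq_or_lt_of_le hy.1 with h | h
      · exact h ▸ ha
      · rcases eq_or_lt_of_le hy.2 with h' | h'
        · exact h' ▸ hb
        · exact fun hy0 => hroot ⟨y, ⟨h, h'⟩, hy0⟩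
    constructor
    · intro h; linarith
    · rintro ⟨θ, hθ, hqθ, _⟩; exact absurd ⟨θ, hθ, hqθ⟩ hroot

/-- With `κ_j = 1/p'(t_j)`: the product `κ_j κ_{j+1} q(t_j) q(t_{j+1})` is positive iff `q`
has a root of odd multiplicity in `(t_j, t_{j+1})`, and negative iff `q` has no root of odd
multiplicity there. -/
theorem stmt_6 (p q : Polynomial ℝ) (N : ℕ) (hN : 2 ≤ N) (t : ℕ → ℝ)
    (hmono : ∀ i j : ℕ, 1 ≤ i → i < j → j ≤ N → t i < t j)
    (hzeros : ∀ s : ℝ, p.eval s = 0 ↔ ∃ j : ℕ, 1 ≤ j ∧ j ≤ N ∧ s = t j)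
    (hsimple : ∀ j : ℕ, 1 ≤ j → j ≤ N → (Polynomial.derivative p).eval (t j) ≠ 0)
    (hnocommon : ∀ s : ℝ, ¬ (p.eval s = 0 ∧ q.eval s = 0))
    (hatmost : ∀ j : ℕ, 1 ≤ j → j < N → ∀ s₁ ∈ Ioo (t j) (t (j + 1)),
      ∀ s₂ ∈ Ioo (t j) (t (j + 1)), q.eval s₁ = 0 → q.eval s₂ = 0 → s₁ = s₂)
    (j : ℕ) (hj1 : 1 ≤ j) (hjN : j < N) :
    (0 < 1 / (Polynomial.derivative p).eval (t j) *
          (1 / (Polynomial.derivative p).eval (t (j + 1))) *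
          q.eval (t j) * q.eval (t (j + 1)) ↔
      ∃ θ ∈ Ioo (t j) (t (j + 1)), q.eval θ = 0 ∧ Odd (Polynomial.rootMultiplicity θ q)) ∧
    (1 / (Polynomial.derivative p).eval (t j) *
          (1 / (Polynomial.derivative p).eval (t (j + 1))) *
          q.eval (t j) * q.eval (t (j + 1)) < 0 ↔
      ¬ ∃ θ ∈ Ioo (t j) (t (j + 1)), q.eval θ = 0 ∧ Odd (Polynomial.rootMultiplicity θ q)) := by
  have hjN' : j + 1 ≤ N := hjN
  have hab : t j < t (j + 1) := hmono j (j + 1) hj1 (Nat.lt_succ_self j) hjN'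
  have hpa : p.eval (t j) = 0 := (hzeros _).mpr ⟨j, hj1, hjN.le, rfl⟩
  have hpb : p.eval (t (j + 1)) = 0 :=
    (hzeros _).mpr ⟨j + 1, le_trans hj1 (Nat.le_succ j), hjN', rfl⟩
  have hqa : q.eval (t j) ≠ 0 := fun h => hnocommon _ ⟨hpa, h⟩
  have hqb : q.eval (t (j + 1)) ≠ 0 := fun h => hnocommon _ ⟨hpb, h⟩
  have hpne : ∀ x ∈ Ioo (t j) (t (j + 1)), p.eval x ≠ 0 := by
    intro x hx hpx
    obtain ⟨k, hk1, hkN, rfl⟩ := (hzeros x).mp hpx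
    rcases le_or_gt k j with h | h
    · have hle : t k ≤ t j := by
        rcases lt_or_eq_of_le h with h' | h'
        · exact (hmono k j hk1 h' hjN.le).le
        · exact h' ▸ le_refl _
      exact absurd hx.1 (not_lt.mpr hle)
    · have hle : t (j + 1) ≤ t k := by
        rcases lt_or_eq_of_le (Nat.succ_le_of_lt h) with h' | h'
        · exact (hmono (j + 1) k (le_trans hj1 (Nat.le_succ j)) h' hkN).le
        · exact h' ▸ le_refl _
      exact absurd hx.2 (not_lt.mpr hle)
  have hdprod : (Polynomial.derivative p).eval (t j) *
      (Polynomial.derivative p).eval (t (j + 1)) < 0 :=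
    deriv_prod_neg hab hpa hpb hpne (hsimple j hj1 hjN.le)
      (hsimple (j + 1) (le_trans hj1 (Nat.le_succ j)) hjN')
  have hiff := key_iff q hab hqa hqb (hatmost j hj1 hjN)
  set A := (Polynomial.derivative p).eval (t j)
  set B := (Polynomial.derivative p).eval (t (j + 1))
  set u := q.eval (t j)
  set v := q.eval (t (j + 1))
  have hAne : A ≠ 0 := hsimple j hj1 hjN.le
  have hBne : B ≠ 0 := hsimple (j + 1) (le_trans hj1 (Nat.le_succ j)) hjN'
  have hP : 1 / A * (1 / B) * u * v = u * v / (A * B) := by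
    field_simp
  have huv : u * v ≠ 0 := mul_ne_zero hqa hqb
  have e1 : (0 < 1 / A * (1 / B) * u * v) ↔ u * v < 0 := by
    rw [hP, div_pos_iff]
    constructor
    · rintro (⟨h1, h2⟩ | ⟨h1, h2⟩)
      · linarith
      · exact h1
    · intro h; exact Or.inr ⟨h, hdprod⟩
  have e2 : (1 / A * (1 / B) * u * v < 0) ↔ 0 < u * v := by
    rw [hP, div_neg_iff]
    constructor
    · rintro (⟨h1, h2⟩ | ⟨h1, h2⟩)
      · exact h1
      · linarith
    · intro h; exact Or.inl ⟨h, hdprod⟩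
  refine ⟨e1.trans hiff, e2.trans ?_⟩
  constructor
  · intro h hR
    have := hiff.mpr hR
    linarith
  · intro h
    rcases huv.lt_or_gt with h' | h'
    · exact absurd (hiff.mp h') h
    · exact h'
end

section
/- Let λ ≠ 0 be a real number and k ≥ 0 an integer. Define f : ℝ² → ℝ by f(t,x) = (1−t²)·exp( 2·( x/λ + Σ_{m=1}^{k} t^{2m}/(2m) ) ). Then f is infinitely differentiable on ℝ² and satisfies (1−t²)·∂_t f(t,x) + λ·t^{2k+1}·∂_x f(t,x) = 0 for all (t,x) ∈ ℝ². In particular f lies in the kernel of the operator L_{λ,2k+1} = (1−t²)∂_t + λt^{2k+1}∂_x. -/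
lemma telescope_11 (t : ℝ) (k : ℕ) :
    (1 - t ^ 2) * ∑ m ∈ Finset.Icc 1 k, t ^ (2 * m - 1) = t - t ^ (2 * k + 1) := by
  induction k with
  | zero => simp
  | succ n ih =>
    rw [Finset.sum_Icc_succ_top (by omega), mul_add, ih]
    have h1 : 2 * (n + 1) - 1 = 2 * n + 1 := by omega
    have h2 : 2 * (n + 1) + 1 = (2 * n + 1) + 2 := by omega
    rw [h1, h2, pow_add]
    ring

lemma term_deriv_11 (m : ℕ) (hm1 : 1 ≤ m) (t : ℝ) :
    HasDerivAt (fun s : ℝ => s ^ (2 * m) / (2 * (m : ℝ))) (t ^ (2 * m - 1)) t := by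
  have h := (hasDerivAt_pow (2 * m) t).div_const (2 * (m : ℝ))
  refine h.congr_deriv ?_
  have hm0 : (m : ℝ) ≠ 0 := Nat.cast_ne_zero.mpr (by omega)
  push_cast
  field_simp

/-- The smooth function `f(t,x) = (1-t²)·exp(2(x/λ + Σ_{m=1}^k t^{2m}/(2m)))` lies in the
kernel of `L_{λ,2k+1} = (1-t²)∂_t + λ t^{2k+1} ∂_x`. -/
theorem stmt_11 (lam : ℝ) (hlam : lam ≠ 0) (k : ℕ) (f : ℝ × ℝ → ℝ)
    (hf : f = fun z : ℝ × ℝ => (1 - z.1 ^ 2) *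
      Real.exp (2 * (z.2 / lam + ∑ m ∈ Finset.Icc 1 k, z.1 ^ (2 * m) / (2 * (m : ℝ))))) :
    ContDiff ℝ (⊤ : ℕ∞) f ∧
    ∀ z : ℝ × ℝ,
      (1 - z.1 ^ 2) * fderiv ℝ f z (1, 0) + lam * z.1 ^ (2 * k + 1) * fderiv ℝ f z (0, 1)
        = 0 := by
  subst hf
  constructor
  · apply ContDiff.mul
    · exact (contDiff_const.sub (contDiff_fst.pow 2))
    · apply Real.contDiff_exp.comp
      apply ContDiff.mul contDiff_const
      apply ContDiff.add
      · exact contDiff_snd.div_const lam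
      · exact ContDiff.sum fun m hm => (contDiff_fst.pow _).div_const _
  · intro z
    obtain ⟨t, x⟩ := z
    set S' : ℝ := ∑ m ∈ Finset.Icc 1 k, t ^ (2 * m - 1) with hS'
    set E : ℝ := Real.exp (2 * (x / lam + ∑ m ∈ Finset.Icc 1 k, t ^ (2 * m) / (2 * (m : ℝ)))) with hE
    have hS : HasDerivAt (fun s : ℝ => ∑ m ∈ Finset.Icc 1 k, s ^ (2 * m) / (2 * (m : ℝ))) S' t :=
      HasDerivAt.fun_sum fun m hm => term_deriv_11 m (Finset.mem_Icc.mp hm).1 t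
    have hSf : HasFDerivAt (fun z : ℝ × ℝ => ∑ m ∈ Finset.Icc 1 k, z.1 ^ (2 * m) / (2 * (m : ℝ)))
        (S' • ContinuousLinearMap.fst ℝ ℝ ℝ) (t, x) :=
      by have := hS.comp_hasFDerivAt (t, x) (hasFDerivAt_fst (𝕜 := ℝ) (p := ((t, x) : ℝ × ℝ))); exact this
    have hxl : HasFDerivAt (fun z : ℝ × ℝ => z.2 / lam)
        ((1 / lam) • ContinuousLinearMap.snd ℝ ℝ ℝ) (t, x) := by
      have h0 : HasFDerivAt (fun z : ℝ × ℝ => z.2) (ContinuousLinearMap.snd ℝ ℝ ℝ) (t, x) :=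
        hasFDerivAt_snd
      have heq : (fun z : ℝ × ℝ => z.2 / lam) = fun z : ℝ × ℝ => (1 / lam) * z.2 := by
        funext z; ring
      rw [heq]
      exact h0.const_mul (1 / lam)
    have hg : HasFDerivAt
        (fun z : ℝ × ℝ => 2 * (z.2 / lam + ∑ m ∈ Finset.Icc 1 k, z.1 ^ (2 * m) / (2 * (m : ℝ))))
        ((2 : ℝ) • ((1 / lam) • ContinuousLinearMap.snd ℝ ℝ ℝ + S' • ContinuousLinearMap.fst ℝ ℝ ℝ))
        (t, x) := (hxl.add hSf).const_mul 2
    have hexp : HasFDerivAt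
        (fun z : ℝ × ℝ => Real.exp (2 * (z.2 / lam + ∑ m ∈ Finset.Icc 1 k, z.1 ^ (2 * m) / (2 * (m : ℝ)))))
        (E • ((2 : ℝ) • ((1 / lam) • ContinuousLinearMap.snd ℝ ℝ ℝ + S' • ContinuousLinearMap.fst ℝ ℝ ℝ)))
        (t, x) := by
      exact (Real.hasDerivAt_exp _).comp_hasFDerivAt (t, x) hg
    have hu : HasFDerivAt (fun z : ℝ × ℝ => 1 - z.1 ^ 2)
        ((-(2 * t)) • ContinuousLinearMap.fst ℝ ℝ ℝ) (t, x) := by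
      have h2 : HasFDerivAt (fun z : ℝ × ℝ => z.1 ^ 2)
          ((2 * t) • ContinuousLinearMap.fst ℝ ℝ ℝ) (t, x) := by
        have hfst : HasFDerivAt (fun z : ℝ × ℝ => z.1) (ContinuousLinearMap.fst ℝ ℝ ℝ) (t, x) :=
          hasFDerivAt_fst
        have := (hasDerivAt_pow 2 t).comp_hasFDerivAt (t, x) hfst
        refine this.congr_fderiv ?_
        congr 1; push_cast; ring
      have := (hasFDerivAt_const (1 : ℝ) ((t, x) : ℝ × ℝ)).sub h2
      refine this.congr_fderiv ?_
      module
    have hprod := HasFDerivAt.fun_mul (𝕜 := ℝ) hu hexp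
    rw [hprod.fderiv]
    have htel := telescope_11 t k
    simp only [ContinuousLinearMap.add_apply, ContinuousLinearMap.smul_apply,
      ContinuousLinearMap.coe_fst', ContinuousLinearMap.coe_snd', smul_eq_mul]
    rw [← hE]
    field_simp
    linear_combination (2 * E * lam * (1 - t ^ 2)) * htel
end

section
/- Let λ ≠ 0 be a real number and k ≥ 1 an integer. Define f(t,x) = arctan( ((1−t)/(1+t))·exp( 2·( x/λ + Σ_{m=1}^{k} t^{2m−1}/(2m−1) ) ) ) on the open set { (t,x) ∈ ℝ² : t ≠ −1 }. Then f is infinitely differentiable there and satisfies (1−t²)·∂_t f(t,x) + λ·t^{2k}·∂_x f(t,x) = 0 for all (t,x) with t ≠ −1. In particular f lies in the kernel of the operator L_{λ,2k} = (1−t²)∂_t + λt^{2k}∂_x on this set. -/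
open Real Finset

lemma geom_aux (k : ℕ) (t : ℝ) :
    (1 - t ^ 2) * ∑ m ∈ Finset.Icc 1 k, t ^ (2 * m - 2) = 1 - t ^ (2 * k) := by
  induction k with
  | zero => simp
  | succ n ih =>
    rw [Finset.sum_Icc_succ_top (by omega : 1 ≤ n + 1)]
    have h1 : 2 * (n + 1) - 2 = 2 * n := by omega
    have h2 : 2 * (n + 1) = 2 * n + 1 + 1 := by omega
    rw [h1, h2, mul_add, ih, pow_succ, pow_succ]
    ring

lemma S_deriv (k : ℕ) (t : ℝ) :
    HasDerivAt (fun t : ℝ => ∑ m ∈ Finset.Icc 1 k, t ^ (2 * m - 1) / ((2 * m - 1 : ℕ) : ℝ))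
      (∑ m ∈ Finset.Icc 1 k, t ^ (2 * m - 2)) t := by
  apply HasDerivAt.fun_sum
  intro m hm
  have hm1 : 1 ≤ m := (Finset.mem_Icc.mp hm).1
  have hne : ((2 * m - 1 : ℕ) : ℝ) ≠ 0 := by
    have : 1 ≤ 2 * m - 1 := by omega
    positivity
  have h := (hasDerivAt_pow (2 * m - 1) t).div_const ((2 * m - 1 : ℕ) : ℝ)
  have he : 2 * m - 1 - 1 = 2 * m - 2 := by omega
  rw [he] at h
  exact h.congr_deriv (mul_div_cancel_left₀ _ hne)

/-- The function `f(t,x) = arctan(((1-t)/(1+t))·exp(2(x/λ + Σ_{m=1}^k t^{2m-1}/(2m-1))))`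
is smooth on `{t ≠ -1}` and lies in the kernel of `L_{λ,2k} = (1-t²)∂_t + λ t^{2k} ∂_x`
there. -/
theorem stmt_12 (lam : ℝ) (hlam : lam ≠ 0) (k : ℕ) (hk : 1 ≤ k) (f : ℝ × ℝ → ℝ)
    (hf : f = fun z : ℝ × ℝ => Real.arctan ((1 - z.1) / (1 + z.1) *
      Real.exp (2 * (z.2 / lam +
        ∑ m ∈ Finset.Icc 1 k, z.1 ^ (2 * m - 1) / ((2 * m - 1 : ℕ) : ℝ))))) :
    ContDiffOn ℝ (⊤ : ℕ∞) f {z : ℝ × ℝ | z.1 ≠ -1} ∧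
    ∀ z : ℝ × ℝ, z.1 ≠ -1 →
      (1 - z.1 ^ 2) * fderiv ℝ f z (1, 0) + lam * z.1 ^ (2 * k) * fderiv ℝ f z (0, 1)
        = 0 := by
  constructor
  · -- smoothness
    rw [hf]
    apply ContDiff.comp_contDiffOn Real.contDiff_arctan
    apply ContDiffOn.mul
    · apply ContDiffOn.div
      · exact (contDiff_const.sub contDiff_fst).contDiffOn
      · exact (contDiff_const.add contDiff_fst).contDiffOn
      · intro z hz
        simp only [Set.mem_setOf_eq] at hz
        intro h
        exact hz (by linarith)
    · apply ContDiff.contDiffOn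
      apply Real.contDiff_exp.comp
      apply ContDiff.mul contDiff_const
      apply ContDiff.add
      · exact contDiff_snd.div_const lam
      · apply ContDiff.sum
        intro m _
        exact (contDiff_fst.pow _).div_const _
  · intro z hz
    set t := z.1 with ht
    set x := z.2 with hx
    have h1t : (1 : ℝ) + t ≠ 0 := fun h => hz (by linarith)
    -- one-variable derivative of (1-t)/(1+t)
    have hq1 : HasDerivAt (fun u : ℝ => (1 - u) / (1 + u)) (-2 / (1 + t) ^ 2) t := by
      have h := (((hasDerivAt_id t).const_sub 1).div ((hasDerivAt_id t).const_add 1) h1t)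
      refine h.congr_deriv ?_
      simp only [id]
      field_simp
      ring
    have hqz : HasFDerivAt (fun w : ℝ × ℝ => (1 - w.1) / (1 + w.1))
        ((-2 / (1 + t) ^ 2) • ContinuousLinearMap.fst ℝ ℝ ℝ) z :=
      hq1.comp_hasFDerivAt (f := Prod.fst) z hasFDerivAt_fst
    have hS : HasFDerivAt
        (fun w : ℝ × ℝ => ∑ m ∈ Finset.Icc 1 k, w.1 ^ (2 * m - 1) / ((2 * m - 1 : ℕ) : ℝ))
        ((∑ m ∈ Finset.Icc 1 k, t ^ (2 * m - 2)) • ContinuousLinearMap.fst ℝ ℝ ℝ) z :=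
      (S_deriv k t).comp_hasFDerivAt (f := Prod.fst) z hasFDerivAt_fst
    have hx1 : HasDerivAt (fun u : ℝ => u / lam) (1 / lam) x := by
      have h : HasDerivAt (fun u : ℝ => u * lam⁻¹) (1 * lam⁻¹) x :=
        (hasDerivAt_id x).mul_const lam⁻¹
      simpa [div_eq_mul_inv] using h
    have hxz : HasFDerivAt (fun w : ℝ × ℝ => w.2 / lam)
        ((1 / lam) • ContinuousLinearMap.snd ℝ ℝ ℝ) z :=
      hx1.comp_hasFDerivAt (f := Prod.snd) z hasFDerivAt_snd
    have hE := (hxz.fun_add hS).const_mul (2 : ℝ)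
    have hA := hE.exp
    have hg := hqz.fun_mul hA
    have hfz := hg.arctan
    rw [hf, hfz.fderiv]
    set P : ℝ := ∑ m ∈ Finset.Icc 1 k, t ^ (2 * m - 2) with hP
    have hgeo : (1 - t ^ 2) * P = 1 - t ^ (2 * k) := geom_aux k t
    simp only [ContinuousLinearMap.smul_apply, ContinuousLinearMap.add_apply,
      ContinuousLinearMap.coe_fst', ContinuousLinearMap.coe_snd', smul_eq_mul,
      Function.comp_apply]
    set A : ℝ := Real.exp (2 * (x / lam + ∑ m ∈ Finset.Icc 1 k, t ^ (2 * m - 1) / ((2 * m - 1 : ℕ) : ℝ))) with hA'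
    have hB : (1 : ℝ) + ((1 - t) / (1 + t) * A) ^ 2 ≠ 0 := by positivity
    have h2k : t ^ (2 * k) = 1 - (1 - t ^ 2) * P := by linarith [hgeo]
    rw [h2k]
    rw [← ht]
    field_simp
    ring
end

section
/- Let θ > 0, let c ≠ 0 and ε > 0 be real numbers with ε·|c| < 1, let σ : [0,θ] → ℝ be continuous, let M be a continuous real-valued function on the triangle Δ = {(t,τ) : 0 ≤ t ≤ τ ≤ θ}, and let f : [0,θ] × ℝ → ℝ be continuous with |f(t,x)| ≤ C·e^{ε|x|} for all (t,x) ∈ [0,θ] × ℝ, for some constant C > 0. For t ∈ (0,θ] and x ∈ ℝ define u(t,x) = ∫_t^θ f(τ, x + c·ln(τ/t) + M(t,τ))·(σ(τ)/τ) dτ. Then there exists a constant C' > 0 (depending only on C, ε, c, θ, sup|σ| and sup|M|) such that |u(t,x)| ≤ C'·e^{ε|x|}·t^{−ε|c|} for all t ∈ (0,θ] and all x ∈ ℝ. In particular, since ε|c| < 1, for every compact set K ⊂ ℝ the function u is integrable on (0,θ) × K. -/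
open Set MeasureTheory

/-- Exponential-growth estimate for the right inverse in a separatrix strip: if
`|f(t,x)| ≤ C e^{ε|x|}` with `ε|c| < 1`, then
`u(t,x) = ∫_t^θ f(τ, x + c ln(τ/t) + M(t,τ)) σ(τ)/τ dτ` satisfies
`|u(t,x)| ≤ C' e^{ε|x|} t^{-ε|c|}` on `(0,θ] × ℝ`; in particular `u` is integrable on
`(0,θ) × K` for every compact `K ⊆ ℝ`. -/
theorem stmt_13 (θ : ℝ) (hθ : 0 < θ) (c : ℝ) (hc : c ≠ 0) (ε : ℝ) (hε : 0 < ε)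
    (hεc : ε * |c| < 1)
    (σ : ℝ → ℝ) (hσ : ContinuousOn σ (Icc 0 θ))
    (M : ℝ × ℝ → ℝ) (hM : ContinuousOn M {pt : ℝ × ℝ | 0 ≤ pt.1 ∧ pt.1 ≤ pt.2 ∧ pt.2 ≤ θ})
    (f : ℝ × ℝ → ℝ) (hfcont : ContinuousOn f (Icc 0 θ ×ˢ univ))
    (C : ℝ) (hC : 0 < C)
    (hfb : ∀ s ∈ Icc (0 : ℝ) θ, ∀ x : ℝ, |f (s, x)| ≤ C * Real.exp (ε * |x|))
    (u : ℝ → ℝ → ℝ)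
    (hu : ∀ t x : ℝ, u t x = ∫ τ in t..θ, f (τ, x + c * Real.log (τ / t) + M (t, τ)) * (σ τ / τ)) :
    ∃ C' > (0 : ℝ),
      (∀ t ∈ Ioc (0 : ℝ) θ, ∀ x : ℝ,
        |u t x| ≤ C' * Real.exp (ε * |x|) * t ^ (-(ε * |c|))) ∧
      ∀ K : Set ℝ, IsCompact K →
        IntegrableOn (fun z : ℝ × ℝ => u z.1 z.2) (Ioo 0 θ ×ˢ K) := by
  set a : ℝ := ε * |c| with ha_def
  have ha0 : 0 < a := mul_pos hε (abs_pos.mpr hc)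
  have ha1 : a < 1 := hεc
  -- bound for σ
  obtain ⟨Sb₀, hSb₀⟩ := (isCompact_Icc (a := (0:ℝ)) (b := θ)).exists_bound_of_continuousOn hσ
  set Sb : ℝ := Sb₀ + 1 with hSb_def
  have hSb : ∀ τ ∈ Icc (0:ℝ) θ, |σ τ| ≤ Sb := fun τ hτ => by
    have := hSb₀ τ hτ; simp only [Real.norm_eq_abs] at this; linarith
  have hSbpos : 0 < Sb := by
    have := hSb₀ 0 ⟨le_refl 0, hθ.le⟩
    have h0 : (0:ℝ) ≤ Sb₀ := le_trans (norm_nonneg _) this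
    linarith
  -- the triangle is compact
  have hTcl : IsClosed {pt : ℝ × ℝ | 0 ≤ pt.1 ∧ pt.1 ≤ pt.2 ∧ pt.2 ≤ θ} := by
    have h1 : IsClosed {pt : ℝ × ℝ | 0 ≤ pt.1} := isClosed_le continuous_const continuous_fst
    have h2 : IsClosed {pt : ℝ × ℝ | pt.1 ≤ pt.2} := isClosed_le continuous_fst continuous_snd
    have h3 : IsClosed {pt : ℝ × ℝ | pt.2 ≤ θ} := isClosed_le continuous_snd continuous_const
    have : {pt : ℝ × ℝ | 0 ≤ pt.1 ∧ pt.1 ≤ pt.2 ∧ pt.2 ≤ θ}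
        = {pt : ℝ × ℝ | 0 ≤ pt.1} ∩ ({pt : ℝ × ℝ | pt.1 ≤ pt.2} ∩ {pt : ℝ × ℝ | pt.2 ≤ θ}) := by
      ext pt; simp [mem_inter_iff, and_assoc]
    rw [this]; exact h1.inter (h2.inter h3)
  have hTcpt : IsCompact {pt : ℝ × ℝ | 0 ≤ pt.1 ∧ pt.1 ≤ pt.2 ∧ pt.2 ≤ θ} := by
    refine ((isCompact_Icc (a := (0:ℝ)) (b := θ)).prod
      (isCompact_Icc (a := (0:ℝ)) (b := θ))).of_isClosed_subset hTcl ?_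
    rintro ⟨t, τ⟩ ⟨h1, h2, h3⟩
    exact ⟨⟨h1, le_trans h2 h3⟩, ⟨le_trans h1 h2, h3⟩⟩
  obtain ⟨Mb₀, hMb₀⟩ := hTcpt.exists_bound_of_continuousOn hM
  set Mb : ℝ := Mb₀ + 1 with hMb_def
  have hMb : ∀ pt ∈ {pt : ℝ × ℝ | 0 ≤ pt.1 ∧ pt.1 ≤ pt.2 ∧ pt.2 ≤ θ}, |M pt| ≤ Mb := fun pt hpt => by
    have := hMb₀ pt hpt; simp only [Real.norm_eq_abs] at this; linarith
  have hMbpos : 0 < Mb := by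
    have := hMb₀ (0, 0) ⟨le_refl 0, le_refl 0, hθ.le⟩
    have h0 : (0:ℝ) ≤ Mb₀ := le_trans (norm_nonneg _) this
    linarith
  set D : ℝ := C * Real.exp (ε * Mb) * Sb with hD_def
  have hDpos : 0 < D := by positivity
  set C' : ℝ := D * θ ^ a / a with hC'_def
  have hθa : 0 < θ ^ a := Real.rpow_pos_of_pos hθ _
  have hC'pos : 0 < C' := by positivity
  -- main pointwise estimate
  have main : ∀ t ∈ Ioc (0 : ℝ) θ, ∀ x : ℝ,
      |u t x| ≤ C' * Real.exp (ε * |x|) * t ^ (-a) := by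
    rintro t ⟨ht0, htθ⟩ x
    set D' : ℝ := D * Real.exp (ε * |x|) * t ^ (-a) with hD'_def
    have ht_a : 0 < t ^ (-a) := Real.rpow_pos_of_pos ht0 _
    have hD'pos : 0 < D' := by positivity
    set G : ℝ → ℝ := fun τ => D' * τ ^ (a - 1) with hG_def
    have hGint : IntervalIntegrable G volume t θ :=
      (intervalIntegral.intervalIntegrable_rpow' (by linarith)).const_mul _
    have hptwise : ∀ τ ∈ Ioc t θ,
        ‖f (τ, x + c * Real.log (τ / t) + M (t, τ)) * (σ τ / τ)‖ ≤ G τ := by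
      intro τ hτ
      have hτ0 : 0 < τ := lt_trans ht0 hτ.1
      have hτθ : τ ≤ θ := hτ.2
      have hlog0 : 0 ≤ Real.log (τ / t) :=
        Real.log_nonneg ((one_le_div ht0).mpr hτ.1.le)
      set y : ℝ := x + c * Real.log (τ / t) + M (t, τ) with hy_def
      have hMbd : |M (t, τ)| ≤ Mb := hMb (t, τ) ⟨ht0.le, hτ.1.le, hτθ⟩
      have hybd : |y| ≤ |x| + |c| * Real.log (τ / t) + Mb := by
        calc |y| ≤ |x + c * Real.log (τ / t)| + |M (t, τ)| := abs_add_le _ _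
          _ ≤ |x| + |c * Real.log (τ / t)| + Mb := by
              have := abs_add_le x (c * Real.log (τ / t)); linarith
          _ = |x| + |c| * Real.log (τ / t) + Mb := by
              rw [abs_mul, abs_of_nonneg hlog0]
      have hfbd : |f (τ, y)| ≤ C * Real.exp (ε * |y|) := hfb τ ⟨hτ0.le, hτθ⟩ y
      have hexp : Real.exp (ε * |y|)
          ≤ Real.exp (ε * |x|) * Real.exp (ε * Mb) * (τ / t) ^ a := by
        have h1 : ε * |y| ≤ ε * |x| + ε * Mb + a * Real.log (τ / t) := by
          have := mul_le_mul_of_nonneg_left hybd hε.le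
          nlinarith
        calc Real.exp (ε * |y|) ≤ Real.exp (ε * |x| + ε * Mb + a * Real.log (τ / t)) :=
              Real.exp_le_exp.mpr h1
          _ = Real.exp (ε * |x|) * Real.exp (ε * Mb) * Real.exp (a * Real.log (τ / t)) := by
              rw [Real.exp_add, Real.exp_add]
          _ = Real.exp (ε * |x|) * Real.exp (ε * Mb) * (τ / t) ^ a := by
              rw [Real.rpow_def_of_pos (div_pos hτ0 ht0), mul_comm (Real.log (τ / t)) a]
      have hσbd : |σ τ / τ| ≤ Sb / τ := by
        rw [abs_div, abs_of_pos hτ0]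
        exact div_le_div_of_nonneg_right (hSb τ ⟨hτ0.le, hτθ⟩) hτ0.le
      have hpow : (τ / t) ^ a / τ = t ^ (-a) * τ ^ (a - 1) := by
        rw [Real.div_rpow hτ0.le ht0.le, Real.rpow_neg ht0.le,
          Real.rpow_sub hτ0, Real.rpow_one]
        ring
      have habs : ‖f (τ, y) * (σ τ / τ)‖ = |f (τ, y)| * |σ τ / τ| := by
        rw [Real.norm_eq_abs, abs_mul]
      rw [habs]
      calc |f (τ, y)| * |σ τ / τ|
          ≤ (C * (Real.exp (ε * |x|) * Real.exp (ε * Mb) * (τ / t) ^ a)) * (Sb / τ) := by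
            apply mul_le_mul _ hσbd (abs_nonneg _) (by positivity)
            exact le_trans hfbd (mul_le_mul_of_nonneg_left hexp hC.le)
        _ = D * Real.exp (ε * |x|) * ((τ / t) ^ a / τ) := by rw [hD_def]; ring
        _ = G τ := by rw [hG_def, hpow, hD'_def]; ring
    have hae : ∀ᵐ τ ∂(volume.restrict (Set.uIoc t θ)),
        ‖f (τ, x + c * Real.log (τ / t) + M (t, τ)) * (σ τ / τ)‖ ≤ G τ := by
      rw [uIoc_of_le htθ]
      exact (ae_restrict_iff' measurableSet_Ioc).mpr (Filter.Eventually.of_forall hptwise)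
    have hbound := intervalIntegral.norm_integral_le_abs_of_norm_le hae hGint
    have hGval : ∫ τ in t..θ, G τ = D' * ((θ ^ a - t ^ a) / a) := by
      rw [hG_def, intervalIntegral.integral_const_mul, integral_rpow (Or.inl (by linarith))]
      norm_num
    have htpa : t ^ a ≤ θ ^ a := Real.rpow_le_rpow ht0.le htθ ha0.le
    have hfin : |∫ τ in t..θ, G τ| ≤ C' * Real.exp (ε * |x|) * t ^ (-a) := by
      rw [hGval, abs_of_nonneg (mul_nonneg hD'pos.le (div_nonneg (by linarith) ha0.le))]
      calc D' * ((θ ^ a - t ^ a) / a) ≤ D' * (θ ^ a / a) := by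
            apply mul_le_mul_of_nonneg_left _ hD'pos.le
            apply div_le_div_of_nonneg_right _ ha0.le
            have := Real.rpow_nonneg ht0.le a
            linarith
        _ = C' * Real.exp (ε * |x|) * t ^ (-a) := by rw [hC'_def, hD'_def]; ring
    rw [hu t x]
    calc |∫ τ in t..θ, f (τ, x + c * Real.log (τ / t) + M (t, τ)) * (σ τ / τ)|
        ≤ |∫ τ in t..θ, G τ| := hbound
      _ ≤ C' * Real.exp (ε * |x|) * t ^ (-a) := hfin
  refine ⟨C', hC'pos, main, ?_⟩
  -- Integrability: extend f, σ, M continuously to the whole space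
  intro K hK
  obtain ⟨F, hF⟩ := ContinuousMap.exists_restrict_eq (Y := ℝ)
    (isClosed_Icc.prod isClosed_univ : IsClosed (Icc (0:ℝ) θ ×ˢ (univ : Set ℝ)))
    ⟨_, hfcont.restrict⟩
  obtain ⟨Sg, hSg⟩ := ContinuousMap.exists_restrict_eq (Y := ℝ)
    (isClosed_Icc : IsClosed (Icc (0:ℝ) θ)) ⟨_, hσ.restrict⟩
  obtain ⟨MM, hMM⟩ := ContinuousMap.exists_restrict_eq (Y := ℝ) hTcl ⟨_, hM.restrict⟩
  have hFeq : ∀ p ∈ Icc (0:ℝ) θ ×ˢ (univ : Set ℝ), F p = f p := fun p hp =>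
    ContinuousMap.congr_fun hF ⟨p, hp⟩
  have hSgeq : ∀ s ∈ Icc (0:ℝ) θ, Sg s = σ s := fun s hs =>
    ContinuousMap.congr_fun hSg ⟨s, hs⟩
  have hMMeq : ∀ p ∈ {pt : ℝ × ℝ | 0 ≤ pt.1 ∧ pt.1 ≤ pt.2 ∧ pt.2 ≤ θ}, MM p = M p := fun p hp =>
    ContinuousMap.congr_fun hMM ⟨p, hp⟩
  -- measurable global version of u
  set H : (ℝ × ℝ) × ℝ → ℝ := fun q =>
    ({q : (ℝ × ℝ) × ℝ | q.1.1 < q.2 ∧ q.2 ≤ θ}).indicator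
      (fun q => F (q.2, q.1.2 + c * Real.log (q.2 / q.1.1) + MM (q.1.1, q.2)) * (Sg q.2 / q.2)) q
    with hH_def
  have hHmeas : StronglyMeasurable H := by
    apply Measurable.stronglyMeasurable
    apply Measurable.indicator
    · apply Measurable.mul
      · apply F.continuous.measurable.comp
        apply Measurable.prodMk measurable_snd
        apply Measurable.add
        · apply Measurable.add measurable_fst.snd
          exact measurable_const.mul
            (Real.measurable_log.comp (measurable_snd.div measurable_fst.fst))
        · exact MM.continuous.measurable.comp (measurable_fst.fst.prodMk measurable_snd)
      · exact (Sg.continuous.measurable.comp measurable_snd).div measurable_snd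
    · exact (measurableSet_lt measurable_fst.fst measurable_snd).inter
        (measurableSet_le measurable_snd measurable_const)
  set v : ℝ × ℝ → ℝ := fun z => ∫ τ, H (z, τ) with hv_def
  have hvmeas : StronglyMeasurable v := hHmeas.integral_prod_right'
  -- v agrees with u on (0,θ] × ℝ
  have hveq : ∀ t ∈ Ioc (0:ℝ) θ, ∀ x : ℝ, u t x = v (t, x) := by
    rintro t ⟨ht0, htθ⟩ x
    rw [hu t x, hv_def]
    have h1 : (∫ τ in t..θ, f (τ, x + c * Real.log (τ / t) + M (t, τ)) * (σ τ / τ))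
        = ∫ τ in Ioc t θ, f (τ, x + c * Real.log (τ / t) + M (t, τ)) * (σ τ / τ) := by
      rw [intervalIntegral.integral_of_le htθ]
    rw [h1, ← integral_indicator measurableSet_Ioc]
    congr 1
    ext τ
    by_cases hτ : τ ∈ Ioc t θ
    · have hmem : ((t, x), τ) ∈ {q : (ℝ × ℝ) × ℝ | q.1.1 < q.2 ∧ q.2 ≤ θ} := ⟨hτ.1, hτ.2⟩
      have hτ0 : 0 < τ := lt_trans ht0 hτ.1
      have e1 : H ((t, x), τ)
          = F (τ, x + c * Real.log (τ / t) + MM (t, τ)) * (Sg τ / τ) :=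
        Set.indicator_of_mem hmem _
      rw [indicator_of_mem hτ, e1,
        hFeq (τ, x + c * Real.log (τ / t) + MM (t, τ)) ⟨⟨hτ0.le, hτ.2⟩, mem_univ _⟩,
        hMMeq (t, τ) ⟨ht0.le, hτ.1.le, hτ.2⟩, hSgeq τ ⟨hτ0.le, hτ.2⟩]
    · have hmem : ((t, x), τ) ∉ {q : (ℝ × ℝ) × ℝ | q.1.1 < q.2 ∧ q.2 ≤ θ} := by
        intro h; exact hτ ⟨h.1, h.2⟩
      have e1 : H ((t, x), τ) = 0 := Set.indicator_of_notMem hmem _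
      rw [indicator_of_notMem hτ, e1]
  -- bound on K
  obtain ⟨E₀, hE₀⟩ := hK.exists_bound_of_continuousOn
    ((Real.continuous_exp.comp (continuous_const.mul continuous_abs)).continuousOn :
      ContinuousOn (fun x : ℝ => Real.exp (ε * |x|)) K)
  set E : ℝ := E₀ + 1 with hE_def
  have hE : ∀ x ∈ K, Real.exp (ε * |x|) ≤ E := fun x hx => by
    have h := hE₀ x hx
    rw [Real.norm_eq_abs] at h
    have h2 : Real.exp (ε * |x|) ≤ E₀ := le_trans (le_abs_self _) h
    linarith
  -- the dominating function is integrable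
  have hdom : IntegrableOn (fun z : ℝ × ℝ => (C' * E * z.1 ^ (-a)) * (1:ℝ))
      (Ioo 0 θ ×ˢ K) := by
    rw [IntegrableOn, Measure.volume_eq_prod, ← Measure.prod_restrict]
    have h1 : Integrable (fun t : ℝ => C' * E * t ^ (-a)) (volume.restrict (Ioo 0 θ)) := by
      apply Integrable.const_mul
      have h1' : IntervalIntegrable (fun τ : ℝ => τ ^ (-a)) volume 0 θ :=
        intervalIntegral.intervalIntegrable_rpow' (by linarith)
      have h2' : IntegrableOn (fun τ : ℝ => τ ^ (-a)) (Ioc 0 θ) :=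
        (intervalIntegrable_iff_integrableOn_Ioc_of_le hθ.le).mp h1'
      exact h2'.mono_set Ioo_subset_Ioc_self
    have h2 : Integrable (fun _ : ℝ => (1:ℝ)) (volume.restrict K) := by
      rw [← IntegrableOn]
      exact integrableOn_const hK.measure_lt_top.ne
    exact h1.mul_prod h2
  -- conclude
  have hvint : IntegrableOn v (Ioo 0 θ ×ˢ K) := by
    apply Integrable.mono' hdom hvmeas.aestronglyMeasurable.restrict
    apply (ae_restrict_iff' (measurableSet_Ioo.prod hK.measurableSet)).mpr
    apply Filter.Eventually.of_forall
    rintro ⟨t, x⟩ ⟨ht, hx⟩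
    have h1 : v (t, x) = u t x := (hveq t ⟨ht.1, ht.2.le⟩ x).symm
    rw [Real.norm_eq_abs, h1, mul_one]
    calc |u t x| ≤ C' * Real.exp (ε * |x|) * t ^ (-a) := main t ⟨ht.1, ht.2.le⟩ x
      _ ≤ C' * E * t ^ (-a) := by
          apply mul_le_mul_of_nonneg_right _ (Real.rpow_pos_of_pos ht.1 _).le
          exact mul_le_mul_of_nonneg_left (hE x hx) hC'pos.le
  apply hvint.congr_fun ?_ (measurableSet_Ioo.prod hK.measurableSet)
  rintro ⟨t, x⟩ ⟨ht, hx⟩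
  exact (hveq t ⟨ht.1, ht.2.le⟩ x).symm
end

section
/- Let θ > 0, c ∈ ℝ, let σ : [0,θ] → ℝ be continuous, let M be a continuous real-valued function on the triangle Δ = {(t,τ) : 0 ≤ t ≤ τ ≤ θ}, and let f : [0,θ] × ℝ → ℝ be measurable such that for every τ ∈ [0,θ] the function f(τ,·) belongs to L²(ℝ) and A := sup_{τ ∈ [0,θ]} ‖f(τ,·)‖_{L²(ℝ)} is finite (and τ ↦ f(τ,·) is continuous into L²). For t ∈ (0,θ] define u(t,x) = ∫_t^θ f(τ, x + c·ln(τ/t) + M(t,τ))·(σ(τ)/τ) dτ. Then for every t ∈ (0,θ]: ‖u(t,·)‖_{L²(ℝ)} ≤ (sup_{[0,θ]}|σ|)·A·ln(θ/t). -/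
open Set MeasureTheory Filter
open scoped ENNReal NNReal

/-- Minkowski's integral inequality for `p = 2` in `ℝ≥0∞` form. -/
lemma minkowski_two (μ : Measure ℝ) [SFinite μ] {g : ℝ → ℝ → ℝ}
    (hg : Measurable fun p : ℝ × ℝ => g p.1 p.2) :
    eLpNorm (fun x => ∫ τ, g τ x ∂μ) 2 volume ≤ ∫⁻ τ, eLpNorm (g τ) 2 volume ∂μ := by
  set G : ℝ → ℝ → ℝ≥0∞ := fun τ x => (‖g τ x‖₊ : ℝ≥0∞) with hG
  have hGmeas : Measurable fun p : ℝ × ℝ => G p.1 p.2 := hg.enorm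
  set N : ℝ → ℝ≥0∞ := fun τ => (∫⁻ x, G τ x ^ (2 : ℝ)) ^ (1 / 2 : ℝ) with hN
  have hNmeas : Measurable N := by
    apply Measurable.pow_const
    exact Measurable.lintegral_prod_right (hGmeas.pow_const _)
  have hNe : ∀ τ, N τ = eLpNorm (g τ) 2 volume := by
    intro τ
    rw [eLpNorm_eq_lintegral_rpow_enorm_toReal (by norm_num) (by norm_num)]
    norm_num [hN, hG]
    rfl
  have key : ∫⁻ x, (∫⁻ τ, G τ x ∂μ) ^ (2 : ℝ) ≤ (∫⁻ τ, N τ ∂μ) ^ (2 : ℝ) := by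
    have h1 : ∀ x, (∫⁻ τ, G τ x ∂μ) ^ (2 : ℝ)
        = ∫⁻ τ, ∫⁻ s, G τ x * G s x ∂μ ∂μ := by
      intro x
      have hm : AEMeasurable (fun τ => G τ x) μ :=
        (hGmeas.comp (measurable_id.prodMk measurable_const)).aemeasurable
      rw [ENNReal.rpow_two, pow_two, ← lintegral_mul_const'' _ hm]
      refine lintegral_congr fun τ => ?_
      rw [lintegral_const_mul' _ _ ENNReal.coe_ne_top]
    calc ∫⁻ x, (∫⁻ τ, G τ x ∂μ) ^ (2 : ℝ)
        = ∫⁻ x, ∫⁻ p : ℝ × ℝ, G p.1 x * G p.2 x ∂(μ.prod μ) := by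
          refine lintegral_congr fun x => ?_
          rw [h1]
          rw [lintegral_lintegral]
          apply Measurable.aemeasurable
          apply Measurable.fun_mul
          · exact hGmeas.comp (measurable_fst.prodMk measurable_const)
          · exact hGmeas.comp (measurable_snd.prodMk measurable_const)
      _ = ∫⁻ p : ℝ × ℝ, ∫⁻ x, G p.1 x * G p.2 x ∂volume ∂(μ.prod μ) := by
          apply lintegral_lintegral_swap
          apply Measurable.aemeasurable
          apply Measurable.fun_mul
          · exact hGmeas.comp ((measurable_fst.comp measurable_snd).prodMk measurable_fst)
          · exact hGmeas.comp ((measurable_snd.comp measurable_snd).prodMk measurable_fst)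
      _ ≤ ∫⁻ p : ℝ × ℝ, N p.1 * N p.2 ∂(μ.prod μ) := by
          refine lintegral_mono fun p => ?_
          have hconj : Real.HolderConjugate 2 2 := Real.HolderConjugate.two_two
          have hm1 : AEMeasurable (fun x => G p.1 x) volume :=
            (hGmeas.comp (measurable_const.prodMk measurable_id)).aemeasurable
          have hm2 : AEMeasurable (fun x => G p.2 x) volume :=
            (hGmeas.comp (measurable_const.prodMk measurable_id)).aemeasurable
          have h := ENNReal.lintegral_mul_le_Lp_mul_Lq volume hconj hm1 hm2
          simpa [hN] using h
      _ = (∫⁻ τ, N τ ∂μ) * (∫⁻ τ, N τ ∂μ) :=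
          lintegral_prod_mul hNmeas.aemeasurable hNmeas.aemeasurable
      _ = (∫⁻ τ, N τ ∂μ) ^ (2 : ℝ) := by rw [ENNReal.rpow_two, pow_two]
  calc eLpNorm (fun x => ∫ τ, g τ x ∂μ) 2 volume
      = (∫⁻ x, (‖∫ τ, g τ x ∂μ‖₊ : ℝ≥0∞) ^ (2 : ℝ)) ^ (1 / 2 : ℝ) := by
        rw [eLpNorm_eq_lintegral_rpow_enorm_toReal (by norm_num) (by norm_num)]
        norm_num
        rfl
    _ ≤ (∫⁻ x, (∫⁻ τ, G τ x ∂μ) ^ (2 : ℝ)) ^ (1 / 2 : ℝ) := by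
        apply ENNReal.rpow_le_rpow _ (by norm_num)
        refine lintegral_mono fun x => ?_
        exact ENNReal.rpow_le_rpow (enorm_integral_le_lintegral_enorm _) (by norm_num)
    _ ≤ ((∫⁻ τ, N τ ∂μ) ^ (2 : ℝ)) ^ (1 / 2 : ℝ) := ENNReal.rpow_le_rpow key (by norm_num)
    _ = ∫⁻ τ, N τ ∂μ := by rw [← ENNReal.rpow_mul]; norm_num
    _ = ∫⁻ τ, eLpNorm (g τ) 2 volume ∂μ := lintegral_congr fun τ => by rw [hNe]


/-- L² estimate for the right inverse near a simple zero of `p` translated to `0`: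
if `‖f(τ,·)‖_{L²} ≤ A` for `τ ∈ [0,θ]` (with `τ ↦ f(τ,·)` continuous into `L²`), then
`u(t,·) = ∫_t^θ f(τ, · + c ln(τ/t) + M(t,τ)) σ(τ)/τ dτ` satisfies
`‖u(t,·)‖_{L²} ≤ (sup_{[0,θ]}|σ|)·A·ln(θ/t)` for `t ∈ (0,θ]`. -/
theorem stmt_14 (θ : ℝ) (hθ : 0 < θ) (c : ℝ)
    (σ : ℝ → ℝ) (hσ : ContinuousOn σ (Icc 0 θ))
    (M : ℝ × ℝ → ℝ) (hM : ContinuousOn M {pt : ℝ × ℝ | 0 ≤ pt.1 ∧ pt.1 ≤ pt.2 ∧ pt.2 ≤ θ})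
    (f : ℝ × ℝ → ℝ) (hmeas : Measurable f)
    (hL2 : ∀ τ ∈ Icc (0 : ℝ) θ, MemLp (fun x => f (τ, x)) 2 volume)
    (A : ℝ) (hA0 : 0 ≤ A)
    (hA : ∀ τ ∈ Icc (0 : ℝ) θ, eLpNorm (fun x => f (τ, x)) 2 volume ≤ ENNReal.ofReal A)
    (hcont : ∀ τ₀ ∈ Icc (0 : ℝ) θ,
      Tendsto (fun τ => eLpNorm (fun x => f (τ, x) - f (τ₀, x)) 2 volume)
        (nhdsWithin τ₀ (Icc 0 θ)) (nhds 0))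
    (u : ℝ → ℝ → ℝ)
    (hu : ∀ t x : ℝ, u t x = ∫ τ in t..θ, f (τ, x + c * Real.log (τ / t) + M (t, τ)) * (σ τ / τ)) :
    ∀ t ∈ Ioc (0 : ℝ) θ,
      eLpNorm (u t) 2 volume ≤
        ENNReal.ofReal (sSup ((fun τ => |σ τ|) '' Icc 0 θ) * A * Real.log (θ / t)) := by
  intro t ht
  obtain ⟨ht0, htθ⟩ := ht
  set S := sSup ((fun τ => |σ τ|) '' Icc 0 θ) with hSdef
  -- clamped versions of M and σ, continuous everywhere
  have hclampM : Continuous fun τ : ℝ => M (t, min (max τ t) θ) := by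
    apply hM.comp_continuous
    · exact continuous_const.prodMk ((continuous_id.max continuous_const).min continuous_const)
    · intro τ
      exact ⟨ht0.le, le_min (le_max_right _ _) htθ, min_le_right _ _⟩
  have hσc : Continuous fun τ : ℝ => σ (min (max τ 0) θ) := by
    apply hσ.comp_continuous
    · exact (continuous_id.max continuous_const).min continuous_const
    · intro τ
      exact ⟨le_min (le_max_right _ _) hθ.le, min_le_right _ _⟩
  set φ : ℝ → ℝ := fun τ => c * Real.log (τ / t) + M (t, min (max τ t) θ) with hφ
  have hφm : Measurable φ :=
    ((Real.measurable_log.comp (measurable_id.div_const t)).const_mul c).add hclampM.measurable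
  set g : ℝ → ℝ → ℝ := fun τ x => f (τ, x + φ τ) * (σ (min (max τ 0) θ) / τ) with hg
  have hgm : Measurable fun p : ℝ × ℝ => g p.1 p.2 :=
    (hmeas.comp (measurable_fst.prodMk (measurable_snd.add (hφm.comp measurable_fst)))).mul
      ((hσc.measurable.comp measurable_fst).div measurable_fst)
  have hueq : u t = fun x => ∫ τ, g τ x ∂(volume.restrict (Ioc t θ)) := by
    funext x
    rw [hu, intervalIntegral.integral_of_le htθ]
    refine setIntegral_congr_fun measurableSet_Ioc fun τ hτ => ?_
    have e1 : min (max τ t) θ = τ := by rw [max_eq_left hτ.1.le, min_eq_left hτ.2]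
    have e2 : min (max τ 0) θ = τ := by rw [max_eq_left (ht0.trans hτ.1).le, min_eq_left hτ.2]
    simp only [hg, hφ, e1, e2, add_assoc]
  -- bounds on σ
  have hS : ∀ τ ∈ Icc (0 : ℝ) θ, |σ τ| ≤ S := by
    intro τ hτ
    refine le_csSup ?_ ⟨τ, hτ, rfl⟩
    exact (isCompact_Icc.image_of_continuousOn hσ.abs).bddAbove
  have hS0 : 0 ≤ S := (abs_nonneg _).trans (hS 0 ⟨le_refl 0, hθ.le⟩)
  -- per-τ bound on the L² norm of g τ
  have bound : ∀ τ ∈ Ioc t θ, eLpNorm (g τ) 2 volume ≤ ENNReal.ofReal (S * A / τ) := by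
    intro τ hτ
    have hτ0 : 0 < τ := ht0.trans hτ.1
    have hτΘ : τ ∈ Icc (0 : ℝ) θ := ⟨hτ0.le, hτ.2⟩
    have e2 : min (max τ 0) θ = τ := by rw [max_eq_left hτ0.le, min_eq_left hτ.2]
    have hsmul : g τ = (σ τ / τ) • fun x => f (τ, x + φ τ) := by
      funext x
      simp [hg, e2, smul_eq_mul, mul_comm]
    rw [hsmul, eLpNorm_const_smul]
    have htrans : eLpNorm (fun x => f (τ, x + φ τ)) 2 volume
        = eLpNorm (fun x => f (τ, x)) 2 volume := by
      exact eLpNorm_comp_measurePreserving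
        ((hmeas.comp (measurable_const.prodMk measurable_id)).aestronglyMeasurable)
        (measurePreserving_add_right volume (φ τ))
    rw [htrans]
    have h1 : (‖σ τ / τ‖₊ : ℝ≥0∞) ≤ ENNReal.ofReal (S / τ) := by
      rw [show (‖σ τ / τ‖₊ : ℝ≥0∞) = ‖σ τ / τ‖ₑ from rfl, Real.enorm_eq_ofReal_abs]
      apply ENNReal.ofReal_le_ofReal
      rw [abs_div, abs_of_pos hτ0]
      gcongr
      exact hS τ hτΘ
    calc (‖σ τ / τ‖₊ : ℝ≥0∞) • eLpNorm (fun x => f (τ, x)) 2 volume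
        ≤ ENNReal.ofReal (S / τ) * ENNReal.ofReal A := by
          exact mul_le_mul' h1 (hA τ hτΘ)
      _ = ENNReal.ofReal (S * A / τ) := by
          rw [← ENNReal.ofReal_mul (by positivity)]
          congr 1
          ring
  -- assemble
  rw [hueq]
  refine le_trans (minkowski_two _ hgm) ?_
  have step : ∫⁻ τ in Ioc t θ, eLpNorm (g τ) 2 volume
      ≤ ∫⁻ τ in Ioc t θ, ENNReal.ofReal (S * A / τ) := by
    refine setLIntegral_mono (ENNReal.measurable_ofReal.comp
      (measurable_const.div measurable_id)) bound
  refine step.trans ?_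
  have hint : IntegrableOn (fun τ => S * A / τ) (Ioc t θ) := by
    have hc : ContinuousOn (fun τ : ℝ => S * A / τ) (Icc t θ) :=
      continuousOn_const.div continuousOn_id
        (fun τ hτ => ne_of_gt (lt_of_lt_of_le ht0 hτ.1))
    exact (hc.integrableOn_Icc).mono_set Ioc_subset_Icc_self
  have hnn : 0 ≤ᵐ[volume.restrict (Ioc t θ)] fun τ => S * A / τ := by
    refine (ae_restrict_iff' measurableSet_Ioc).2 (ae_of_all _ fun τ hτ => ?_)
    have : 0 < τ := ht0.trans hτ.1
    positivity
  rw [← ofReal_integral_eq_lintegral_ofReal hint hnn]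
  apply ENNReal.ofReal_le_ofReal
  have : ∫ τ in Ioc t θ, S * A / τ = S * A * Real.log (θ / t) := by
    rw [← intervalIntegral.integral_of_le htθ]
    have h2 : ∫ τ in t..θ, S * A / τ = S * A * ∫ τ in t..θ, 1 / τ := by
      rw [← intervalIntegral.integral_const_mul]
      congr 1
      funext τ
      ring
    rw [h2, integral_one_div]
    intro h0
    rw [Set.uIcc_of_le htθ] at h0
    exact absurd h0.1 (not_le.mpr ht0)
  rw [this]
end

section
/- Let Ω ⊆ ℝⁿ be open, δ > 0, and set Ω_δ = (−δ,δ) × Ω, Ω_δ⁺ = (0,δ) × Ω, Ω_δ⁻ = (−δ,0) × Ω. Let a, a_1, ..., a_n, b and f be infinitely differentiable real-valued functions on Ω_δ, with a(0,x) = 0 for all x ∈ Ω. Suppose u⁺ ∈ C^∞(Ω_δ⁺) and u⁻ ∈ C^∞(Ω_δ⁻) satisfy the equation a·∂_t u^± + Σ_{j=1}^n a_j·∂_{x_j} u^± + b·u^± = f pointwise on Ω_δ⁺ and Ω_δ⁻ respectively, that u^± is integrable on (0,±δ) × K for every compact K ⊂ Ω, and that for every infinitely differentiable compactly supported φ : Ω_δ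 → ℝ one has lim_{t→0⁺} ∫_Ω a(t,x)·u⁺(t,x)·φ(t,x) dx = 0 and lim_{t→0⁻} ∫_Ω a(t,x)·u⁻(t,x)·φ(t,x) dx = 0. Then the glued function u (equal to u⁺ on Ω_δ⁺ and u⁻ on Ω_δ⁻) is a distributional solution of the equation on all of Ω_δ: for every infinitely differentiable compactly supported φ : Ω_δ → ℝ, ∫_{Ω_δ⁺} u⁺·ψ + ∫_{Ω_δ⁻} u⁻·ψ = ∫_{Ω_δ} f·φ, where ψ = −∂_t(a·φ) − Σ_{j=1}^n ∂_{x_j}(a_j·φ) + b·φ. -/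
open Set MeasureTheory Filter

namespace S15

noncomputable def eL (n : ℕ) : (ℝ × (Fin n → ℝ)) ≃L[ℝ] (Fin (n+1) → ℝ) :=
  LinearEquiv.toContinuousLinearEquiv
  { toFun := fun p => Fin.cons p.1 p.2
    invFun := fun v => (v 0, fun j => v j.succ)
    map_add' := fun p q => by
      funext i
      refine Fin.cases ?_ (fun j => ?_) i <;> simp
    map_smul' := fun c p => by
      funext i
      refine Fin.cases ?_ (fun j => ?_) i <;> simp
    left_inv := fun p => by simp
    right_inv := fun v => by
      funext i
      refine Fin.cases ?_ (fun j => ?_) i <;> simp }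

lemma eL_apply {n : ℕ} (p : ℝ × (Fin n → ℝ)) : eL n p = Fin.cons p.1 p.2 := rfl

lemma eL_symm_apply {n : ℕ} (v : Fin (n+1) → ℝ) :
    (eL n).symm v = (v 0, fun j => v j.succ) := rfl

lemma eL_ord {n : ℕ} (x y : ℝ × (Fin n → ℝ)) : eL n x ≤ eL n y ↔ x ≤ y := by
  simp only [eL_apply, Pi.le_def, Prod.le_def, Fin.forall_fin_succ, Fin.cons_zero, Fin.cons_succ]

lemma eL_vol {n : ℕ} : MeasurePreserving (eL n) volume volume := by
  have h := (volume_preserving_piFinSuccAbove (fun _ : Fin (n+1) => ℝ) 0).symm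
  have he : ⇑(MeasurableEquiv.piFinSuccAbove (fun _ : Fin (n+1) => ℝ) 0).symm = ⇑(eL n) := by
    funext p
    show (Fin.insertNthEquiv (fun _ : Fin (n+1) => ℝ) 0) p = Fin.cons p.1 p.2
    simp only [Fin.insertNthEquiv_zero]
    rfl
  rwa [he] at h

lemma eL_symm_single_zero {n : ℕ} :
    (eL n).symm (Pi.single (0 : Fin (n+1)) (1:ℝ)) = ((1:ℝ), 0) := by
  rw [eL_symm_apply]
  refine Prod.ext (by simp) ?_
  funext j
  dsimp only
  simp [Pi.single_eq_of_ne (Fin.succ_ne_zero j)]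

lemma eL_symm_single_succ {n : ℕ} (j : Fin n) :
    (eL n).symm (Pi.single (j.succ : Fin (n+1)) (1:ℝ)) = ((0:ℝ), Pi.single j 1) := by
  rw [eL_symm_apply]
  refine Prod.ext ?_ ?_
  · dsimp only
    simp [Pi.single_eq_of_ne (Fin.succ_ne_zero j).symm]
  · funext k
    dsimp only
    rcases eq_or_ne k j with rfl | hk
    · simp
    · simp [Pi.single_eq_of_ne hk, Pi.single_eq_of_ne (fun h => hk (Fin.succ_injective _ h))]

lemma eL_symm_insertNth_zero {n : ℕ} (c : ℝ) (x : Fin n → ℝ) :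
    (eL n).symm ((0 : Fin (n+1)).insertNth c x) = (c, x) := by
  rw [eL_symm_apply]
  refine Prod.ext (by simp) ?_
  funext j
  dsimp only
  have h : (j.succ : Fin (n+1)) = (0 : Fin (n+1)).succAbove j := by
    rw [Fin.succAbove_zero]
  rw [h, Fin.insertNth_apply_succAbove]


variable {n : ℕ}

lemma integrableOn_of_csupp {g : ℝ × (Fin n → ℝ) → ℝ} {K S : Set (ℝ × (Fin n → ℝ))}
    (hK : IsCompact K) (hSm : MeasurableSet S) (hc : ContinuousOn g K)
    (h0 : ∀ z ∈ S, z ∉ K → g z = 0) : IntegrableOn g S := by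
  have hKint : IntegrableOn g K := hc.integrableOn_compact hK
  have hind : S.indicator g = (S ∩ K).indicator g := by
    funext z
    by_cases hzS : z ∈ S
    · by_cases hzK : z ∈ K
      · simp [indicator, hzS, hzK]
      · simp [indicator, hzS, hzK, h0 z hzS hzK]
    · simp [indicator, hzS, fun h : z ∈ S ∩ K => hzS h.1]
  rw [← integrable_indicator_iff hSm, hind,
    integrable_indicator_iff (hSm.inter hK.measurableSet)]
  exact hKint.mono_set inter_subset_right

lemma tendsto_shrink_right {g : ℝ × (Fin n → ℝ) → ℝ} {δ : ℝ} {Ω : Set (Fin n → ℝ)}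
    (hΩ : MeasurableSet Ω) (hg : IntegrableOn g (Ioo 0 δ ×ˢ Ω)) :
    Tendsto (fun s => ∫ z in Ioo s δ ×ˢ Ω, g z) (nhdsWithin 0 (Ioi 0))
      (nhds (∫ z in Ioo 0 δ ×ˢ Ω, g z)) := by
  have hSm : MeasurableSet (Ioo (0:ℝ) δ ×ˢ Ω) := measurableSet_Ioo.prod hΩ
  rw [tendsto_iff_seq_tendsto]
  intro v hv
  have hv0 : Tendsto v atTop (nhds 0) := hv.mono_right nhdsWithin_le_nhds
  have hvpos : ∀ᶠ k in atTop, 0 < v k := hv.eventually self_mem_nhdsWithin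
  have hmeasB : ∀ s : ℝ, MeasurableSet {z : ℝ × (Fin n → ℝ) | s < z.1} := fun s =>
    measurable_fst measurableSet_Ioi
  have hset : ∀ s : ℝ, 0 < s →
      Ioo s δ ×ˢ Ω = (Ioo 0 δ ×ˢ Ω) ∩ {z : ℝ × (Fin n → ℝ) | s < z.1} := by
    intro s hs
    ext z
    simp only [mem_prod, mem_Ioo, mem_inter_iff, mem_setOf_eq]
    constructor
    · rintro ⟨⟨h1, h2⟩, h3⟩; exact ⟨⟨⟨hs.trans h1, h2⟩, h3⟩, h1⟩
    · rintro ⟨⟨⟨_, h2⟩, h3⟩, h4⟩; exact ⟨⟨h4, h2⟩, h3⟩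
  have key : Tendsto (fun k => ∫ z in Ioo 0 δ ×ˢ Ω,
      ({z : ℝ × (Fin n → ℝ) | v k < z.1}).indicator g z) atTop
      (nhds (∫ z in Ioo 0 δ ×ˢ Ω, g z)) := by
    refine tendsto_integral_of_dominated_convergence (fun z => ‖g z‖)
      (fun k => hg.aestronglyMeasurable.indicator (hmeasB (v k))) hg.norm
      (fun k => Eventually.of_forall (fun z => norm_indicator_le_norm_self g z)) ?_
    filter_upwards [ae_restrict_mem hSm] with z hz
    have hz1 : 0 < z.1 := hz.1.1
    have : ∀ᶠ k in atTop, v k < z.1 := hv0.eventually (Iio_mem_nhds hz1)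
    refine tendsto_nhds_of_eventually_eq ?_
    filter_upwards [this] with k hk
    simp [indicator, hk]
  refine (key.congr' ?_)
  filter_upwards [hvpos] with k hk
  rw [setIntegral_indicator (hmeasB (v k)), ← hset (v k) hk]
  simp only [Function.comp_apply]

lemma tendsto_shrink_left {g : ℝ × (Fin n → ℝ) → ℝ} {c : ℝ} {Ω : Set (Fin n → ℝ)}
    (hΩ : MeasurableSet Ω) (hg : IntegrableOn g (Ioo c 0 ×ˢ Ω)) :
    Tendsto (fun s => ∫ z in Ioo c s ×ˢ Ω, g z) (nhdsWithin 0 (Iio 0))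
      (nhds (∫ z in Ioo c 0 ×ˢ Ω, g z)) := by
  have hSm : MeasurableSet (Ioo c (0:ℝ) ×ˢ Ω) := measurableSet_Ioo.prod hΩ
  rw [tendsto_iff_seq_tendsto]
  intro v hv
  have hv0 : Tendsto v atTop (nhds 0) := hv.mono_right nhdsWithin_le_nhds
  have hvneg : ∀ᶠ k in atTop, v k < 0 := hv.eventually self_mem_nhdsWithin
  have hmeasB : ∀ s : ℝ, MeasurableSet {z : ℝ × (Fin n → ℝ) | z.1 < s} := fun s =>
    measurable_fst measurableSet_Iio
  have hset : ∀ s : ℝ, s < 0 →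
      Ioo c s ×ˢ Ω = (Ioo c 0 ×ˢ Ω) ∩ {z : ℝ × (Fin n → ℝ) | z.1 < s} := by
    intro s hs
    ext z
    simp only [mem_prod, mem_Ioo, mem_inter_iff, mem_setOf_eq]
    constructor
    · rintro ⟨⟨h1, h2⟩, h3⟩; exact ⟨⟨⟨h1, h2.trans hs⟩, h3⟩, h2⟩
    · rintro ⟨⟨⟨h1, _⟩, h3⟩, h4⟩; exact ⟨⟨h1, h4⟩, h3⟩
  have key : Tendsto (fun k => ∫ z in Ioo c 0 ×ˢ Ω,
      ({z : ℝ × (Fin n → ℝ) | z.1 < v k}).indicator g z) atTop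
      (nhds (∫ z in Ioo c 0 ×ˢ Ω, g z)) := by
    refine tendsto_integral_of_dominated_convergence (fun z => ‖g z‖)
      (fun k => hg.aestronglyMeasurable.indicator (hmeasB (v k))) hg.norm
      (fun k => Eventually.of_forall (fun z => norm_indicator_le_norm_self g z)) ?_
    filter_upwards [ae_restrict_mem hSm] with z hz
    have hz1 : z.1 < 0 := hz.1.2
    have : ∀ᶠ k in atTop, z.1 < v k := hv0.eventually (Ioi_mem_nhds hz1)
    refine tendsto_nhds_of_eventually_eq ?_
    filter_upwards [this] with k hk
    simp [indicator, hk]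
  refine (key.congr' ?_)
  filter_upwards [hvneg] with k hk
  rw [setIntegral_indicator (hmeasB (v k)), ← hset (v k) hk]
  simp only [Function.comp_apply]


lemma key {n : ℕ} {Ω : Set (Fin n → ℝ)} (hΩ : IsOpen Ω) {δ : ℝ}
    {a b f : ℝ × (Fin n → ℝ) → ℝ} {aj : Fin n → ℝ × (Fin n → ℝ) → ℝ}
    (ha : ContDiffOn ℝ (⊤ : ℕ∞) a (Ioo (-δ) δ ×ˢ Ω))
    (haj : ∀ i : Fin n, ContDiffOn ℝ (⊤ : ℕ∞) (aj i) (Ioo (-δ) δ ×ˢ Ω))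
    (hb : ContDiffOn ℝ (⊤ : ℕ∞) b (Ioo (-δ) δ ×ˢ Ω))
    (hf : ContDiffOn ℝ (⊤ : ℕ∞) f (Ioo (-δ) δ ×ˢ Ω))
    {c d : ℝ} (hsub : Ioo c d ⊆ Ioo (-δ) δ)
    {u : ℝ × (Fin n → ℝ) → ℝ} (hu : ContDiffOn ℝ (⊤ : ℕ∞) u (Ioo c d ×ˢ Ω))
    (heq : ∀ z ∈ Ioo c d ×ˢ Ω,
      a z * fderiv ℝ u z (1, 0)
        + (∑ i : Fin n, aj i z * fderiv ℝ u z (0, Pi.single i 1))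
        + b z * u z = f z)
    {φ : ℝ × (Fin n → ℝ) → ℝ} (hφ : ContDiff ℝ (⊤ : ℕ∞) φ)
    (hφK : HasCompactSupport φ)
    (hφs : tsupport φ ⊆ Ioo (-δ) δ ×ˢ Ω)
    {R : ℝ} (hR0 : 0 ≤ R) (hR : ∀ z ∈ tsupport φ, ‖z.2‖ < R)
    {s₁ s₂ : ℝ} (hc1 : c < s₁) (h12 : s₁ ≤ s₂) (h2d : s₂ < d) :
    ∫ z in Ioo s₁ s₂ ×ˢ Ω, u z *
        (-(fderiv ℝ (fun w => a w * φ w) z (1, 0))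
          - (∑ i : Fin n, fderiv ℝ (fun w => aj i w * φ w) z (0, Pi.single i 1))
          + b z * φ z)
      = (∫ z in Ioo s₁ s₂ ×ˢ Ω, f z * φ z)
        + (∫ x in Ω, a (s₁, x) * u (s₁, x) * φ (s₁, x))
        - (∫ x in Ω, a (s₂, x) * u (s₂, x) * φ (s₂, x)) := by
  classical
  set K := tsupport φ with hK
  set W : Set (ℝ × (Fin n → ℝ)) := (Ioo c d ∩ Ioo (-δ) δ) ×ˢ Ω with hWdef
  have hWopen : IsOpen W := (isOpen_Ioo.inter isOpen_Ioo).prod hΩ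
  have hWcd : W ⊆ Ioo c d ×ˢ Ω := prod_mono (inter_subset_left) le_rfl
  have hWδ : W ⊆ Ioo (-δ) δ ×ˢ Ω := prod_mono (inter_subset_right) le_rfl
  have hopencd : IsOpen (Ioo c d ×ˢ Ω) := isOpen_Ioo.prod hΩ
  have hopenδ : IsOpen (Ioo (-δ) δ ×ˢ Ω) := isOpen_Ioo.prod hΩ
  have hIccsub : Icc s₁ s₂ ⊆ Ioo c d := Icc_subset_Ioo hc1 h2d
  have hzW : ∀ z : ℝ × (Fin n → ℝ), z.1 ∈ Icc s₁ s₂ → z ∈ K → z ∈ W := by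
    intro z hz1 hzK
    have hΩz : z.2 ∈ Ω := (hφs hzK).2
    exact ⟨⟨hIccsub hz1, hsub (hIccsub hz1)⟩, hΩz⟩
  set A : ℝ × (Fin n → ℝ) → ℝ := fun z => a z * u z * φ z with hA
  set AJ : Fin n → ℝ × (Fin n → ℝ) → ℝ := fun j z => aj j z * u z * φ z with hAJ
  set F : Fin (n+1) → ℝ × (Fin n → ℝ) → ℝ := Fin.cons A AJ with hF
  have hF0 : F 0 = A := rfl
  have hFsucc : ∀ j : Fin n, F j.succ = AJ j := fun j => by simp [hF]
  set DF : ℝ × (Fin n → ℝ) → ℝ := fun z =>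
    fderiv ℝ A z (1, 0) + ∑ j : Fin n, fderiv ℝ (AJ j) z (0, Pi.single j 1) with hDF
  have hφc : ContDiffOn ℝ (⊤ : ℕ∞) φ W := hφ.contDiffOn
  have hsmW : ∀ i, ContDiffOn ℝ (⊤ : ℕ∞) (F i) W := by
    intro i
    refine Fin.cases ?_ (fun j => ?_) i
    · rw [hF0]
      exact ((ha.mono hWδ).mul (hu.mono hWcd)).mul hφc
    · rw [hFsucc j]
      exact (((haj j).mono hWδ).mul (hu.mono hWcd)).mul hφc
  have hzero : ∀ i w, φ w = 0 → F i w = 0 := by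
    intro i w hw
    refine Fin.cases ?_ (fun j => ?_) i
    · rw [hF0]; simp [hA, hw]
    · rw [hFsucc j]; simp [hAJ, hw]
  have hFev : ∀ i, ∀ z ∉ K, F i =ᶠ[nhds z] (fun _ => (0:ℝ)) := by
    intro i z hz
    filter_upwards [(isClosed_tsupport φ).isOpen_compl.mem_nhds hz] with w hw
    exact hzero i w (image_eq_zero_of_notMem_tsupport hw)
  have hcontA : ∀ i, ∀ z : ℝ × (Fin n → ℝ), z.1 ∈ Icc s₁ s₂ → ContinuousAt (F i) z := by
    intro i z hz1
    by_cases hzK : z ∈ K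
    · exact ((hsmW i).contDiffAt (hWopen.mem_nhds (hzW z hz1 hzK))).continuousAt
    · exact (hFev i z hzK).continuousAt
  have hdiffA : ∀ i, ∀ z : ℝ × (Fin n → ℝ), z.1 ∈ Icc s₁ s₂ → DifferentiableAt ℝ (F i) z := by
    intro i z hz1
    by_cases hzK : z ∈ K
    · exact ((hsmW i).contDiffAt (hWopen.mem_nhds (hzW z hz1 hzK))).differentiableAt (by simp)
    · exact (differentiableAt_const (0:ℝ)).congr_of_eventuallyEq (hFev i z hzK)
  have hDF0 : ∀ z ∉ K, DF z = 0 := by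
    intro z hz
    have h0 : ∀ i, fderiv ℝ (F i) z = 0 := by
      intro i
      rw [(hFev i z hz).fderiv_eq]
      exact fderiv_const_apply 0
    have h0A : fderiv ℝ A z = 0 := by rw [← hF0]; exact h0 0
    have h0J : ∀ j, fderiv ℝ (AJ j) z = 0 := fun j => by rw [← hFsucc j]; exact h0 j.succ
    simp [hDF, h0A, h0J]
  have hDFcont : ∀ z : ℝ × (Fin n → ℝ), z.1 ∈ Icc s₁ s₂ → ContinuousAt DF z := by
    intro z hz1
    by_cases hzK : z ∈ K
    · have hmem := hWopen.mem_nhds (hzW z hz1 hzK)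
      have hterm : ∀ i, ContinuousAt (fun w => fderiv ℝ (F i) w
          ((eL n).symm (Pi.single i 1))) z := by
        intro i
        have hfc : ContinuousOn (fderiv ℝ (F i)) W :=
          (hsmW i).continuousOn_fderiv_of_isOpen hWopen (mod_cast le_top)
        exact ((ContinuousLinearMap.apply ℝ ℝ
          ((eL n).symm (Pi.single i 1))).continuous.continuousAt).comp
          (hfc.continuousAt hmem)
      have h0 : ContinuousAt (fun w => fderiv ℝ A w ((1:ℝ), (0 : Fin n → ℝ))) z := by
        have := hterm 0
        rwa [hF0, eL_symm_single_zero] at this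
      have hsum : ContinuousAt (fun w => ∑ j : Fin n,
          fderiv ℝ (AJ j) w ((0:ℝ), Pi.single j 1)) z := by
        apply tendsto_finset_sum
        intro j _
        have := hterm j.succ
        rwa [hFsucc j, eL_symm_single_succ] at this
      exact h0.add hsum
    · have : DF =ᶠ[nhds z] (fun _ => (0:ℝ)) := by
        filter_upwards [(isClosed_tsupport φ).isOpen_compl.mem_nhds hzK] with w hw
        exact hDF0 w hw
      exact this.continuousAt
  -- the box
  set p : ℝ × (Fin n → ℝ) := (s₁, fun _ => -R) with hp
  set q : ℝ × (Fin n → ℝ) := (s₂, fun _ => R) with hq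
  have hle : p ≤ q := ⟨h12, fun j => by simp [hp, hq]; linarith⟩
  have hIcc1 : ∀ z ∈ Icc p q, z.1 ∈ Icc s₁ s₂ := fun z hz => ⟨hz.1.1, hz.2.1⟩
  have hdiv := integral_divergence_of_hasFDerivAt_off_countable_of_equiv
    (eL n) eL_ord eL_vol F (fun i z => fderiv ℝ (F i) z) ∅ countable_empty p q hle
    (fun i z hz => (hcontA i z (hIcc1 z hz)).continuousWithinAt)
    (fun z hz i => (hdiffA i z (hIcc1 z (interior_subset hz.1))).hasFDerivAt)
    DF
    (by
      intro z
      simp only [hDF]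
      rw [Fin.sum_univ_succ, hF0, eL_symm_single_zero]
      congr 1
      exact Finset.sum_congr rfl fun j _ => by rw [hFsucc j, eL_symm_single_succ])
    ((continuousOn_of_forall_continuousAt
        (fun z hz => hDFcont z (hIcc1 z hz))).integrableOn_compact isCompact_Icc)
  -- compute the faces
  have habs : ∀ (x : Fin n → ℝ) (j : Fin n), |x j| ≤ ‖x‖ := by
    intro x j
    have := norm_le_pi_norm x j
    rwa [Real.norm_eq_abs] at this
  have hbox : ∀ s : ℝ, (∫ x in Icc (fun _ : Fin n => -R) (fun _ : Fin n => R), A (s, x))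
      = ∫ x in Ω, a (s, x) * u (s, x) * φ (s, x) := by
    intro s
    have h1 : ∀ x, x ∉ (Icc (fun _ : Fin n => -R) (fun _ : Fin n => R)) → A (s, x) = 0 := by
      intro x hx
      have hxK : (s, x) ∉ K := by
        intro hmem
        apply hx
        have hn := hR _ hmem
        constructor
        · intro j
          have := habs x j
          simp only [abs_le] at this ⊢
          linarith [this.1]
        · intro j
          have := habs x j
          simp only [abs_le] at this ⊢
          linarith [this.2]
      simp [hA, image_eq_zero_of_notMem_tsupport hxK]
    have h2 : ∀ x, x ∉ Ω → A (s, x) = 0 := by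
      intro x hx
      have hxK : (s, x) ∉ K := fun hmem => hx (hφs hmem).2
      simp [hA, image_eq_zero_of_notMem_tsupport hxK]
    rw [setIntegral_eq_integral_of_forall_compl_eq_zero h1,
      ← setIntegral_eq_integral_of_forall_compl_eq_zero h2]
  have hsuccterm : ∀ (j : Fin n) (C : ℝ), |C| = R → ∀ x : Fin n → ℝ,
      F j.succ ((eL n).symm ((j.succ).insertNth C x)) = 0 := by
    intro j C hC x
    set w := (eL n).symm ((j.succ).insertNth C x) with hw
    have hw2 : w.2 j = C := by
      rw [hw, eL_symm_apply]
      dsimp only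
      simp
    have hφw : φ w = 0 := by
      by_contra h
      have hwK : w ∈ K := subset_closure (by simpa [Function.mem_support] using h)
      have h1 := hR w hwK
      have h2 : R ≤ ‖w.2‖ := by
        calc R = |w.2 j| := by rw [hw2, hC]
        _ ≤ ‖w.2‖ := habs w.2 j
      linarith
    rw [hFsucc j]
    simp [hAJ, hφw]
  have hfaces : (∑ i : Fin (n+1),
      ((∫ x in Icc ((eL n) p ∘ i.succAbove) ((eL n) q ∘ i.succAbove),
          F i ((eL n).symm (i.insertNth ((eL n) q i) x)))
        - ∫ x in Icc ((eL n) p ∘ i.succAbove) ((eL n) q ∘ i.succAbove),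
            F i ((eL n).symm (i.insertNth ((eL n) p i) x))))
      = (∫ x in Ω, a (s₂, x) * u (s₂, x) * φ (s₂, x))
        - ∫ x in Ω, a (s₁, x) * u (s₁, x) * φ (s₁, x) := by
    have hlo : (eL n) p ∘ (0 : Fin (n+1)).succAbove = (fun _ : Fin n => -R) := by
      funext j
      simp only [Function.comp_apply, Fin.succAbove_zero, eL_apply, hp]
      exact Fin.cons_succ _ _ _
    have hhi : (eL n) q ∘ (0 : Fin (n+1)).succAbove = (fun _ : Fin n => R) := by
      funext j
      simp only [Function.comp_apply, Fin.succAbove_zero, eL_apply, hq]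
      exact Fin.cons_succ _ _ _
    have hq0 : (eL n) q 0 = s₂ := by rw [eL_apply]; exact Fin.cons_zero _ _
    have hp0 : (eL n) p 0 = s₁ := by rw [eL_apply]; exact Fin.cons_zero _ _
    rw [Fin.sum_univ_succ, hlo, hhi, hq0, hp0]
    have hzero_succ : ∀ i : Fin n,
        ((∫ x in Icc ((eL n) p ∘ (Fin.succ i).succAbove) ((eL n) q ∘ (Fin.succ i).succAbove),
            F i.succ ((eL n).symm ((Fin.succ i).insertNth ((eL n) q i.succ) x)))
          - ∫ x in Icc ((eL n) p ∘ (Fin.succ i).succAbove) ((eL n) q ∘ (Fin.succ i).succAbove),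
              F i.succ ((eL n).symm ((Fin.succ i).insertNth ((eL n) p i.succ) x))) = 0 := by
      intro i
      have hqi : (eL n) q i.succ = R := by rw [eL_apply]; exact Fin.cons_succ _ _ _
      have hpi : (eL n) p i.succ = -R := by rw [eL_apply]; exact Fin.cons_succ _ _ _
      rw [hqi, hpi]
      have hfront : (∫ x in Icc ((eL n) p ∘ (Fin.succ i).succAbove)
          ((eL n) q ∘ (Fin.succ i).succAbove),
          F i.succ ((eL n).symm ((Fin.succ i).insertNth R x))) = 0 := by
        rw [setIntegral_congr_fun measurableSet_Icc
          (fun x _ => hsuccterm i R (abs_of_nonneg hR0) x)]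
        simp
      have hback : (∫ x in Icc ((eL n) p ∘ (Fin.succ i).succAbove)
          ((eL n) q ∘ (Fin.succ i).succAbove),
          F i.succ ((eL n).symm ((Fin.succ i).insertNth (-R) x))) = 0 := by
        rw [setIntegral_congr_fun measurableSet_Icc
          (fun x _ => hsuccterm i (-R) (by rw [abs_neg, abs_of_nonneg hR0]) x)]
        simp
      rw [hfront, hback, sub_zero]
    rw [Finset.sum_congr rfl (fun i _ => hzero_succ i), Finset.sum_const, smul_zero, add_zero]
    have hint0 : ∀ s : ℝ, (∫ x in Icc (fun _ : Fin n => -R) (fun _ : Fin n => R),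
        F 0 ((eL n).symm ((0 : Fin (n+1)).insertNth s x)))
        = ∫ x in Ω, a (s, x) * u (s, x) * φ (s, x) := by
      intro s
      rw [← hbox s]
      apply setIntegral_congr_fun measurableSet_Icc
      intro x _
      show F 0 ((eL n).symm ((0 : Fin (n+1)).insertNth s x)) = A (s, x)
      rw [hF0, eL_symm_insertNth_zero]
    rw [hint0 s₂, hint0 s₁]
  rw [hfaces] at hdiv
  -- pointwise identity
  have hSm : MeasurableSet (Ioo s₁ s₂ ×ˢ Ω) := measurableSet_Ioo.prod hΩ.measurableSet
  have hptw : ∀ z ∈ Ioo s₁ s₂ ×ˢ Ω, u z *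
      (-(fderiv ℝ (fun w => a w * φ w) z (1, 0))
        - (∑ i : Fin n, fderiv ℝ (fun w => aj i w * φ w) z (0, Pi.single i 1))
        + b z * φ z) = f z * φ z - DF z := by
    rintro z ⟨hz1, hz2⟩
    have hzcd : z ∈ Ioo c d ×ˢ Ω := ⟨hIccsub (Ioo_subset_Icc_self hz1), hz2⟩
    have hzδ : z ∈ Ioo (-δ) δ ×ˢ Ω := ⟨hsub hzcd.1, hz2⟩
    have da : DifferentiableAt ℝ a z :=
      (ha.contDiffAt (hopenδ.mem_nhds hzδ)).differentiableAt (by simp)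
    have daj : ∀ j, DifferentiableAt ℝ (aj j) z := fun j =>
      ((haj j).contDiffAt (hopenδ.mem_nhds hzδ)).differentiableAt (by simp)
    have du : DifferentiableAt ℝ u z :=
      (hu.contDiffAt (hopencd.mem_nhds hzcd)).differentiableAt (by simp)
    have dφ : DifferentiableAt ℝ φ z :=
      (hφ.differentiable (by simp)).differentiableAt
    have hmul1 : fderiv ℝ A z = (a z * u z) • fderiv ℝ φ z
        + φ z • fderiv ℝ (fun w => a w * u w) z := by
      rw [hA]; exact fderiv_mul (da.mul du) dφ
    have hmul2 : fderiv ℝ (fun w => a w * u w) z = a z • fderiv ℝ u z + u z • fderiv ℝ a z :=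
      fderiv_mul da du
    have hmul3 : fderiv ℝ (fun w => a w * φ w) z = a z • fderiv ℝ φ z + φ z • fderiv ℝ a z :=
      fderiv_mul da dφ
    have e0 : fderiv ℝ A z (1, 0) = u z * fderiv ℝ (fun w => a w * φ w) z (1, 0)
        + φ z * (a z * fderiv ℝ u z (1, 0)) := by
      simp only [hmul1, hmul2, hmul3, ContinuousLinearMap.add_apply,
        ContinuousLinearMap.coe_smul', Pi.smul_apply, smul_eq_mul]
      ring
    have ej : ∀ j : Fin n, fderiv ℝ (AJ j) z (0, Pi.single j 1)
        = u z * fderiv ℝ (fun w => aj j w * φ w) z (0, Pi.single j 1)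
          + φ z * (aj j z * fderiv ℝ u z (0, Pi.single j 1)) := by
      intro j
      have hmj1 : fderiv ℝ (AJ j) z = (aj j z * u z) • fderiv ℝ φ z
          + φ z • fderiv ℝ (fun w => aj j w * u w) z := by
        rw [hAJ]; exact fderiv_mul ((daj j).mul du) dφ
      have hmj2 : fderiv ℝ (fun w => aj j w * u w) z
          = aj j z • fderiv ℝ u z + u z • fderiv ℝ (aj j) z := fderiv_mul (daj j) du
      have hmj3 : fderiv ℝ (fun w => aj j w * φ w) z
          = aj j z • fderiv ℝ φ z + φ z • fderiv ℝ (aj j) z := fderiv_mul (daj j) dφ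
      simp only [hmj1, hmj2, hmj3, ContinuousLinearMap.add_apply,
        ContinuousLinearMap.coe_smul', Pi.smul_apply, smul_eq_mul]
      ring
    have hsum : (∑ j : Fin n, fderiv ℝ (AJ j) z (0, Pi.single j 1))
        = u z * (∑ j : Fin n, fderiv ℝ (fun w => aj j w * φ w) z (0, Pi.single j 1))
          + φ z * (∑ j : Fin n, aj j z * fderiv ℝ u z (0, Pi.single j 1)) := by
      rw [Finset.mul_sum, Finset.mul_sum, ← Finset.sum_add_distrib]
      exact Finset.sum_congr rfl fun j _ => ej j
    have heqz := heq z hzcd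
    simp only [hDF]
    rw [e0, hsum, ← heqz]
    ring
  -- integrability and transfer
  have hKcomp : IsCompact K := hφK
  have hfφS : IntegrableOn (fun z => f z * φ z) (Ioo s₁ s₂ ×ˢ Ω) := by
    refine integrableOn_of_csupp hKcomp hSm ?_ ?_
    · intro z hz
      exact ((hf.contDiffAt (hopenδ.mem_nhds (hφs hz))).continuousAt.mul
        hφ.continuous.continuousAt).continuousWithinAt
    · intro z _ hzK
      simp [image_eq_zero_of_notMem_tsupport hzK]
  have hSC : ∀ z ∈ Ioo s₁ s₂ ×ˢ Ω, z ∉ Icc p q → DF z = 0 := by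
    intro z hzS hzI
    by_cases hzK : z ∈ K
    · exfalso
      apply hzI
      have hn := hR z hzK
      refine ⟨⟨hzS.1.1.le, fun j => ?_⟩, ⟨hzS.1.2.le, fun j => ?_⟩⟩
      · have := habs z.2 j
        simp only [abs_le] at this
        show -R ≤ z.2 j
        linarith [this.1]
      · have := habs z.2 j
        simp only [abs_le] at this
        show z.2 j ≤ R
        linarith [this.2]
    · exact hDF0 z hzK
  have hDFcontIcc : ContinuousOn DF (Icc p q) :=
    continuousOn_of_forall_continuousAt (fun z hz => hDFcont z (hIcc1 z hz))
  have hDFS : IntegrableOn DF (Ioo s₁ s₂ ×ˢ Ω) :=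
    integrableOn_of_csupp isCompact_Icc hSm hDFcontIcc hSC
  have hplanes : volume {z : ℝ × (Fin n → ℝ) | z.1 = s₁ ∨ z.1 = s₂} = 0 := by
    have hset : {z : ℝ × (Fin n → ℝ) | z.1 = s₁ ∨ z.1 = s₂}
        = ({s₁, s₂} : Set ℝ) ×ˢ (univ : Set (Fin n → ℝ)) := by
      ext z
      simp [mem_prod, Set.mem_insert_iff]
    rw [hset, Measure.volume_eq_prod, Measure.prod_prod,
      ((Set.finite_singleton s₂).insert s₁).measure_zero volume, zero_mul]
  have htrans : ∫ z in Ioo s₁ s₂ ×ˢ Ω, DF z = ∫ z in Icc p q, DF z := by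
    have h1 : ∫ z in Ioo s₁ s₂ ×ˢ Ω, DF z = ∫ z in (Ioo s₁ s₂ ×ˢ Ω) ∩ Icc p q, DF z :=
      setIntegral_eq_of_subset_of_forall_diff_eq_zero hSm inter_subset_left
        (fun z hz => hSC z hz.1 (fun hI => hz.2 ⟨hz.1, hI⟩))
    have h2 : ∫ z in Icc p q, DF z = ∫ z in (Ioo s₁ s₂ ×ˢ Ω) ∩ Icc p q, DF z := by
      apply setIntegral_eq_of_subset_of_ae_diff_eq_zero
        measurableSet_Icc.nullMeasurableSet inter_subset_right
      have hae : ∀ᵐ z : ℝ × (Fin n → ℝ),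
          z ∉ {z : ℝ × (Fin n → ℝ) | z.1 = s₁ ∨ z.1 = s₂} := by
        rw [← measure_eq_zero_iff_ae_notMem]
        exact hplanes
      filter_upwards [hae] with z hzP hzmem
      by_cases hzK : z ∈ K
      · exfalso
        apply hzmem.2
        have hz1 : z.1 ∈ Icc s₁ s₂ := hIcc1 z hzmem.1
        have hne1 : z.1 ≠ s₁ := fun h => hzP (Or.inl h)
        have hne2 : z.1 ≠ s₂ := fun h => hzP (Or.inr h)
        exact ⟨⟨⟨lt_of_le_of_ne hz1.1 (Ne.symm hne1), lt_of_le_of_ne hz1.2 hne2⟩,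
          (hφs hzK).2⟩, hzmem.1⟩
      · exact hDF0 z hzK
    rw [h1, h2]
  calc ∫ z in Ioo s₁ s₂ ×ˢ Ω, u z *
        (-(fderiv ℝ (fun w => a w * φ w) z (1, 0))
          - (∑ i : Fin n, fderiv ℝ (fun w => aj i w * φ w) z (0, Pi.single i 1))
          + b z * φ z)
      = ∫ z in Ioo s₁ s₂ ×ˢ Ω, (f z * φ z - DF z) := setIntegral_congr_fun hSm hptw
    _ = (∫ z in Ioo s₁ s₂ ×ˢ Ω, f z * φ z) - ∫ z in Ioo s₁ s₂ ×ˢ Ω, DF z :=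
        integral_sub hfφS hDFS
    _ = (∫ z in Ioo s₁ s₂ ×ˢ Ω, f z * φ z)
        + (∫ x in Ω, a (s₁, x) * u (s₁, x) * φ (s₁, x))
        - ∫ x in Ω, a (s₂, x) * u (s₂, x) * φ (s₂, x) := by
      rw [htrans, hdiv]
      ring


lemma integrableOn_mul_of_bound {n : ℕ} {g h : ℝ × (Fin n → ℝ) → ℝ}
    {S T : Set (ℝ × (Fin n → ℝ))} {M : ℝ}
    (hSm : MeasurableSet S) (hTm : MeasurableSet T)
    (hg : IntegrableOn g T)
    (haesm : AEStronglyMeasurable (fun z => g z * h z) (volume.restrict S))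
    (h0 : ∀ z ∈ S, z ∉ T → g z * h z = 0) (hM : ∀ z, |h z| ≤ M) :
    IntegrableOn (fun z => g z * h z) S := by
  have hM0 : 0 ≤ M := (abs_nonneg _).trans (hM (0, 0))
  rw [← integrable_indicator_iff hSm]
  refine Integrable.mono' (g := fun z => M * ‖T.indicator g z‖)
    (((integrable_indicator_iff hTm).2 hg).norm.const_mul M)
    ((aestronglyMeasurable_indicator_iff hSm).2 haesm)
    (Eventually.of_forall fun z => ?_)
  by_cases hzS : z ∈ S
  · rw [indicator_of_mem hzS]
    by_cases hzT : z ∈ T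
    · rw [indicator_of_mem hzT, Real.norm_eq_abs, Real.norm_eq_abs, abs_mul]
      nlinarith [hM z, abs_nonneg (g z), abs_nonneg (h z)]
    · simp [h0 z hzS hzT, indicator_of_notMem hzT]
  · rw [indicator_of_notMem hzS, norm_zero]
    exact mul_nonneg hM0 (norm_nonneg _)

end S15

open S15


/-- Gluing lemma: if `u⁺` and `u⁻` solve `X u + b u = f` (with
`X = a ∂_t + Σ_j a_j ∂_{x_j}` and `t = 0` characteristic, i.e. `a(0,·) = 0`) smoothly on
`Ω_δ⁺ = (0,δ) × Ω` and `Ω_δ⁻ = (-δ,0) × Ω` respectively, are locally integrable up to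
`t = 0`, and satisfy the no-boundary-mass condition
`∫_Ω a u^± φ → 0` as `t → 0^±` for every test function `φ`, then the glued function is a
distributional solution on `Ω_δ = (-δ,δ) × Ω`: for every test function `φ` supported in
`Ω_δ`, `∫_{Ω_δ⁺} u⁺ ψ + ∫_{Ω_δ⁻} u⁻ ψ = ∫_{Ω_δ} f φ`, where
`ψ = -∂_t(aφ) - Σ_j ∂_{x_j}(a_j φ) + bφ` is the formal adjoint applied to `φ`. -/
theorem stmt_15 (n : ℕ) (Ω : Set (Fin n → ℝ)) (hΩ : IsOpen Ω) (δ : ℝ) (hδ : 0 < δ)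
    (a b f : ℝ × (Fin n → ℝ) → ℝ) (aj : Fin n → ℝ × (Fin n → ℝ) → ℝ)
    (ha : ContDiffOn ℝ (⊤ : ℕ∞) a (Ioo (-δ) δ ×ˢ Ω))
    (haj : ∀ i : Fin n, ContDiffOn ℝ (⊤ : ℕ∞) (aj i) (Ioo (-δ) δ ×ˢ Ω))
    (hb : ContDiffOn ℝ (⊤ : ℕ∞) b (Ioo (-δ) δ ×ˢ Ω))
    (hf : ContDiffOn ℝ (⊤ : ℕ∞) f (Ioo (-δ) δ ×ˢ Ω))
    (ha0 : ∀ x ∈ Ω, a (0, x) = 0)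
    (uplus uminus : ℝ × (Fin n → ℝ) → ℝ)
    (hup : ContDiffOn ℝ (⊤ : ℕ∞) uplus (Ioo 0 δ ×ˢ Ω))
    (hum : ContDiffOn ℝ (⊤ : ℕ∞) uminus (Ioo (-δ) 0 ×ˢ Ω))
    (heqp : ∀ z ∈ Ioo (0 : ℝ) δ ×ˢ Ω,
      a z * fderiv ℝ uplus z (1, 0)
        + (∑ i : Fin n, aj i z * fderiv ℝ uplus z (0, Pi.single i 1))
        + b z * uplus z = f z)
    (heqm : ∀ z ∈ Ioo (-δ) (0 : ℝ) ×ˢ Ω,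
      a z * fderiv ℝ uminus z (1, 0)
        + (∑ i : Fin n, aj i z * fderiv ℝ uminus z (0, Pi.single i 1))
        + b z * uminus z = f z)
    (hintp : ∀ K : Set (Fin n → ℝ), IsCompact K → K ⊆ Ω →
      IntegrableOn uplus (Ioo 0 δ ×ˢ K))
    (hintm : ∀ K : Set (Fin n → ℝ), IsCompact K → K ⊆ Ω →
      IntegrableOn uminus (Ioo (-δ) 0 ×ˢ K))
    (hbdp : ∀ φ : ℝ × (Fin n → ℝ) → ℝ, ContDiff ℝ (⊤ : ℕ∞) φ → HasCompactSupport φ →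
      tsupport φ ⊆ Ioo (-δ) δ ×ˢ Ω →
      Tendsto (fun t : ℝ => ∫ x in Ω, a (t, x) * uplus (t, x) * φ (t, x))
        (nhdsWithin 0 (Ioi 0)) (nhds 0))
    (hbdm : ∀ φ : ℝ × (Fin n → ℝ) → ℝ, ContDiff ℝ (⊤ : ℕ∞) φ → HasCompactSupport φ →
      tsupport φ ⊆ Ioo (-δ) δ ×ˢ Ω →
      Tendsto (fun t : ℝ => ∫ x in Ω, a (t, x) * uminus (t, x) * φ (t, x))
        (nhdsWithin 0 (Iio 0)) (nhds 0)) :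
    ∀ φ : ℝ × (Fin n → ℝ) → ℝ, ContDiff ℝ (⊤ : ℕ∞) φ → HasCompactSupport φ →
      tsupport φ ⊆ Ioo (-δ) δ ×ˢ Ω →
      (∫ z in Ioo (0 : ℝ) δ ×ˢ Ω, uplus z *
          (-(fderiv ℝ (fun w => a w * φ w) z (1, 0))
            - (∑ i : Fin n, fderiv ℝ (fun w => aj i w * φ w) z (0, Pi.single i 1))
            + b z * φ z))
      + (∫ z in Ioo (-δ) (0 : ℝ) ×ˢ Ω, uminus z *
          (-(fderiv ℝ (fun w => a w * φ w) z (1, 0))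
            - (∑ i : Fin n, fderiv ℝ (fun w => aj i w * φ w) z (0, Pi.single i 1))
            + b z * φ z))
      = ∫ z in Ioo (-δ) δ ×ˢ Ω, f z * φ z := by
  intro φ hφ hφK hφs
  classical
  by_cases hKe : tsupport φ = ∅
  · have hφ0 : ∀ z, φ z = 0 := fun z =>
      image_eq_zero_of_notMem_tsupport (by rw [hKe]; exact notMem_empty z)
    have haφ : (fun w => a w * φ w) = (fun _ => (0:ℝ)) :=
      funext fun w => by rw [hφ0 w, mul_zero]
    have hajφ : ∀ i : Fin n, (fun w => aj i w * φ w) = (fun _ => (0:ℝ)) :=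
      fun i => funext fun w => by rw [hφ0 w, mul_zero]
    simp [haφ, hajφ, hφ0]
  · have hKne : (tsupport φ).Nonempty := nonempty_iff_ne_empty.2 hKe
    set K := tsupport φ with hKdef
    have hKcomp : IsCompact K := hφK
    -- time bound
    obtain ⟨z₀, hz₀K, hz₀max⟩ := hKcomp.exists_isMaxOn hKne (continuous_fst.abs.continuousOn)
    set m : ℝ := |z₀.1| with hm
    have hmδ : m < δ := abs_lt.mpr ⟨(hφs hz₀K).1.1, (hφs hz₀K).1.2⟩
    set t₀ : ℝ := (m + δ) / 2 with ht₀
    have hmt₀ : m < t₀ := by rw [ht₀]; linarith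
    have ht₀δ : t₀ < δ := by rw [ht₀]; linarith
    have ht₀pos : 0 < t₀ := lt_of_le_of_lt (abs_nonneg _) hmt₀
    have hKt : ∀ z ∈ K, |z.1| ≤ m := fun z hz => isMaxOn_iff.mp hz₀max z hz
    -- space bound
    obtain ⟨w₀, _, hw₀max⟩ := hKcomp.exists_isMaxOn hKne (continuous_snd.norm.continuousOn)
    set R : ℝ := ‖w₀.2‖ + 1 with hRdef
    have hR0 : 0 ≤ R := by positivity
    have hR : ∀ z ∈ K, ‖z.2‖ < R := fun z hz => lt_of_le_of_lt (isMaxOn_iff.mp hw₀max z hz) (by rw [hRdef]; linarith)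
    -- compact x-projection
    set Kx : Set (Fin n → ℝ) := Prod.snd '' K with hKx
    have hKxcomp : IsCompact Kx := hKcomp.image continuous_snd
    have hKxΩ : Kx ⊆ Ω := by
      rintro x ⟨z, hzK, rfl⟩
      exact (hφs hzK).2
    -- the adjoint factor
    set Ψ : ℝ × (Fin n → ℝ) → ℝ := fun z =>
      -(fderiv ℝ (fun w => a w * φ w) z (1, 0))
        - (∑ i : Fin n, fderiv ℝ (fun w => aj i w * φ w) z (0, Pi.single i 1))
        + b z * φ z with hΨdef
    have hopenδ : IsOpen (Ioo (-δ) δ ×ˢ Ω) := isOpen_Ioo.prod hΩ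
    have hΨU : ContinuousOn Ψ (Ioo (-δ) δ ×ˢ Ω) := by
      have h1 : ContinuousOn (fun z => fderiv ℝ (fun w => a w * φ w) z (1, 0))
          (Ioo (-δ) δ ×ˢ Ω) :=
        (ContinuousLinearMap.apply ℝ ℝ ((1:ℝ), (0 : Fin n → ℝ))).continuous.comp_continuousOn
          ((ha.mul hφ.contDiffOn).continuousOn_fderiv_of_isOpen hopenδ (mod_cast le_top))
      have h2 : ContinuousOn (fun z => ∑ i : Fin n,
          fderiv ℝ (fun w => aj i w * φ w) z (0, Pi.single i 1)) (Ioo (-δ) δ ×ˢ Ω) := by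
        apply continuousOn_finset_sum
        intro i _
        exact (ContinuousLinearMap.apply ℝ ℝ ((0:ℝ), Pi.single i (1:ℝ))).continuous.comp_continuousOn
          (((haj i).mul hφ.contDiffOn).continuousOn_fderiv_of_isOpen hopenδ (mod_cast le_top))
      exact ((h1.neg.sub h2).add (hb.continuousOn.mul hφ.continuous.continuousOn))
    have hψ0 : ∀ z ∉ K, Ψ z = 0 := by
      intro z hz
      have hev : ∀ g : ℝ × (Fin n → ℝ) → ℝ,
          (fun w => g w * φ w) =ᶠ[nhds z] (fun _ => (0:ℝ)) := by
        intro g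
        filter_upwards [(isClosed_tsupport φ).isOpen_compl.mem_nhds hz] with w hw
        rw [image_eq_zero_of_notMem_tsupport hw, mul_zero]
      have h1 : fderiv ℝ (fun w => a w * φ w) z = 0 := by
        rw [(hev a).fderiv_eq]; exact fderiv_const_apply 0
      have h2 : ∀ i : Fin n, fderiv ℝ (fun w => aj i w * φ w) z = 0 := fun i => by
        rw [(hev (aj i)).fderiv_eq]; exact fderiv_const_apply 0
      rw [hΨdef]
      dsimp only
      rw [image_eq_zero_of_notMem_tsupport hz, h1]
      simp [h2]
    -- global bound for Ψ
    obtain ⟨M0, hM0⟩ := hKcomp.exists_bound_of_continuousOn (hΨU.mono hφs)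
    set M : ℝ := max M0 0 with hMdef
    have hM : ∀ z, |Ψ z| ≤ M := by
      intro z
      by_cases hz : z ∈ K
      · exact le_trans (hM0 z hz) (le_max_left _ _)
      · rw [hψ0 z hz]; simp [hMdef]
    -- measurability
    have hSpm : MeasurableSet (Ioo (0:ℝ) δ ×ˢ Ω) := measurableSet_Ioo.prod hΩ.measurableSet
    have hSmm : MeasurableSet (Ioo (-δ) (0:ℝ) ×ˢ Ω) := measurableSet_Ioo.prod hΩ.measurableSet
    have hsubp : (Ioo (0:ℝ) δ ×ˢ Ω : Set _) ⊆ Ioo (-δ) δ ×ˢ Ω :=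
      prod_mono (Ioo_subset_Ioo (by linarith) le_rfl) le_rfl
    have hsubm : (Ioo (-δ) (0:ℝ) ×ˢ Ω : Set _) ⊆ Ioo (-δ) δ ×ˢ Ω :=
      prod_mono (Ioo_subset_Ioo le_rfl (by linarith)) le_rfl
    -- integrability of u * Ψ
    have hTpm : MeasurableSet (Ioo (0:ℝ) δ ×ˢ Kx) := measurableSet_Ioo.prod hKxcomp.measurableSet
    have hTmm : MeasurableSet (Ioo (-δ) (0:ℝ) ×ˢ Kx) :=
      measurableSet_Ioo.prod hKxcomp.measurableSet
    have hzKx : ∀ z : ℝ × (Fin n → ℝ), z ∈ K → z.2 ∈ Kx := fun z hz => ⟨z, hz, rfl⟩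
    have hIψp : IntegrableOn (fun z => uplus z * Ψ z) (Ioo (0:ℝ) δ ×ˢ Ω) := by
      refine integrableOn_mul_of_bound hSpm hTpm (hintp Kx hKxcomp hKxΩ)
        ((hup.continuousOn.aestronglyMeasurable hSpm).mul
          ((hΨU.mono hsubp).aestronglyMeasurable hSpm)) ?_ hM
      intro z hzS hzT
      have hzK : z ∉ K := fun hk => hzT ⟨hzS.1, hzKx z hk⟩
      rw [hψ0 z hzK, mul_zero]
    have hIψm : IntegrableOn (fun z => uminus z * Ψ z) (Ioo (-δ) (0:ℝ) ×ˢ Ω) := by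
      refine integrableOn_mul_of_bound hSmm hTmm (hintm Kx hKxcomp hKxΩ)
        ((hum.continuousOn.aestronglyMeasurable hSmm).mul
          ((hΨU.mono hsubm).aestronglyMeasurable hSmm)) ?_ hM
      intro z hzS hzT
      have hzK : z ∉ K := fun hk => hzT ⟨hzS.1, hzKx z hk⟩
      rw [hψ0 z hzK, mul_zero]
    -- integrability of f * φ
    have hfφK : ContinuousOn (fun z => f z * φ z) K := by
      intro z hz
      exact ((hf.contDiffAt (hopenδ.mem_nhds (hφs hz))).continuousAt.mul
        hφ.continuous.continuousAt).continuousWithinAt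
    have hfφ0 : ∀ z : ℝ × (Fin n → ℝ), z ∉ K → f z * φ z = 0 := fun z hz => by
      rw [image_eq_zero_of_notMem_tsupport hz, mul_zero]
    have hIfp : IntegrableOn (fun z => f z * φ z) (Ioo (0:ℝ) δ ×ˢ Ω) :=
      integrableOn_of_csupp hKcomp hSpm hfφK (fun z _ hz => hfφ0 z hz)
    have hIfm : IntegrableOn (fun z => f z * φ z) (Ioo (-δ) (0:ℝ) ×ˢ Ω) :=
      integrableOn_of_csupp hKcomp hSmm hfφK (fun z _ hz => hfφ0 z hz)
    -- φ vanishes for |t| ≥ t₀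
    have hφt : ∀ z : ℝ × (Fin n → ℝ), t₀ ≤ |z.1| → z ∉ K := by
      intro z hz hmem
      have := hKt z hmem
      linarith
    -- PLUS side
    have hplus : (∫ z in Ioo (0:ℝ) δ ×ˢ Ω, uplus z * Ψ z)
        = ∫ z in Ioo (0:ℝ) δ ×ˢ Ω, f z * φ z := by
      have htu : Tendsto (fun s => ∫ z in Ioo s δ ×ˢ Ω, uplus z * Ψ z)
          (nhdsWithin 0 (Ioi 0)) (nhds (∫ z in Ioo (0:ℝ) δ ×ˢ Ω, uplus z * Ψ z)) :=
        tendsto_shrink_right hΩ.measurableSet hIψp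
      have htf : Tendsto (fun s => ∫ z in Ioo s δ ×ˢ Ω, f z * φ z)
          (nhdsWithin 0 (Ioi 0)) (nhds (∫ z in Ioo (0:ℝ) δ ×ˢ Ω, f z * φ z)) :=
        tendsto_shrink_right hΩ.measurableSet hIfp
      have htb := hbdp φ hφ hφK hφs
      have hev : ∀ᶠ s in nhdsWithin (0:ℝ) (Ioi 0),
          (∫ z in Ioo s δ ×ˢ Ω, uplus z * Ψ z)
            = (∫ z in Ioo s δ ×ˢ Ω, f z * φ z)
              + ∫ x in Ω, a (s, x) * uplus (s, x) * φ (s, x) := by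
        filter_upwards [Ioo_mem_nhdsGT_of_mem (left_mem_Ico.2 ht₀pos)] with s hs
        have hkey := key hΩ ha haj hb hf
          (Ioo_subset_Ioo (by linarith) le_rfl) hup heqp hφ hφK hφs hR0 hR
          hs.1 hs.2.le ht₀δ
        have hbc : (∫ x in Ω, a (t₀, x) * uplus (t₀, x) * φ (t₀, x)) = 0 := by
          have hz : ∀ x : Fin n → ℝ, φ (t₀, x) = 0 := fun x =>
            image_eq_zero_of_notMem_tsupport (hφt (t₀, x) (by rw [abs_of_pos ht₀pos]))
          simp [hz]
        have hzero_out : ∀ z ∈ (Ioo s δ ×ˢ Ω) \ (Ioo s t₀ ×ˢ Ω), z ∉ K := by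
          rintro z ⟨⟨hz1, hz2⟩, hzn⟩
          have hz1' : t₀ ≤ z.1 := by
            by_contra hlt
            exact hzn ⟨⟨hz1.1, lt_of_not_ge hlt⟩, hz2⟩
          exact hφt z (by rw [abs_of_pos (lt_of_lt_of_le ht₀pos hz1')]; exact hz1')
        have hext1 : (∫ z in Ioo s δ ×ˢ Ω, uplus z * Ψ z)
            = ∫ z in Ioo s t₀ ×ˢ Ω, uplus z * Ψ z := by
          apply setIntegral_eq_of_subset_of_forall_diff_eq_zero
            (measurableSet_Ioo.prod hΩ.measurableSet)
            (prod_mono (Ioo_subset_Ioo le_rfl ht₀δ.le) le_rfl)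
          intro z hz
          rw [hψ0 z (hzero_out z hz), mul_zero]
        have hext2 : (∫ z in Ioo s δ ×ˢ Ω, f z * φ z)
            = ∫ z in Ioo s t₀ ×ˢ Ω, f z * φ z := by
          apply setIntegral_eq_of_subset_of_forall_diff_eq_zero
            (measurableSet_Ioo.prod hΩ.measurableSet)
            (prod_mono (Ioo_subset_Ioo le_rfl ht₀δ.le) le_rfl)
          intro z hz
          exact hfφ0 z (hzero_out z hz)
        rw [hext1, hext2, hkey, hbc, sub_zero]
      have hlim : Tendsto (fun s => ∫ z in Ioo s δ ×ˢ Ω, uplus z * Ψ z)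
          (nhdsWithin 0 (Ioi 0))
          (nhds ((∫ z in Ioo (0:ℝ) δ ×ˢ Ω, f z * φ z) + 0)) :=
        Tendsto.congr' (hev.mono fun s hs => hs.symm) (htf.add htb)
      have := tendsto_nhds_unique htu hlim
      rwa [add_zero] at this
    -- MINUS side
    have hminus : (∫ z in Ioo (-δ) (0:ℝ) ×ˢ Ω, uminus z * Ψ z)
        = ∫ z in Ioo (-δ) (0:ℝ) ×ˢ Ω, f z * φ z := by
      have htu : Tendsto (fun s => ∫ z in Ioo (-δ) s ×ˢ Ω, uminus z * Ψ z)
          (nhdsWithin 0 (Iio 0)) (nhds (∫ z in Ioo (-δ) (0:ℝ) ×ˢ Ω, uminus z * Ψ z)) :=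
        tendsto_shrink_left hΩ.measurableSet hIψm
      have htf : Tendsto (fun s => ∫ z in Ioo (-δ) s ×ˢ Ω, f z * φ z)
          (nhdsWithin 0 (Iio 0)) (nhds (∫ z in Ioo (-δ) (0:ℝ) ×ˢ Ω, f z * φ z)) :=
        tendsto_shrink_left hΩ.measurableSet hIfm
      have htb := hbdm φ hφ hφK hφs
      have hev : ∀ᶠ s in nhdsWithin (0:ℝ) (Iio 0),
          (∫ z in Ioo (-δ) s ×ˢ Ω, uminus z * Ψ z)
            = (∫ z in Ioo (-δ) s ×ˢ Ω, f z * φ z)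
              - ∫ x in Ω, a (s, x) * uminus (s, x) * φ (s, x) := by
        filter_upwards [Ioo_mem_nhdsLT_of_mem (right_mem_Ioc.2 (neg_lt_zero.2 ht₀pos))]
          with s hs
        have hkey := key hΩ ha haj hb hf
          (Ioo_subset_Ioo le_rfl (by linarith)) hum heqm hφ hφK hφs hR0 hR
          (by linarith : -δ < -t₀) hs.1.le hs.2
        have hbc : (∫ x in Ω, a (-t₀, x) * uminus (-t₀, x) * φ (-t₀, x)) = 0 := by
          have hz : ∀ x : Fin n → ℝ, φ (-t₀, x) = 0 := fun x =>
            image_eq_zero_of_notMem_tsupport (hφt (-t₀, x)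
              (by rw [abs_neg, abs_of_pos ht₀pos]))
          simp [hz]
        have hzero_out : ∀ z ∈ (Ioo (-δ) s ×ˢ Ω) \ (Ioo (-t₀) s ×ˢ Ω), z ∉ K := by
          rintro z ⟨⟨hz1, hz2⟩, hzn⟩
          have hz1' : z.1 ≤ -t₀ := by
            by_contra hlt
            exact hzn ⟨⟨lt_of_not_ge hlt, hz1.2⟩, hz2⟩
          refine hφt z ?_
          rw [abs_of_neg (by linarith : z.1 < 0)]
          linarith
        have hext1 : (∫ z in Ioo (-δ) s ×ˢ Ω, uminus z * Ψ z)
            = ∫ z in Ioo (-t₀) s ×ˢ Ω, uminus z * Ψ z := by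
          apply setIntegral_eq_of_subset_of_forall_diff_eq_zero
            (measurableSet_Ioo.prod hΩ.measurableSet)
            (prod_mono (Ioo_subset_Ioo (by linarith) le_rfl) le_rfl)
          intro z hz
          rw [hψ0 z (hzero_out z hz), mul_zero]
        have hext2 : (∫ z in Ioo (-δ) s ×ˢ Ω, f z * φ z)
            = ∫ z in Ioo (-t₀) s ×ˢ Ω, f z * φ z := by
          apply setIntegral_eq_of_subset_of_forall_diff_eq_zero
            (measurableSet_Ioo.prod hΩ.measurableSet)
            (prod_mono (Ioo_subset_Ioo (by linarith) le_rfl) le_rfl)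
          intro z hz
          exact hfφ0 z (hzero_out z hz)
        rw [hext1, hext2, hkey, hbc]
        ring
      have hlim : Tendsto (fun s => ∫ z in Ioo (-δ) s ×ˢ Ω, uminus z * Ψ z)
          (nhdsWithin 0 (Iio 0))
          (nhds ((∫ z in Ioo (-δ) (0:ℝ) ×ˢ Ω, f z * φ z) - 0)) :=
        Tendsto.congr' (hev.mono fun s hs => hs.symm) (htf.sub htb)
      have := tendsto_nhds_unique htu hlim
      rwa [sub_zero] at this
    -- combine
    have hsplit : (∫ z in Ioo (-δ) δ ×ˢ Ω, f z * φ z)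
        = (∫ z in Ioo (-δ) (0:ℝ) ×ˢ Ω, f z * φ z)
          + ∫ z in Ioo (0:ℝ) δ ×ˢ Ω, f z * φ z := by
      have hplane : volume {z : ℝ × (Fin n → ℝ) | z.1 = 0} = 0 := by
        have hset : {z : ℝ × (Fin n → ℝ) | z.1 = 0}
            = ({(0:ℝ)} : Set ℝ) ×ˢ (univ : Set (Fin n → ℝ)) := by
          ext z
          simp only [mem_setOf_eq, mem_prod, mem_singleton_iff, mem_univ, and_true]
        rw [hset, Measure.volume_eq_prod, Measure.prod_prod, Real.volume_singleton, zero_mul]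
      have h1 : (∫ z in Ioo (-δ) δ ×ˢ Ω, f z * φ z)
          = ∫ z in (Ioo (-δ) (0:ℝ) ×ˢ Ω) ∪ (Ioo (0:ℝ) δ ×ˢ Ω), f z * φ z := by
        apply setIntegral_eq_of_subset_of_ae_diff_eq_zero
          (measurableSet_Ioo.prod hΩ.measurableSet).nullMeasurableSet
        · exact union_subset hsubm hsubp
        · have hae : ∀ᵐ z : ℝ × (Fin n → ℝ),
              z ∉ {z : ℝ × (Fin n → ℝ) | z.1 = 0} := by
            rw [← measure_eq_zero_iff_ae_notMem]
            exact hplane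
          filter_upwards [hae] with z hz0 hzmem
          exfalso
          rcases hzmem with ⟨⟨hz1, hz2⟩, hzn⟩
          rcases lt_trichotomy z.1 0 with h | h | h
          · exact hzn (Or.inl ⟨⟨hz1.1, h⟩, hz2⟩)
          · exact hz0 h
          · exact hzn (Or.inr ⟨⟨h, hz1.2⟩, hz2⟩)
      rw [h1]
      apply setIntegral_union
      · rw [Set.disjoint_left]
        rintro z ⟨hz1, _⟩ ⟨hz2, _⟩
        exact absurd hz2.1 (not_lt.2 hz1.2.le)
      · exact hSpm
      · exact hIfm
      · exact hIfp
    show (∫ z in Ioo (0:ℝ) δ ×ˢ Ω, uplus z * Ψ z)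
        + (∫ z in Ioo (-δ) (0:ℝ) ×ˢ Ω, uminus z * Ψ z)
        = ∫ z in Ioo (-δ) δ ×ˢ Ω, f z * φ z
    rw [hplus, hminus, hsplit]
    ring
end

section
/- Let a : ℝ → ℝ be continuously differentiable and let p be a natural number. Then, as t → 1 from the left, ∫_0^t a(s)·(ln((1−s)/(1−t)))^p·(1/(1−s)) ds = (a(1)/(p+1))·(ln(1/(1−t)))^{p+1}·(1 + o(1)). Equivalently, the ratio ( ∫_0^t a(s)·(ln((1−s)/(1−t)))^p/(1−s) ds ) / (ln(1/(1−t)))^{p+1} tends to a(1)/(p+1) as t → 1⁻, and the difference ∫_0^t a(s)·(ln((1−s)/(1−t)))^p/(1−s) ds − (a(1)/(p+1))·(ln(1/(1−t)))^{p+1} is o((ln(1/(1−t)))^{p+1}) as t → 1⁻. -/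
open Filter Asymptotics intervalIntegral Set

lemma my_intg (f : ℝ → ℝ) (hf : Continuous f) (p : ℕ) (c : ℝ) {u v : ℝ}
    (hu : u < 1) (hv : v < 1) :
    IntervalIntegrable (fun s => f s * (Real.log (1-s) - c)^p * (1/(1-s))) MeasureTheory.volume u v := by
  apply ContinuousOn.intervalIntegrable
  intro x hx
  have hx1 : (1 : ℝ) - x ≠ 0 := by
    rcases Set.mem_uIcc.mp hx with ⟨_, h⟩ | ⟨_, h⟩ <;> intro h0 <;> nlinarith [sub_eq_zero.mp h0]
  apply ContinuousAt.continuousWithinAt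
  have hlog : ContinuousAt (fun s : ℝ => Real.log (1 - s)) x :=
    (Real.continuousAt_log hx1).comp (by fun_prop)
  have hdiv : ContinuousAt (fun s : ℝ => 1/(1-s)) x :=
    ContinuousAt.div (by fun_prop) (by fun_prop) hx1
  exact (hf.continuousAt.mul ((hlog.sub continuousAt_const).pow _)).mul hdiv

-- exact antiderivative
lemma my_anti (p : ℕ) {c t : ℝ} (hct : c ≤ t) (ht : t < 1) :
    ∫ s in c..t, (Real.log (1-s) - Real.log (1-t))^p * (1/(1-s))
      = (Real.log (1-c) - Real.log (1-t))^(p+1) / (p+1) := by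
  have key : ∫ s in c..t, (Real.log (1-s) - Real.log (1-t))^p * (1/(1-s))
      = (-((Real.log (1-t) - Real.log (1-t))^(p+1)) / (p+1))
        - (-((Real.log (1-c) - Real.log (1-t))^(p+1)) / (p+1)) := by
    apply intervalIntegral.integral_eq_sub_of_hasDerivAt (f := fun u => -((Real.log (1-u) - Real.log (1-t))^(p+1)) / ((p:ℝ)+1))
    · intro x hx
      have hx1 : (0:ℝ) < 1 - x := by
        rw [Set.uIcc_of_le hct] at hx
        have := hx.2; linarith
      have hlog : HasDerivAt (fun s : ℝ => Real.log (1 - s)) (-(1/(1-x))) x := by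
        have h1 : HasDerivAt (fun s : ℝ => 1 - s) (-1) x := by
          simpa using (hasDerivAt_id x).const_sub 1
        have := (Real.hasDerivAt_log hx1.ne').comp x h1
        simpa [one_div, Function.comp_def] using this
      have h2 : HasDerivAt (fun s : ℝ => Real.log (1 - s) - Real.log (1 - t))
          (-(1/(1-x))) x := hlog.sub_const _
      have h3 := ((h2.fun_pow (p+1)).fun_neg).div_const ((p:ℝ)+1)
      refine h3.congr_deriv ?_
      have hp : ((p:ℝ)+1) ≠ 0 := by positivity
      push_cast
      field_simp
    · have := my_intg (fun _ => 1) continuous_const p (Real.log (1-t)) (lt_of_le_of_lt hct ht) ht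
      simpa using this
  rw [key]
  have : (Real.log (1-t) - Real.log (1-t)) = 0 := by ring
  rw [this]
  rw [zero_pow (Nat.succ_ne_zero p)]
  ring

lemma my_L_atTop : Tendsto (fun t : ℝ => -Real.log (1-t)) (nhdsWithin 1 (Set.Iio 1)) atTop := by
  have h1 : Tendsto (fun t : ℝ => 1 - t) (nhdsWithin 1 (Set.Iio 1)) (nhdsWithin 0 (Set.Ioi 0)) := by
    apply tendsto_nhdsWithin_of_tendsto_nhds_of_eventually_within
    · have : Continuous (fun t : ℝ => 1 - t) := by fun_prop
      simpa using (this.tendsto 1).mono_left nhdsWithin_le_nhds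
    · filter_upwards [self_mem_nhdsWithin] with t ht
      simp only [Set.mem_Iio] at ht
      simp [Set.mem_Ioi]; linarith
  have h2 := Real.tendsto_log_nhdsGT_zero.comp h1
  exact tendsto_neg_atBot_atTop.comp h2

lemma my_key (a : ℝ → ℝ) (hc : Continuous a) (p : ℕ) :
    (fun t => ∫ s in (0:ℝ)..t, (a s - a 1) * (Real.log (1-s) - Real.log (1-t))^p * (1/(1-s)))
      =o[nhdsWithin 1 (Set.Iio 1)] fun t => (-Real.log (1-t))^(p+1) := by
  have hb : Continuous (fun s => a s - a 1) := hc.sub continuous_const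
  obtain ⟨M, hM⟩ := (isCompact_Icc (a := (0:ℝ)) (b := 1)).exists_bound_of_continuousOn hb.continuousOn
  have hM0 : 0 ≤ M := le_trans (norm_nonneg _) (hM 1 (by norm_num))
  rw [isLittleO_iff]
  intro ε hε
  obtain ⟨η, hη0, hηa⟩ := Metric.continuousAt_iff.mp hc.continuousAt (ε/2) (by positivity)
  set c : ℝ := max (1 - η/2) (1/2) with hcdef
  have hc0 : (0:ℝ) ≤ c := le_trans (by norm_num) (le_max_right _ _)
  have hc1 : c < 1 := max_lt (by linarith) (by norm_num)
  have hclose : ∀ s, c ≤ s → s ≤ 1 → |a s - a 1| ≤ ε/2 := by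
    intro s h1 h2
    have hd : dist s 1 < η := by
      rw [Real.dist_eq, abs_of_nonpos (by linarith)]
      have : 1 - η/2 ≤ c := le_max_left _ _
      linarith
    have := hηa hd
    rw [Real.dist_eq] at this
    linarith
  set Lc : ℝ := -Real.log (1-c) with hLcdef
  have hLc0 : 0 ≤ Lc := by
    rw [hLcdef, neg_nonneg]
    exact Real.log_nonpos (by linarith) (by linarith)
  have hev1 : Set.Ioo c 1 ∈ nhdsWithin 1 (Set.Iio 1) :=
    Ioo_mem_nhdsLT_of_mem ⟨hc1, le_refl 1⟩
  have hev2 := my_L_atTop.eventually_ge_atTop (2*M*Lc/ε)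
  filter_upwards [hev1, hev2] with t ht hK
  obtain ⟨hct, ht1⟩ := ht
  have ht0 : (0:ℝ) < t := lt_of_le_of_lt hc0 hct
  set Lt : ℝ := -Real.log (1-t) with hLtdef
  have hLt0 : 0 ≤ Lt := by
    rw [hLtdef, neg_nonneg]
    exact Real.log_nonpos (by linarith) (by linarith)
  -- integrabilities
  have ib_0t := my_intg _ hb p (Real.log (1-t)) (by norm_num : (0:ℝ) < 1) ht1 (u := 0) (v := t)
  have ib_0c := my_intg _ hb p (Real.log (1-t)) (by norm_num : (0:ℝ) < 1) hc1 (u := 0) (v := c)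
  have ib_ct := my_intg _ hb p (Real.log (1-t)) hc1 ht1 (u := c) (v := t)
  -- comparison integrands
  have ig1 : IntervalIntegrable (fun s => (M * Lt^p) * (Real.log (1-s) - Real.log (1-t))^0 * (1/(1-s)))
      MeasureTheory.volume 0 c :=
    my_intg (fun _ => M * Lt^p) continuous_const 0 (Real.log (1-t)) (by norm_num) hc1
  have ig2 : IntervalIntegrable (fun s => (ε/2) * (Real.log (1-s) - Real.log (1-t))^p * (1/(1-s)))
      MeasureTheory.volume c t :=
    my_intg (fun _ => ε/2) continuous_const p (Real.log (1-t)) hc1 ht1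
  -- pointwise abs formula helper
  have habs : ∀ s, 0 ≤ s → s ≤ t →
      |(a s - a 1) * (Real.log (1-s) - Real.log (1-t))^p * (1/(1-s))|
        = |a s - a 1| * (Real.log (1-s) - Real.log (1-t))^p * (1/(1-s)) := by
    intro s hs0 hst
    have h1s : (0:ℝ) < 1 - s := by linarith
    have hge : Real.log (1-t) ≤ Real.log (1-s) := Real.log_le_log (by linarith) (by linarith)
    have h2 : (0:ℝ) ≤ (Real.log (1-s) - Real.log (1-t))^p := pow_nonneg (by linarith) p
    have h3 : (0:ℝ) ≤ 1/(1-s) := by positivity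
    rw [abs_mul, abs_mul, abs_of_nonneg h2, abs_of_nonneg h3]
  -- step 1: abs into integral
  have step1 : |∫ s in (0:ℝ)..t, (a s - a 1) * (Real.log (1-s) - Real.log (1-t))^p * (1/(1-s))|
      ≤ ∫ s in (0:ℝ)..t, |(a s - a 1) * (Real.log (1-s) - Real.log (1-t))^p * (1/(1-s))| :=
    intervalIntegral.abs_integral_le_integral_abs ht0.le
  -- step 2: split
  have step2 : (∫ s in (0:ℝ)..t, |(a s - a 1) * (Real.log (1-s) - Real.log (1-t))^p * (1/(1-s))|)
      = (∫ s in (0:ℝ)..c, |(a s - a 1) * (Real.log (1-s) - Real.log (1-t))^p * (1/(1-s))|)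
        + ∫ s in c..t, |(a s - a 1) * (Real.log (1-s) - Real.log (1-t))^p * (1/(1-s))| :=
    (intervalIntegral.integral_add_adjacent_intervals ib_0c.abs ib_ct.abs).symm
  -- step 3: bound on [0,c]
  have step3 : (∫ s in (0:ℝ)..c, |(a s - a 1) * (Real.log (1-s) - Real.log (1-t))^p * (1/(1-s))|)
      ≤ ∫ s in (0:ℝ)..c, (M * Lt^p) * (Real.log (1-s) - Real.log (1-t))^0 * (1/(1-s)) := by
    apply intervalIntegral.integral_mono_on hc0 ib_0c.abs ig1
    intro s hs
    obtain ⟨hs0, hsc⟩ := hs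
    have hst : s ≤ t := le_of_lt (lt_of_le_of_lt hsc hct)
    rw [habs s hs0 hst]
    have h1s : (0:ℝ) < 1 - s := by linarith
    have hge : Real.log (1-t) ≤ Real.log (1-s) := Real.log_le_log (by linarith) (by linarith)
    have hls : Real.log (1-s) ≤ 0 := Real.log_nonpos (by linarith) (by linarith)
    have hpow : (Real.log (1-s) - Real.log (1-t))^p ≤ Lt^p := by
      apply pow_le_pow_left₀ (by linarith)
      rw [hLtdef]; linarith
    have hMs : |a s - a 1| ≤ M := by
      have := hM s ⟨hs0, by linarith⟩
      rwa [Real.norm_eq_abs] at this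
    rw [pow_zero, mul_one]
    have h3 : (0:ℝ) ≤ 1/(1-s) := by positivity
    apply mul_le_mul_of_nonneg_right _ h3
    exact mul_le_mul hMs hpow (pow_nonneg (by linarith) p) hM0
  -- step 4: evaluate the [0,c] comparison integral
  have step4 : (∫ s in (0:ℝ)..c, (M * Lt^p) * (Real.log (1-s) - Real.log (1-t))^0 * (1/(1-s)))
      = (M * Lt^p) * Lc := by
    have : ∀ s : ℝ, (M * Lt^p) * (Real.log (1-s) - Real.log (1-t))^0 * (1/(1-s))
        = (M * Lt^p) * ((Real.log (1-s) - Real.log (1-c))^0 * (1/(1-s))) := by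
      intro s; rw [pow_zero, pow_zero]; ring
    simp_rw [this]
    rw [intervalIntegral.integral_const_mul, my_anti 0 hc0 hc1]
    simp [hLcdef]
  -- step 5: bound on [c,t]
  have step5 : (∫ s in c..t, |(a s - a 1) * (Real.log (1-s) - Real.log (1-t))^p * (1/(1-s))|)
      ≤ ∫ s in c..t, (ε/2) * (Real.log (1-s) - Real.log (1-t))^p * (1/(1-s)) := by
    apply intervalIntegral.integral_mono_on hct.le ib_ct.abs ig2
    intro s hs
    obtain ⟨hsc, hst⟩ := hs
    have hs0 : (0:ℝ) ≤ s := le_trans hc0 hsc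
    rw [habs s hs0 hst]
    have h1s : (0:ℝ) < 1 - s := by linarith
    have hge : Real.log (1-t) ≤ Real.log (1-s) := Real.log_le_log (by linarith) (by linarith)
    have h3 : (0:ℝ) ≤ (Real.log (1-s) - Real.log (1-t))^p * (1/(1-s)) := by
      apply mul_nonneg (pow_nonneg (by linarith) p) (by positivity)
    rw [mul_assoc, mul_assoc]
    exact mul_le_mul_of_nonneg_right (hclose s hsc (by linarith)) h3
  -- step 6: evaluate the [c,t] comparison integral and bound it
  have step6 : (∫ s in c..t, (ε/2) * (Real.log (1-s) - Real.log (1-t))^p * (1/(1-s)))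
      ≤ (ε/2) * Lt^(p+1) := by
    have : ∀ s : ℝ, (ε/2) * (Real.log (1-s) - Real.log (1-t))^p * (1/(1-s))
        = (ε/2) * ((Real.log (1-s) - Real.log (1-t))^p * (1/(1-s))) := fun s => by ring
    simp_rw [this]
    rw [intervalIntegral.integral_const_mul, my_anti p hct.le ht1]
    have hlc : Real.log (1-c) ≤ 0 := Real.log_nonpos (by linarith) (by linarith)
    have hge : Real.log (1-t) ≤ Real.log (1-c) := Real.log_le_log (by linarith) (by linarith)
    have hpow : (Real.log (1-c) - Real.log (1-t))^(p+1) ≤ Lt^(p+1) := by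
      apply pow_le_pow_left₀ (by linarith)
      rw [hLtdef]; linarith
    have hdiv : (Real.log (1-c) - Real.log (1-t))^(p+1) / ((p:ℝ)+1) ≤ Lt^(p+1) := by
      have h1 : (Real.log (1-c) - Real.log (1-t))^(p+1) / ((p:ℝ)+1)
          ≤ (Real.log (1-c) - Real.log (1-t))^(p+1) := by
        apply div_le_self (pow_nonneg (by linarith) (p+1)) (by push_cast; linarith [Nat.cast_nonneg (α := ℝ) p])
      linarith
    exact mul_le_mul_of_nonneg_left hdiv (le_of_lt (by linarith : (0:ℝ) < ε/2))
  -- step 7: the far bound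
  have step7 : (M * Lt^p) * Lc ≤ (ε/2) * Lt^(p+1) := by
    have h1 : 2*M*Lc ≤ ε * Lt := by
      rw [div_le_iff₀ hε] at hK
      nlinarith
    have h2 : (0:ℝ) ≤ Lt^p := pow_nonneg hLt0 p
    calc (M * Lt^p) * Lc = (2*M*Lc) * Lt^p / 2 := by ring
      _ ≤ (ε * Lt) * Lt^p / 2 := by gcongr
      _ = (ε/2) * Lt^(p+1) := by rw [pow_succ]; ring
  -- combine
  rw [Real.norm_eq_abs, Real.norm_eq_abs, abs_of_nonneg (pow_nonneg hLt0 (p+1))]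
  calc |∫ s in (0:ℝ)..t, (a s - a 1) * (Real.log (1-s) - Real.log (1-t))^p * (1/(1-s))|
      ≤ (∫ s in (0:ℝ)..c, |(a s - a 1) * (Real.log (1-s) - Real.log (1-t))^p * (1/(1-s))|)
        + ∫ s in c..t, |(a s - a 1) * (Real.log (1-s) - Real.log (1-t))^p * (1/(1-s))| := by
        rw [← step2]; exact step1
    _ ≤ (M * Lt^p) * Lc + (ε/2) * Lt^(p+1) := by
        linarith [le_trans step3 (le_of_eq step4), le_trans step5 step6]
    _ ≤ (ε/2) * Lt^(p+1) + (ε/2) * Lt^(p+1) := by linarith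
    _ = ε * Lt^(p+1) := by ring

/-- Asymptotics of the logarithmic integrals: for `a ∈ C¹(ℝ)` and `p ∈ ℕ`, as `t → 1⁻`,
`∫_0^t a(s) (ln((1-s)/(1-t)))^p/(1-s) ds = (a(1)/(p+1)) (ln(1/(1-t)))^{p+1} (1+o(1))`:
the ratio tends to `a(1)/(p+1)` and the difference is `o((ln(1/(1-t)))^{p+1})`. -/
theorem stmt_16 (a : ℝ → ℝ) (ha : ContDiff ℝ 1 a) (p : ℕ) :
    Tendsto (fun t : ℝ =>
        (∫ s in (0 : ℝ)..t, a s * Real.log ((1 - s) / (1 - t)) ^ p * (1 / (1 - s)))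
          / Real.log (1 / (1 - t)) ^ (p + 1))
      (nhdsWithin 1 (Set.Iio 1)) (nhds (a 1 / ((p : ℝ) + 1))) ∧
    (fun t : ℝ =>
        (∫ s in (0 : ℝ)..t, a s * Real.log ((1 - s) / (1 - t)) ^ p * (1 / (1 - s)))
          - a 1 / ((p : ℝ) + 1) * Real.log (1 / (1 - t)) ^ (p + 1))
      =o[nhdsWithin 1 (Set.Iio 1)] fun t : ℝ => Real.log (1 / (1 - t)) ^ (p + 1) := by
  have hcont : Continuous a := ha.continuous
  have hfun : (fun t : ℝ => Real.log (1/(1-t))^(p+1)) = fun t : ℝ => (-Real.log (1-t))^(p+1) := by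
    funext t; rw [one_div, Real.log_inv]
  have heq : ∀ᶠ t in nhdsWithin 1 (Set.Iio 1),
      (∫ s in (0:ℝ)..t, a s * Real.log ((1 - s) / (1 - t)) ^ p * (1 / (1 - s)))
        - a 1 / ((p:ℝ) + 1) * Real.log (1 / (1 - t)) ^ (p + 1)
      = ∫ s in (0:ℝ)..t, (a s - a 1) * (Real.log (1-s) - Real.log (1-t))^p * (1/(1-s)) := by
    filter_upwards [Ioo_mem_nhdsLT_of_mem (⟨zero_lt_one, le_refl 1⟩ : (1:ℝ) ∈ Set.Ioc 0 1)]
      with t ht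
    obtain ⟨ht0, ht1⟩ := ht
    have eA : (∫ s in (0:ℝ)..t, a s * Real.log ((1 - s) / (1 - t)) ^ p * (1 / (1 - s)))
        = ∫ s in (0:ℝ)..t, a s * (Real.log (1-s) - Real.log (1-t))^p * (1/(1-s)) := by
      apply intervalIntegral.integral_congr
      intro s hs
      rw [Set.uIcc_of_le ht0.le] at hs
      obtain ⟨hs0, hst⟩ := hs
      have h1s : (0:ℝ) < 1 - s := by linarith
      have h1t : (0:ℝ) < 1 - t := by linarith
      show a s * Real.log ((1 - s) / (1 - t)) ^ p * (1 / (1 - s))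
        = a s * (Real.log (1-s) - Real.log (1-t))^p * (1/(1-s))
      rw [Real.log_div h1s.ne' h1t.ne']
    have iR := my_intg (fun s => a s - a 1) (hcont.sub continuous_const) p (Real.log (1-t))
      one_pos ht1 (u := 0) (v := t)
    have iC : IntervalIntegrable
        (fun s => a 1 * ((Real.log (1-s) - Real.log (1-t))^p * (1/(1-s))))
        MeasureTheory.volume 0 t := by
      have := my_intg (fun _ => a 1) continuous_const p (Real.log (1-t)) one_pos ht1
        (u := 0) (v := t)
      simpa [mul_assoc] using this
    have eB : ∀ s : ℝ, a s * (Real.log (1-s) - Real.log (1-t))^p * (1/(1-s))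
        = (a s - a 1) * (Real.log (1-s) - Real.log (1-t))^p * (1/(1-s))
          + a 1 * ((Real.log (1-s) - Real.log (1-t))^p * (1/(1-s))) := fun s => by ring
    have eC : (∫ s in (0:ℝ)..t, a s * (Real.log (1-s) - Real.log (1-t))^p * (1/(1-s)))
        = (∫ s in (0:ℝ)..t, (a s - a 1) * (Real.log (1-s) - Real.log (1-t))^p * (1/(1-s)))
          + ∫ s in (0:ℝ)..t, a 1 * ((Real.log (1-s) - Real.log (1-t))^p * (1/(1-s))) := by
      rw [← intervalIntegral.integral_add iR iC]
      apply intervalIntegral.integral_congr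
      intro s _
      exact eB s
    have eD : (∫ s in (0:ℝ)..t, a 1 * ((Real.log (1-s) - Real.log (1-t))^p * (1/(1-s))))
        = a 1 * ((-Real.log (1-t))^(p+1)/((p:ℝ)+1)) := by
      rw [intervalIntegral.integral_const_mul, my_anti p ht0.le ht1]
      norm_num
    rw [eA, eC, eD, one_div, Real.log_inv]
    ring
  have hR := my_key a hcont p
  have hdiff : (fun t : ℝ =>
        (∫ s in (0 : ℝ)..t, a s * Real.log ((1 - s) / (1 - t)) ^ p * (1 / (1 - s)))
          - a 1 / ((p : ℝ) + 1) * Real.log (1 / (1 - t)) ^ (p + 1))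
      =o[nhdsWithin 1 (Set.Iio 1)] fun t : ℝ => Real.log (1 / (1 - t)) ^ (p + 1) := by
    rw [hfun]
    exact hR.congr' (EventuallyEq.symm heq) EventuallyEq.rfl
  refine ⟨?_, hdiff⟩
  have hLne : ∀ᶠ t in nhdsWithin 1 (Set.Iio 1), Real.log (1 / (1 - t)) ^ (p + 1) ≠ 0 := by
    filter_upwards [Ioo_mem_nhdsLT_of_mem (⟨zero_lt_one, le_refl 1⟩ : (1:ℝ) ∈ Set.Ioc 0 1)]
      with t ht
    obtain ⟨ht0, ht1⟩ := ht
    have h1 : (1:ℝ) < 1/(1-t) := by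
      rw [lt_div_iff₀ (by linarith)]; linarith
    have : 0 < Real.log (1/(1-t)) := Real.log_pos h1
    positivity
  have h0 := hdiff.tendsto_div_nhds_zero
  have h1 := h0.add (tendsto_const_nhds (x := a 1 / ((p:ℝ)+1))
    (f := nhdsWithin 1 (Set.Iio (1:ℝ))))
  rw [zero_add] at h1
  apply Tendsto.congr' _ h1
  filter_upwards [hLne] with t hne
  field_simp
  ring
end
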